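/- arXiv:2406.03982 — 9 statements merged into one kernel-verified Lean document; each statement's English description precedes it below -/
import Mathlib

section
/- Let M be a metric space with a distinguished base point 0 whose density character is at most 2^ℵ₀ (i.e., M has a dense subset of cardinality at most the continuum). Then Lip₀(M), the set of all real-valued Lipschitz functions f on M with f(0)=0, is separable in the topology of pointwise convergence: there is a countable set D ⊆ Lip₀(M) such that every f ∈ Lip₀(M) lies in the closure of D in the product topology on M → ℝ. -/
open Metric Set
open scoped NNReal

namespace Lip0Sep

variable {M : Type*} [MetricSpace M]

/-- least (w.r.t. a fixed well-ordering) point within distance `(1/2)^n` of `x`. -/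
noncomputable def acenter (n : ℕ) (x : M) : M :=
  (IsWellFounded.wf (r := WellOrderingRel)).min {y : M | dist x y < (1/2:ℝ)^n}
    ⟨x, by simp [pow_pos]⟩

lemma acenter_dist (n : ℕ) (x : M) : dist x (acenter n x) < (1/2:ℝ)^n := by
  have : acenter n x ∈ {y : M | dist x y < (1/2:ℝ)^n} :=
    (IsWellFounded.wf (r := WellOrderingRel)).min_mem _ _
  exact this

lemma acenter_not_lt {n : ℕ} {x y : M} (h : dist x y < (1/2:ℝ)^n) :
    ¬ WellOrderingRel y (acenter n x) :=
  (IsWellFounded.wf (r := WellOrderingRel)).not_lt_min {y : M | dist x y < (1/2:ℝ)^n} h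

/-- Pieces of a σ-separated small-diameter cover. -/
def Dset (n i : ℕ) (α : M) : Set M :=
  {u | ∃ x : M, acenter n x = α ∧ (∀ z, dist x z < (1/2:ℝ)^i → dist z α < (1/2:ℝ)^n) ∧
    dist x u < (1/2:ℝ)^(i+3)}

lemma pow_half_le {i j : ℕ} (h : i ≤ j) : ((1/2:ℝ))^j ≤ (1/2:ℝ)^i :=
  pow_le_pow_of_le_one (by norm_num) (by norm_num) h

lemma Dset_small {n i : ℕ} {α u : M} (h : u ∈ Dset n i α) : dist u α < (1/2:ℝ)^n := by
  obtain ⟨x, -, hball, hu⟩ := h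
  exact hball u (lt_of_lt_of_le hu (pow_half_le (by omega)))

lemma Dset_sep {n i : ℕ} {α β u v : M} (hne : α ≠ β) (hu : u ∈ Dset n i α)
    (hv : v ∈ Dset n i β) : (1/2:ℝ)^(i+1) ≤ dist u v := by
  obtain ⟨x, hxc, hxb, hxu⟩ := hu
  obtain ⟨x', hxc', hxb', hxv⟩ := hv
  have hxx : (1/2:ℝ)^i ≤ dist x x' := by
    by_contra h
    push_neg at h
    have h1 : dist x' α < (1/2:ℝ)^n := hxb x' h
    have h2 : dist x β < (1/2:ℝ)^n := hxb' x (by rwa [dist_comm])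
    have hα : ¬ WellOrderingRel α β := by
      rw [← hxc'] at *
      exact acenter_not_lt h1
    have hβ : ¬ WellOrderingRel β α := by
      rw [← hxc] at *
      exact acenter_not_lt h2
    rcases trichotomous_of WellOrderingRel α β with h' | h' | h'
    · exact hα h'
    · exact hne h'
    · exact hβ h'
  have h3 : (0:ℝ) < (1/2:ℝ)^i := by positivity
  have e1 : dist x x' ≤ dist x u + dist u v + dist v x' := dist_triangle4 x u v x'
  have e2 : dist v x' < (1/2:ℝ)^(i+3) := by rw [dist_comm]; exact hxv
  have e3 : (1/2:ℝ)^(i+3) = (1/2:ℝ)^(i+1)/4 := by ring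
  have e4 : (1/2:ℝ)^(i) = (1/2:ℝ)^(i+1)*2 := by ring
  nlinarith [dist_nonneg (x := u) (y := v)]

variable (e : M → ℝ)

/-- Union of the pieces whose index is coded (via `e`) into the rational interval `(q,r)`. -/
def Eset (n i : ℕ) (q r : ℚ) : Set M :=
  {u | ∃ α : M, (q:ℝ) < e α ∧ e α < (r:ℝ) ∧ u ∈ Dset n i α}

lemma exists_sep (he : Function.Injective e) {x y : M} (hxy : x ≠ y) :
    ∃ (n i : ℕ) (q r : ℚ) (δ : ℝ), 0 < δ ∧ x ∈ Eset e n i q r ∧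
      ∀ v ∈ Eset e n i q r, δ ≤ dist y v := by
  have hd : 0 < dist x y := dist_pos.2 hxy
  obtain ⟨n, hn⟩ : ∃ n : ℕ, (1/2:ℝ)^n < dist x y / 4 :=
    exists_pow_lt_of_lt_one (by positivity) (by norm_num)
  set α := acenter n x with hα
  have hxα : dist x α < (1/2:ℝ)^n := acenter_dist n x
  obtain ⟨i, hi⟩ : ∃ i : ℕ, (1/2:ℝ)^i < (1/2:ℝ)^n - dist x α :=
    exists_pow_lt_of_lt_one (by linarith) (by norm_num)
  have hxD : x ∈ Dset n i α := by
    refine ⟨x, rfl, fun z hz => ?_, by simp [pow_pos]⟩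
    have := dist_triangle z x α
    rw [dist_comm z x] at this
    linarith
  -- any element of Dset n i α is at distance > dist x y / 2 from y
  have hfar : ∀ v ∈ Dset n i α, dist x y / 2 ≤ dist y v := by
    intro v hv
    have h1 : dist v α < (1/2:ℝ)^n := Dset_small hv
    have h2 : dist x v ≤ dist x α + dist v α := by
      have := dist_triangle x α v; rw [dist_comm α v] at this; linarith
    have h3 : dist x y ≤ dist x v + dist y v := by
      have := dist_triangle x v y; rw [dist_comm v y] at this; linarith
    linarith
  set δ : ℝ := min (dist x y / 2) ((1/2:ℝ)^(i+2)) with hδdef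
  have hδpos : 0 < δ := lt_min (by linarith) (by positivity)
  by_cases hbad : ∃ β : M, β ≠ α ∧ ∃ v ∈ Dset n i β, dist y v < (1/2:ℝ)^(i+2)
  · obtain ⟨β₀, hβ₀ne, v₀, hv₀, hyv₀⟩ := hbad
    have heab : e α ≠ e β₀ := fun h => hβ₀ne (he h.symm)
    -- choose a rational interval around e α avoiding e β₀
    obtain ⟨q, r, hq, hr, havoid⟩ :
        ∃ q r : ℚ, (q:ℝ) < e α ∧ e α < (r:ℝ) ∧ ¬((q:ℝ) < e β₀ ∧ e β₀ < (r:ℝ)) := by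
      rcases lt_or_gt_of_ne heab with h | h
      · obtain ⟨r, hr1, hr2⟩ := exists_rat_btwn h
        obtain ⟨q, hq⟩ := exists_rat_lt (e α)
        exact ⟨q, r, hq, hr1, fun hc => absurd hc.2 (not_lt.2 hr2.le)⟩
      · obtain ⟨q, hq1, hq2⟩ := exists_rat_btwn h
        obtain ⟨r, hr⟩ := exists_rat_gt (e α)
        exact ⟨q, r, hq2, hr, fun hc => absurd hc.1 (not_lt.2 hq1.le)⟩
    refine ⟨n, i, q, r, δ, hδpos, ⟨α, hq, hr, hxD⟩, ?_⟩
    rintro v ⟨γ, hq', hr', hvD⟩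
    by_cases hγ : γ = α
    · subst hγ
      exact le_trans (min_le_left _ _) (hfar v hvD)
    · refine le_trans (min_le_right _ _) ?_
      by_contra h'
      push_neg at h'
      have hγβ : γ = β₀ := by
        by_contra hne'
        have := Dset_sep hne' hvD hv₀
        have h4 : dist v v₀ ≤ dist y v + dist y v₀ := by
          have := dist_triangle v y v₀; rw [dist_comm v y] at this; linarith
        have e3 : (1/2:ℝ)^(i+1) = (1/2:ℝ)^(i+2)*2 := by ring
        linarith
      subst hγβ
      exact havoid ⟨hq', hr'⟩
  · push_neg at hbad
    obtain ⟨q, hq⟩ := exists_rat_lt (e α)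
    obtain ⟨r, hr⟩ := exists_rat_gt (e α)
    refine ⟨n, i, q, r, δ, hδpos, ⟨α, hq, hr, hxD⟩, ?_⟩
    rintro v ⟨γ, hq', hr', hvD⟩
    by_cases hγ : γ = α
    · subst hγ
      exact le_trans (min_le_left _ _) (hfar v hvD)
    · exact le_trans (min_le_right _ _) (hbad γ hγ v hvD)


abbrev PIdx := ℕ × ℕ × ℚ × ℚ
abbrev TIdx := ℚ × ℕ × Finset PIdx

def CC (e : M → ℝ) (G : Finset PIdx) : Set M :=
  ⋂ p ∈ G, Eset e p.1 p.2.1 p.2.2.1 p.2.2.2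

noncomputable def termf (e : M → ℝ) (t : TIdx) (z : M) : ℝ :=
  (t.1:ℝ) + (t.2.1:ℝ) * infDist z (CC e t.2.2)

lemma termf_lip (e : M → ℝ) (t : TIdx) : LipschitzWith ((t.2.1 : ℕ) : ℝ≥0) (termf e t) := by
  apply LipschitzWith.of_dist_le_mul
  intro x y
  have h := (lipschitz_infDist_pt (CC e t.2.2)).dist_le_mul x y
  rw [NNReal.coe_one, one_mul, Real.dist_eq] at h
  have hk : (0:ℝ) ≤ (t.2.1:ℝ) := Nat.cast_nonneg _
  have hd : termf e t x - termf e t y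
      = (t.2.1:ℝ) * (infDist x (CC e t.2.2) - infDist y (CC e t.2.2)) := by
    simp only [termf]; ring
  rw [Real.dist_eq, hd, abs_mul, abs_of_nonneg hk]
  calc (t.2.1:ℝ) * |infDist x (CC e t.2.2) - infDist y (CC e t.2.2)|
      ≤ (t.2.1:ℝ) * dist x y := mul_le_mul_of_nonneg_left h hk
    _ = ((t.2.1 : ℝ≥0) : ℝ) * dist x y := by push_cast; ring

noncomputable def gfun (e : M → ℝ) (t0 : TIdx) (L : List TIdx) (z : M) : ℝ :=
  L.foldr (fun t r => min (termf e t z) r) (termf e t0 z)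

lemma gfun_cons (e : M → ℝ) (t0 h : TIdx) (L : List TIdx) (z : M) :
    gfun e t0 (h :: L) z = min (termf e h z) (gfun e t0 L z) := rfl

lemma gfun_lip (e : M → ℝ) (t0 : TIdx) (L : List TIdx) :
    ∃ K, LipschitzWith K (gfun e t0 L) := by
  induction L with
  | nil => exact ⟨_, termf_lip e t0⟩
  | cons h L ih =>
    obtain ⟨K, hK⟩ := ih
    exact ⟨_, (termf_lip e h).min hK⟩

lemma gfun_le (e : M → ℝ) (t0 : TIdx) (L : List TIdx) (z : M) :
    ∀ t ∈ t0 :: L, gfun e t0 L z ≤ termf e t z := by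
  induction L with
  | nil =>
    intro t ht
    simp only [List.mem_cons, List.not_mem_nil, or_false] at ht
    subst ht; exact le_refl _
  | cons h L ih =>
    intro t ht
    rw [gfun_cons]
    simp only [List.mem_cons] at ht
    rcases ht with rfl | rfl | ht''
    · exact le_trans (min_le_right _ _) (ih _ (by simp))
    · exact min_le_left _ _
    · exact le_trans (min_le_right _ _) (ih _ (by simp [ht'']))

lemma le_gfun (e : M → ℝ) (t0 : TIdx) (L : List TIdx) (z : M) (c : ℝ)
    (h : ∀ t ∈ t0 :: L, c ≤ termf e t z) : c ≤ gfun e t0 L z := by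
  induction L with
  | nil => exact h t0 (by simp)
  | cons hh L ih =>
    rw [gfun_cons]
    refine le_min (h hh (by simp)) (ih ?_)
    intro t ht
    simp only [List.mem_cons] at ht
    rcases ht with rfl | ht'
    · exact h t (by simp)
    · exact h t (by simp [ht'])

noncomputable def Dfun (e : M → ℝ) (o : M) (p : TIdx × List TIdx) : M → ℝ :=
  fun z => gfun e p.1 p.2 z - gfun e p.1 p.2 o

lemma Dfun_lip (e : M → ℝ) (o : M) (p : TIdx × List TIdx) :
    ∃ K, LipschitzWith K (Dfun e o p) := by
  obtain ⟨K, hK⟩ := gfun_lip e p.1 p.2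
  refine ⟨K, LipschitzWith.of_dist_le_mul fun x y => ?_⟩
  have := hK.dist_le_mul x y
  simpa [Dfun, Real.dist_eq, sub_sub_sub_cancel_right] using this

lemma Dfun_zero (e : M → ℝ) (o : M) (p : TIdx × List TIdx) : Dfun e o p o = 0 := sub_self _


lemma exists_inj_real {M : Type u} [MetricSpace M]
    (hdens : ∃ D : Set M, Dense D ∧ Cardinal.mk D ≤ Cardinal.continuum) :
    ∃ e : M → ℝ, Function.Injective e := by
  obtain ⟨S, hSdense, hScard⟩ := hdens
  have hchoice : ∀ (x : M) (n : ℕ), ∃ z : S, dist x (z : M) < 1/(n+1) := by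
    intro x n
    obtain ⟨y, hyS, hy⟩ := hSdense.exists_dist_lt x (show (0:ℝ) < 1/(n+1) by positivity)
    exact ⟨⟨y, hyS⟩, hy⟩
  choose σ hσ using hchoice
  have hinj : Function.Injective σ := by
    intro x y h
    have key : ∀ n : ℕ, dist x y < 2/(n+1) := by
      intro n
      have h1 := hσ x n
      have h2 := hσ y n
      have h3 : σ x n = σ y n := congrFun h n
      rw [h3] at h1
      have h4 : dist x y ≤ dist x (σ y n : M) + dist y (σ y n : M) := dist_triangle_right _ _ _
      have : (2:ℝ)/(n+1) = 1/(n+1) + 1/(n+1) := by ring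
      linarith
    by_contra hxy
    have hd : 0 < dist x y := dist_pos.2 hxy
    obtain ⟨n, hn⟩ := exists_nat_gt (2 / dist x y)
    have h5 : 2 / dist x y < (n:ℝ) + 1 := hn.trans (lt_add_one _)
    have h6 : 2 < ((n:ℝ) + 1) * dist x y := by
      rw [div_lt_iff₀ hd] at h5; linarith
    have h7 := key n
    rw [lt_div_iff₀ (show (0:ℝ) < (n:ℝ)+1 by positivity)] at h7
    nlinarith
  have hM : Cardinal.mk M ≤ Cardinal.continuum := by
    calc Cardinal.mk M ≤ Cardinal.mk (ℕ → S) := Cardinal.mk_le_of_injective hinj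
      _ = Cardinal.lift.{0} (Cardinal.mk S) ^ Cardinal.lift.{u} (Cardinal.mk ℕ) :=
          Cardinal.mk_arrow ℕ S
      _ = Cardinal.mk S ^ Cardinal.aleph0 := by
          rw [Cardinal.mk_nat, Cardinal.lift_aleph0, Cardinal.lift_uzero]
      _ ≤ Cardinal.continuum ^ Cardinal.aleph0 :=
          Cardinal.power_le_power_right hScard
      _ = Cardinal.continuum := Cardinal.continuum_power_aleph0
  have hMR : Cardinal.lift.{0} (Cardinal.mk M) ≤ Cardinal.lift.{u} (Cardinal.mk ℝ) := by
    rw [Cardinal.mk_real, Cardinal.lift_continuum, Cardinal.lift_uzero]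
    exact hM
  obtain ⟨emb⟩ := Cardinal.lift_mk_le'.1 hMR
  exact ⟨emb, emb.injective⟩

end Lip0Sep

open Cardinal

theorem lip0_pointwise_separable (M : Type*) [MetricSpace M] (o : M)
    (hdens : ∃ D : Set M, Dense D ∧ #D ≤ Cardinal.continuum) :
    ∃ D : Set (M → ℝ), D.Countable ∧
      (∀ f ∈ D, (∃ K, LipschitzWith K f) ∧ f o = 0) ∧
      ∀ f : M → ℝ, (∃ K, LipschitzWith K f) → f o = 0 → f ∈ closure D := by
  classical
  open Metric Set Lip0Sep in
  obtain ⟨e, he⟩ := Lip0Sep.exists_inj_real hdens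
  refine ⟨Set.range (Lip0Sep.Dfun e o), Set.countable_range _, ?_, ?_⟩
  · rintro f ⟨p, rfl⟩
    exact ⟨Lip0Sep.Dfun_lip e o p, Lip0Sep.Dfun_zero e o p⟩
  intro f _ hfo
  rw [mem_closure_iff_nhds]
  intro tset htset
  rw [nhds_pi, Filter.mem_pi'] at htset
  obtain ⟨I, V, hV, hsub⟩ := htset
  have hεe : ∀ i : M, ∃ ε : ℝ, 0 < ε ∧ Metric.ball (f i) ε ⊆ V i := by
    intro i
    obtain ⟨ε, hε, hb⟩ := Metric.mem_nhds_iff.1 (hV i)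
    exact ⟨ε, hε, hb⟩
  choose ε hε hball using hεe
  set F : Finset M := insert o I with hF
  have hoF : o ∈ F := Finset.mem_insert_self _ _
  have hFne : F.Nonempty := ⟨o, hoF⟩
  set ε0 : ℝ := F.inf' hFne ε with hε0
  have hε0pos : 0 < ε0 := by
    rw [hε0, Finset.lt_inf'_iff]
    exact fun i _ => hε i
  set Fmax : ℝ := F.sup' hFne f with hFmax
  by_cases htriv : ∀ x ∈ F, x = o
  · -- degenerate case : F = {o}
    refine ⟨Lip0Sep.Dfun e o ((0,0,∅), []), ?_, ⟨((0,0,∅), []), rfl⟩⟩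
    apply hsub
    rw [Set.mem_pi]
    intro i hiI
    have hiF : i ∈ F := Finset.mem_insert.2 (Or.inr (Finset.mem_coe.1 hiI))
    have hio : i = o := htriv i hiF
    apply hball i
    rw [Metric.mem_ball]
    have hzero : Lip0Sep.Dfun e o ((0,0,∅), []) i = 0 := by
      simp [Lip0Sep.Dfun, Lip0Sep.gfun, Lip0Sep.termf]
    rw [hzero, hio, hfo, dist_self]
    exact hε o
  · push_neg at htriv
    obtain ⟨x₁, hx₁F, hx₁o⟩ := htriv
    have herase : ∀ x ∈ F, (F.erase x).Nonempty := by
      intro x hx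
      by_cases hxo : x = o
      · exact ⟨x₁, Finset.mem_erase.2 ⟨by rw [hxo]; exact hx₁o, hx₁F⟩⟩
      · exact ⟨o, Finset.mem_erase.2 ⟨fun h => hxo h.symm, hoF⟩⟩
    have hkey : ∀ x : M, ∃ (G : Finset Lip0Sep.PIdx) (aq : ℚ) (kk : ℕ), x ∈ F →
        (x ∈ Lip0Sep.CC e G ∧ f x < (aq:ℝ) ∧ (aq:ℝ) < f x + ε0/2 ∧
          ∀ y ∈ F.erase x, Fmax ≤ (aq:ℝ) + (kk:ℝ) * Metric.infDist y (Lip0Sep.CC e G)) := by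
      intro x
      by_cases hxF : x ∈ F
      · have hpair : ∀ y : M, ∃ pd : Lip0Sep.PIdx × ℝ, y ∈ F.erase x →
            (0 < pd.2 ∧ x ∈ Lip0Sep.Eset e pd.1.1 pd.1.2.1 pd.1.2.2.1 pd.1.2.2.2 ∧
              ∀ v ∈ Lip0Sep.Eset e pd.1.1 pd.1.2.1 pd.1.2.2.1 pd.1.2.2.2, pd.2 ≤ dist y v) := by
          intro y
          by_cases hy : y ∈ F.erase x
          · have hxy : x ≠ y := fun hh => (Finset.mem_erase.1 hy).1 hh.symm
            obtain ⟨n, i, q, r, δ, hδ, hxE, hb⟩ := Lip0Sep.exists_sep e he hxy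
            exact ⟨((n,i,q,r), δ), fun _ => ⟨hδ, hxE, hb⟩⟩
          · exact ⟨((0,0,0,0), 1), fun hy' => absurd hy' hy⟩
        choose pd hpd using hpair
        set G := (F.erase x).image (fun y => (pd y).1) with hG
        have hxCC : x ∈ Lip0Sep.CC e G := by
          rw [Lip0Sep.CC, Set.mem_iInter₂]
          intro p hp
          obtain ⟨y, hy, rfl⟩ := Finset.mem_image.1 hp
          exact (hpd y hy).2.1
        obtain ⟨y₀, hy₀⟩ := herase x hxF
        set m := (F.erase x).inf' ⟨y₀, hy₀⟩ (fun y => (pd y).2) with hm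
        have hmpos : 0 < m := by
          rw [hm]
          exact (Finset.lt_inf'_iff _).2 fun y hy => (hpd y hy).1
        have hmle : ∀ y ∈ F.erase x, m ≤ Metric.infDist y (Lip0Sep.CC e G) := by
          intro y hy
          have hsub' : Lip0Sep.CC e G ⊆
              Lip0Sep.Eset e (pd y).1.1 (pd y).1.2.1 (pd y).1.2.2.1 (pd y).1.2.2.2 := by
            intro z hz
            rw [Lip0Sep.CC, Set.mem_iInter₂] at hz
            exact hz _ (Finset.mem_image_of_mem _ hy)
          have h1 : Metric.infDist y
                (Lip0Sep.Eset e (pd y).1.1 (pd y).1.2.1 (pd y).1.2.2.1 (pd y).1.2.2.2)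
              ≤ Metric.infDist y (Lip0Sep.CC e G) :=
            Metric.infDist_le_infDist_of_subset hsub' ⟨x, hxCC⟩
          have h2 : (pd y).2 ≤ Metric.infDist y
              (Lip0Sep.Eset e (pd y).1.1 (pd y).1.2.1 (pd y).1.2.2.1 (pd y).1.2.2.2) := by
            by_contra h'
            obtain ⟨v, hv, hvd⟩ :=
              (Metric.infDist_lt_iff ⟨x, (hpd y hy).2.1⟩).1 (not_le.1 h')
            exact absurd hvd (not_lt.2 ((hpd y hy).2.2 v hv))
          have h3 : m ≤ (pd y).2 := Finset.inf'_le _ hy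
          linarith
        obtain ⟨aq, ha1, ha2⟩ := exists_rat_btwn (show f x < f x + ε0/2 by linarith)
        obtain ⟨kk, hkk⟩ := exists_nat_ge ((Fmax - (aq:ℝ)) / m)
        refine ⟨G, aq, kk, fun _ => ⟨hxCC, ha1, ha2, ?_⟩⟩
        intro y hy
        have h4 : Fmax - (aq:ℝ) ≤ (kk:ℝ) * m := by
          rw [div_le_iff₀ hmpos] at hkk
          linarith
        have h5 : (kk:ℝ) * m ≤ (kk:ℝ) * Metric.infDist y (Lip0Sep.CC e G) :=
          mul_le_mul_of_nonneg_left (hmle y hy) (Nat.cast_nonneg _)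
        linarith
      · exact ⟨∅, 0, 0, fun h => absurd h hxF⟩
    choose Gf af kf hGak using hkey
    set tup : M → Lip0Sep.TIdx := fun x => (af x, kf x, Gf x) with htup
    obtain ⟨hd, tl, hlist⟩ : ∃ hd tl, F.toList = hd :: tl := by
      rcases hl : F.toList with _ | ⟨hd, tl⟩
      · exact absurd (Finset.toList_eq_nil.1 hl) (Finset.nonempty_iff_ne_empty.1 hFne)
      · exact ⟨hd, tl, rfl⟩
    set par : Lip0Sep.TIdx × List Lip0Sep.TIdx := (tup hd, tl.map tup) with hpar
    have hmemlist : ∀ t, t ∈ par.1 :: par.2 ↔ ∃ w ∈ F, tup w = t := by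
      intro t
      constructor
      · intro ht
        rcases List.mem_cons.1 ht with h | h
        · exact ⟨hd, by rw [← Finset.mem_toList, hlist]; simp, h.symm⟩
        · obtain ⟨w, hw, hwt⟩ := List.mem_map.1 h
          exact ⟨w, by rw [← Finset.mem_toList, hlist]; simp [hw], hwt⟩
      · rintro ⟨w, hw, rfl⟩
        rw [← Finset.mem_toList, hlist] at hw
        rcases List.mem_cons.1 hw with h | h
        · rw [h]; exact List.mem_cons_self
        · exact List.mem_cons.2 (Or.inr (List.mem_map.2 ⟨w, h, rfl⟩))
    have hbounds : ∀ y ∈ F, f y ≤ Lip0Sep.gfun e par.1 par.2 y ∧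
        Lip0Sep.gfun e par.1 par.2 y < f y + ε0/2 := by
      intro y hyF
      obtain ⟨hCC, ha1, ha2, hlow⟩ := hGak y hyF
      constructor
      · apply Lip0Sep.le_gfun
        intro t ht
        obtain ⟨w, hwF, hwt⟩ := (hmemlist t).1 ht
        subst hwt
        obtain ⟨hCCw, hw1, hw2, hwlow⟩ := hGak w hwF
        by_cases hwy : w = y
        · subst hwy
          have hnn : (0:ℝ) ≤ (kf w : ℝ) * Metric.infDist w (Lip0Sep.CC e (Gf w)) := by
            have := Metric.infDist_nonneg (x := w) (s := Lip0Sep.CC e (Gf w))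
            positivity
          show f w ≤ (af w : ℝ) + (kf w : ℝ) * Metric.infDist w (Lip0Sep.CC e (Gf w))
          linarith
        · have hyer : y ∈ F.erase w := Finset.mem_erase.2 ⟨fun hh => hwy hh.symm, hyF⟩
          have hlw := hwlow y hyer
          have hfy : f y ≤ Fmax := Finset.le_sup' f hyF
          show f y ≤ (af w : ℝ) + (kf w : ℝ) * Metric.infDist y (Lip0Sep.CC e (Gf w))
          linarith
      · have ht : tup y ∈ par.1 :: par.2 := (hmemlist _).2 ⟨y, hyF, rfl⟩
        have h1 := Lip0Sep.gfun_le e par.1 par.2 y (tup y) ht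
        have h2 : Lip0Sep.termf e (tup y) y = (af y : ℝ) := by
          show (af y : ℝ) + (kf y : ℝ) * Metric.infDist y (Lip0Sep.CC e (Gf y)) = (af y : ℝ)
          rw [Metric.infDist_zero_of_mem hCC]
          ring
        rw [h2] at h1
        linarith
    refine ⟨Lip0Sep.Dfun e o par, ?_, ⟨par, rfl⟩⟩
    apply hsub
    rw [Set.mem_pi]
    intro i hiI
    have hiF : i ∈ F := Finset.mem_insert.2 (Or.inr (Finset.mem_coe.1 hiI))
    apply hball i
    rw [Metric.mem_ball]
    obtain ⟨hi1, hi2⟩ := hbounds i hiF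
    obtain ⟨ho1, ho2⟩ := hbounds o hoF
    rw [hfo] at ho1 ho2
    have hε0i : ε0 ≤ ε i := Finset.inf'_le _ hiF
    have habs : |Lip0Sep.gfun e par.1 par.2 i - Lip0Sep.gfun e par.1 par.2 o - f i| < ε0 := by
      rw [abs_lt]
      constructor <;> linarith
    show dist (Lip0Sep.Dfun e o par i) (f i) < ε i
    rw [Real.dist_eq]
    have hDi : Lip0Sep.Dfun e o par i
        = Lip0Sep.gfun e par.1 par.2 i - Lip0Sep.gfun e par.1 par.2 o := rfl
    rw [hDi]
    linarith [habs, abs_lt.1 habs]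
end

section
/- Let M be a metric space whose density character is at most 2^ℵ₀. Then the set C(M,ℝ) of all continuous real-valued functions on M is separable in the topology of pointwise convergence: there is a countable set D of continuous functions M → ℝ such that every continuous function M → ℝ lies in the closure of D in the product topology on M → ℝ. -/
open Cardinal

open Metric Set Function

noncomputable section

namespace CPAux

variable {M : Type*} [MetricSpace M]

/-- The scale `(1/2)^n`. -/
def r2 (n : ℕ) : ℝ := (1/2 : ℝ) ^ n

lemma r2_pos (n : ℕ) : 0 < r2 n := by unfold r2; positivity

lemma r2_key (n : ℕ) : (2:ℝ)^(n+2) * (r2 n / 4) = 1 := by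
  have h : ((2:ℝ)^n) ≠ 0 := by positivity
  simp only [r2, one_div, inv_pow, pow_add]
  field_simp
  norm_num

lemma lstne (k : ℕ) (x : M) : {α : M | dist x α < 2 * r2 k}.Nonempty :=
  ⟨x, by simp only [Set.mem_setOf_eq, dist_self]; have := r2_pos k; linarith⟩

/-- Least point (in a fixed well-order) whose `2 * r2 k` ball contains `x`. -/
def lst (k : ℕ) (x : M) : M :=
  (IsWellFounded.wf (r := (WellOrderingRel : M → M → Prop))).min
    {α | dist x α < 2 * r2 k} (lstne k x)

lemma lst_dist (k : ℕ) (x : M) : dist x (lst k x) < 2 * r2 k :=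
  ((IsWellFounded.wf (r := (WellOrderingRel : M → M → Prop))).min_mem
    {α | dist x α < 2 * r2 k} (lstne k x) : lst k x ∈ {α : M | dist x α < 2 * r2 k})

lemma lst_not_lt (k : ℕ) (x : M) {γ : M} (h : dist x γ < 2 * r2 k) :
    ¬ WellOrderingRel γ (lst k x) :=
  (IsWellFounded.wf (r := (WellOrderingRel : M → M → Prop))).not_lt_min
    {α | dist x α < 2 * r2 k} h

def Zset (k n : ℕ) (α : M) : Set M :=
  {z | lst k z = α ∧ ball z (3 * r2 n) ⊆ ball α (2 * r2 k)}

def Dset (k n : ℕ) (α : M) : Set M := ⋃ z ∈ Zset k n α, ball z (r2 n)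

lemma Dset_cover (k : ℕ) (x : M) : ∃ n, x ∈ Dset k n (lst k x) := by
  have h := lst_dist k x
  obtain ⟨n, hn⟩ := exists_pow_lt_of_lt_one
    (x := (2 * r2 k - dist x (lst k x)) / 3) (by linarith) (by norm_num : (1/2:ℝ) < 1)
  have hn' : 3 * r2 n < 2 * r2 k - dist x (lst k x) := by
    have : r2 n < (2 * r2 k - dist x (lst k x)) / 3 := hn
    linarith
  refine ⟨n, ?_⟩
  have hz : x ∈ Zset k n (lst k x) := by
    refine ⟨rfl, ?_⟩
    intro y hy
    rw [mem_ball] at hy ⊢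
    have := dist_triangle y x (lst k x)
    linarith
  exact mem_iUnion₂.mpr ⟨x, hz, mem_ball_self (r2_pos n)⟩

lemma sep_aux {k n : ℕ} {α β z w : M} (hr : WellOrderingRel α β)
    (hz : z ∈ Zset k n α) (hw : w ∈ Zset k n β) : 3 * r2 n ≤ dist z w := by
  have hwa : ¬ dist w α < 2 * r2 k := by
    intro h
    have h2 := lst_not_lt k w h
    rw [hw.1] at h2
    exact h2 hr
  by_contra hlt
  push_neg at hlt
  exact hwa (mem_ball.mp (hz.2 (by rw [mem_ball, dist_comm]; exact hlt)))

lemma sep {k n : ℕ} {α β a b : M} (hne : α ≠ β)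
    (ha : a ∈ Dset k n α) (hb : b ∈ Dset k n β) : r2 n ≤ dist a b := by
  obtain ⟨z, hz, haz⟩ := mem_iUnion₂.mp ha
  obtain ⟨w, hw, hbw⟩ := mem_iUnion₂.mp hb
  have h3 : 3 * r2 n ≤ dist z w := by
    rcases trichotomous_of WellOrderingRel α β with h | h | h
    · exact sep_aux h hz hw
    · exact absurd h hne
    · rw [dist_comm]; exact sep_aux h hw hz
  have haz' : dist a z < r2 n := mem_ball.mp haz
  have hbw' : dist b w < r2 n := mem_ball.mp hbw
  have h4 := dist_triangle4 z a b w
  rw [dist_comm z a] at h4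
  linarith

open Classical in
def u (k n : ℕ) (α : M) (x : M) : ℝ :=
  if (Dset k n α).Nonempty then max 0 (1 - (2:ℝ)^(n+2) * infDist x (Dset k n α)) else 0

lemma continuous_u (k n : ℕ) (α : M) : Continuous (u k n α) := by
  unfold u
  split
  · exact continuous_const.max
      (continuous_const.sub (continuous_const.mul (continuous_infDist_pt _)))
  · exact continuous_const

lemma u_ne_zero {k n : ℕ} {α x : M} (h : u k n α x ≠ 0) :
    ∃ a ∈ Dset k n α, dist x a < r2 n / 4 := by
  unfold u at h
  split at h
  case isTrue hne =>
    have h1 : 0 < 1 - (2:ℝ)^(n+2) * infDist x (Dset k n α) := by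
      by_contra h2
      push_neg at h2
      exact h (max_eq_left h2)
    have hp : (0:ℝ) < (2:ℝ)^(n+2) := by positivity
    have hk := r2_key n
    have h2 : infDist x (Dset k n α) < r2 n / 4 := by nlinarith
    exact (infDist_lt_iff hne).mp h2
  case isFalse => exact absurd rfl h

lemma u_eq_zero {k n : ℕ} {α x : M}
    (h : ∀ a ∈ Dset k n α, r2 n / 4 ≤ dist x a) : u k n α x = 0 := by
  by_contra h0
  obtain ⟨a, ha, hlt⟩ := u_ne_zero h0
  have := h a ha
  linarith

lemma u_eq_one {k n : ℕ} {α x : M} (h : x ∈ Dset k n α) : u k n α x = 1 := by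
  unfold u
  rw [if_pos ⟨x, h⟩, infDist_zero_of_mem h]
  norm_num

lemma u_unique {k n : ℕ} {α β x : M} (hα : u k n α x ≠ 0) (hβ : u k n β x ≠ 0) :
    α = β := by
  by_contra hne
  obtain ⟨a, ha, hxa⟩ := u_ne_zero hα
  obtain ⟨b, hb, hxb⟩ := u_ne_zero hβ
  have hs := sep hne ha hb
  have ht := dist_triangle a x b
  rw [dist_comm a x] at ht
  have hr := r2_pos n
  linarith

open Classical in
def F (w : M → ℝ) (k n : ℕ) (x : M) : ℝ :=
  if h : ∃ α, u k n α x ≠ 0 then w h.choose * u k n h.choose x else 0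

lemma F_eq {w : M → ℝ} {k n : ℕ} {x α : M} (h : u k n α x ≠ 0) :
    F w k n x = w α * u k n α x := by
  have hex : ∃ β, u k n β x ≠ 0 := ⟨α, h⟩
  have hc : hex.choose = α := u_unique hex.choose_spec h
  unfold F
  rw [dif_pos hex, hc]

lemma F_eq_zero {w : M → ℝ} {k n : ℕ} {x : M} (h : ¬ ∃ α, u k n α x ≠ 0) :
    F w k n x = 0 := by
  unfold F
  rw [dif_neg h]

lemma continuous_F (w : M → ℝ) (k n : ℕ) : Continuous (F w k n) := by
  rw [continuous_iff_continuousAt]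
  intro x0
  by_cases hA : ∃ α, (Dset k n α).Nonempty ∧ infDist x0 (Dset k n α) < r2 n / 2
  · obtain ⟨α, hne, hd⟩ := hA
    have hW : IsOpen {x : M | infDist x (Dset k n α) < r2 n / 2} :=
      isOpen_lt (continuous_infDist_pt _) continuous_const
    have heq : EqOn (fun x => w α * u k n α x) (F w k n)
        {x : M | infDist x (Dset k n α) < r2 n / 2} := by
      intro x hx
      by_cases hex : ∃ β, u k n β x ≠ 0
      · obtain ⟨β, hβ⟩ := hex
        obtain ⟨b, hb, hxb⟩ := u_ne_zero hβ
        obtain ⟨a, ha, hxa⟩ := (infDist_lt_iff hne).mp hx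
        have hαβ : α = β := by
          by_contra hne'
          have hs := sep hne' ha hb
          have ht := dist_triangle a x b
          rw [dist_comm a x] at ht
          have hr := r2_pos n
          linarith
        subst hαβ
        exact (F_eq hβ).symm
      · push_neg at hex
        have : F w k n x = 0 := F_eq_zero (by push_neg; exact hex)
        simp only [this, hex α, mul_zero]
    exact ((continuous_const.mul (continuous_u k n α)).continuousAt).congr
      (Filter.eventuallyEq_of_mem (hW.mem_nhds hd) heq)
  · push_neg at hA
    have heq : EqOn (fun _ : M => (0:ℝ)) (F w k n) (ball x0 (r2 n / 8)) := by
      intro x hx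
      by_cases hex : ∃ β, u k n β x ≠ 0
      · obtain ⟨β, hβ⟩ := hex
        obtain ⟨b, hb, hxb⟩ := u_ne_zero hβ
        have h1 : infDist x0 (Dset k n β) ≤ dist x0 b := infDist_le_dist_of_mem hb
        have h2 : dist x0 b ≤ dist x0 x + dist x b := dist_triangle _ _ _
        have h3 := hA β ⟨b, hb⟩
        have hx' : dist x0 x < r2 n / 8 := by
          rw [dist_comm]; exact mem_ball.mp hx
        have hr2 := r2_pos n
        linarith
      · exact (F_eq_zero hex).symm
    exact continuousAt_const.congr
      (Filter.eventuallyEq_of_mem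
        (isOpen_ball.mem_nhds (mem_ball_self (by have := r2_pos n; linarith))) heq)

def Phi (φ : M → ℝ) (x : M) : ℕ × ℕ × Bool → ℝ :=
  fun p => if p.2.2 then F (fun _ => (1:ℝ)) p.1 p.2.1 x else F φ p.1 p.2.1 x

lemma continuous_Phi (φ : M → ℝ) (p : ℕ × ℕ × Bool) :
    Continuous fun x : M => Phi φ x p := by
  unfold Phi
  cases hb : p.2.2 <;> simp only [hb, if_true, if_false, Bool.false_eq_true] <;>
    exact continuous_F _ _ _

lemma Phi_inj (φ : M → ℝ) (hφ : Function.Injective φ) :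
    Function.Injective (Phi φ) := by
  intro x y hxy
  by_contra hne
  have hr : 0 < dist x y := dist_pos.mpr hne
  obtain ⟨k, hk⟩ := exists_pow_lt_of_lt_one (x := dist x y / 4)
    (by linarith) (by norm_num : (1/2:ℝ) < 1)
  have hk' : r2 k < dist x y / 4 := hk
  set α := lst k x with hα
  obtain ⟨n, hn⟩ := Dset_cover k x
  rw [← hα] at hn
  have hux : u k n α x = 1 := u_eq_one hn
  have hux' : u k n α x ≠ 0 := by rw [hux]; norm_num
  have hfar : ∀ a ∈ Dset k n α, r2 n / 4 ≤ dist y a := by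
    intro a ha
    obtain ⟨z, hz, haz⟩ := mem_iUnion₂.mp ha
    have hyα : ¬ dist y α < 2 * r2 k := by
      intro h2
      have h1 : dist x α < 2 * r2 k := lst_dist k x
      have ht := dist_triangle x α y
      rw [dist_comm α y] at ht
      linarith
    have hyz : ¬ dist y z < 3 * r2 n := by
      intro h
      exact hyα (mem_ball.mp (hz.2 (mem_ball.mpr h)))
    push_neg at hyz
    have haz' : dist a z < r2 n := mem_ball.mp haz
    have ht := dist_triangle y a z
    have hr2 := r2_pos n
    linarith
  have huy : u k n α y = 0 := u_eq_zero hfar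
  have h2x : F (fun _ => (1:ℝ)) k n x = 1 := by rw [F_eq hux', hux]; ring
  have h2y : F (fun _ => (1:ℝ)) k n y = 1 := by
    have hc := congrFun hxy (k, n, true)
    simp only [Phi, if_true] at hc
    rw [← hc]
    exact h2x
  have hey : ∃ β, u k n β y ≠ 0 := by
    by_contra h
    rw [F_eq_zero h] at h2y
    norm_num at h2y
  obtain ⟨β, hβ⟩ := hey
  have hbu : u k n β y = 1 := by
    have := F_eq (w := fun _ => (1:ℝ)) hβ
    rw [h2y, one_mul] at this
    exact this.symm
  have h1x : F φ k n x = φ α := by rw [F_eq hux', hux, mul_one]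
  have h1y : F φ k n y = φ β := by rw [F_eq hβ, hbu, mul_one]
  have hfc : φ α = φ β := by
    have hc := congrFun hxy (k, n, false)
    simp only [Phi, Bool.false_eq_true, if_false] at hc
    rw [← h1x, ← h1y]
    exact hc
  have hab : α = β := hφ hfc
  rw [← hab, huy] at hbu
  norm_num at hbu

lemma denseRange_pi_ratCast {κ : Type*} :
    DenseRange (fun (q : κ → ℚ) (i : κ) => (q i : ℝ)) := by
  have h1 : Set.range (fun (q : κ → ℚ) (i : κ) => (q i : ℝ)) =
      Set.pi univ (fun _ : κ => Set.range ((↑) : ℚ → ℝ)) := by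
    ext g
    constructor
    · rintro ⟨q, rfl⟩ i _
      exact ⟨q i, rfl⟩
    · intro hg
      choose q hq using fun i => hg i (mem_univ i)
      exact ⟨q, funext hq⟩
  have h2 : Dense (Set.range ((↑) : ℚ → ℝ)) := Rat.denseRange_cast
  rw [DenseRange, h1, dense_iff_closure_eq, closure_pi_set]
  simp [dense_iff_closure_eq.mp h2]

lemma denseRange_pi2_ratCast {κ κ' : Type*} :
    DenseRange (fun (q : κ → κ' → ℚ) (i : κ) (j : κ') => (q i j : ℝ)) := by
  have h1 : Set.range (fun (q : κ → κ' → ℚ) (i : κ) (j : κ') => (q i j : ℝ)) =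
      Set.pi univ (fun _ : κ => Set.range (fun (r : κ' → ℚ) (j : κ') => (r j : ℝ))) := by
    ext g
    constructor
    · rintro ⟨q, rfl⟩ i _
      exact ⟨q i, rfl⟩
    · intro hg
      choose q hq using fun i => hg i (mem_univ i)
      exact ⟨q, funext hq⟩
  rw [DenseRange, h1, dense_iff_closure_eq, closure_pi_set]
  simp [dense_iff_closure_eq.mp (denseRange_pi_ratCast (κ := κ'))]

lemma step2 {ι : Type} [Countable ι] [Nonempty ι] (Φ : M → ι → ℝ)
    (hc : ∀ i, Continuous fun x => Φ x i) (hinj : Function.Injective Φ) :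
    ∃ D : Set (M → ℝ), D.Countable ∧ (∀ f ∈ D, Continuous f) ∧
      ∀ f : M → ℝ, Continuous f → f ∈ closure D := by
  classical
  set geval : ∀ n : ℕ, (Fin n → Fin n → ι) →
      ((Fin n → ℝ) × (Fin n → Fin n → ℝ) × (Fin n → Fin n → ℝ)) → M → ℝ :=
    fun n m p x =>
      ∑ a, p.1 a * ∏ b ∈ Finset.univ.erase a, (p.2.1 a b * (Φ x (m a b) - p.2.2 a b))
    with hgeval
  set castp : ∀ n : ℕ, ((Fin n → ℚ) × (Fin n → Fin n → ℚ) × (Fin n → Fin n → ℚ)) →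
      ((Fin n → ℝ) × (Fin n → Fin n → ℝ) × (Fin n → Fin n → ℝ)) :=
    fun n t => (fun a => (t.1 a : ℝ), fun a b => (t.2.1 a b : ℝ), fun a b => (t.2.2 a b : ℝ))
    with hcastp
  refine ⟨Set.range (fun t : Σ n : ℕ,
      (Fin n → Fin n → ι) × ((Fin n → ℚ) × (Fin n → Fin n → ℚ) × (Fin n → Fin n → ℚ)) =>
      geval t.1 t.2.1 (castp t.1 t.2.2)), Set.countable_range _, ?_, ?_⟩
  · rintro f ⟨t, rfl⟩
    apply continuous_finset_sum
    intro a _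
    exact continuous_const.mul (continuous_finset_prod _ fun b _ =>
      continuous_const.mul ((hc _).sub continuous_const))
  · intro f hf
    rw [_root_.mem_closure_iff]
    intro U hU hfU
    obtain ⟨I, uo, huo, hsub⟩ := isOpen_pi_iff.mp hU f hfU
    set n := I.card with hn
    set e : Fin n → M := fun a => ((I.equivFin.symm a : ↥I) : M) with he
    have he_inj : Function.Injective e := fun a b h =>
      I.equivFin.symm.injective (Subtype.coe_injective h)
    have he_mem : ∀ a, e a ∈ I := fun a => (I.equivFin.symm a).2
    have hm : ∀ a b : Fin n, a ≠ b → ∃ i, Φ (e a) i ≠ Φ (e b) i := by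
      intro a b hab
      exact Function.ne_iff.mp (fun h => hab (he_inj (hinj h)))
    choose m0 hm0 using hm
    set m : Fin n → Fin n → ι :=
      fun a b => if h : a = b then Classical.arbitrary ι else m0 a b h with hmdef
    have hm' : ∀ a b : Fin n, a ≠ b → Φ (e a) (m a b) ≠ Φ (e b) (m a b) := by
      intro a b hab
      simp only [hmdef, dif_neg hab]
      exact hm0 a b hab
    set pr : (Fin n → ℝ) × (Fin n → Fin n → ℝ) × (Fin n → Fin n → ℝ) :=
      (fun a => f (e a),
       fun a b => (Φ (e a) (m a b) - Φ (e b) (m a b))⁻¹,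
       fun a b => Φ (e b) (m a b)) with hpr
    have hexact : ∀ a0, geval n m pr (e a0) = f (e a0) := by
      intro a0
      rw [hgeval]
      dsimp only
      rw [Finset.sum_eq_single a0]
      · have hone : ∀ b ∈ Finset.univ.erase a0,
            (pr.2.1 a0 b * (Φ (e a0) (m a0 b) - pr.2.2 a0 b)) = 1 := by
          intro b hb
          have hb' : a0 ≠ b := (Finset.ne_of_mem_erase hb).symm
          have hne : Φ (e a0) (m a0 b) - Φ (e b) (m a0 b) ≠ 0 :=
            sub_ne_zero.mpr (hm' a0 b hb')
          simp only [hpr]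
          exact inv_mul_cancel₀ hne
        rw [Finset.prod_congr rfl hone, Finset.prod_const_one, mul_one]
      · intro a _ ha
        apply mul_eq_zero_of_right
        apply Finset.prod_eq_zero (Finset.mem_erase.mpr ⟨Ne.symm ha, Finset.mem_univ a0⟩)
        show pr.2.1 a a0 * (Φ (e a0) (m a a0) - pr.2.2 a a0) = 0
        have hrr : pr.2.2 a a0 = Φ (e a0) (m a a0) := rfl
        rw [hrr]
        ring
      · intro h
        exact absurd (Finset.mem_univ a0) h
    have hcontp : ∀ x : M, Continuous fun p :
        (Fin n → ℝ) × (Fin n → Fin n → ℝ) × (Fin n → Fin n → ℝ) => geval n m p x := by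
      intro x
      rw [hgeval]
      dsimp only
      apply continuous_finset_sum
      intro a _
      refine Continuous.mul ((continuous_apply a).comp continuous_fst) ?_
      apply continuous_finset_prod
      intro b _
      refine Continuous.mul ?_ (Continuous.sub continuous_const ?_)
      · exact (continuous_apply b).comp ((continuous_apply a).comp
          (continuous_fst.comp continuous_snd))
      · exact (continuous_apply b).comp ((continuous_apply a).comp
          (continuous_snd.comp continuous_snd))
    have hOopen : IsOpen (⋂ a : Fin n, (fun p => geval n m p (e a)) ⁻¹' (uo (e a))) :=
      isOpen_iInter_of_finite fun a => ((huo _ (he_mem a)).1).preimage (hcontp _)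
    have hOne : pr ∈ ⋂ a : Fin n, (fun p => geval n m p (e a)) ⁻¹' (uo (e a)) := by
      refine mem_iInter.mpr fun a => ?_
      simp only [mem_preimage, hexact a]
      exact (huo _ (he_mem a)).2
    have hdr : DenseRange (castp n) := by
      rw [hcastp]
      exact (denseRange_pi_ratCast (κ := Fin n)).prodMap
        ((denseRange_pi2_ratCast (κ := Fin n) (κ' := Fin n)).prodMap
          (denseRange_pi2_ratCast (κ := Fin n) (κ' := Fin n)))
    obtain ⟨t, ht⟩ := hdr.exists_mem_open hOopen ⟨pr, hOne⟩
    refine ⟨geval n m (castp n t), ?_, ⟨⟨n, m, t⟩, rfl⟩⟩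
    apply hsub
    intro i hi
    have hei : e (I.equivFin ⟨i, hi⟩) = i := by simp [he]
    rw [← hei]
    exact mem_iInter.mp ht (I.equivFin ⟨i, hi⟩)


lemma exists_inj_real (hdens : ∃ D : Set M, Dense D ∧ #D ≤ Cardinal.continuum) :
    ∃ φ : M → ℝ, Function.Injective φ := by
  obtain ⟨D, hD, hcard⟩ := hdens
  have hseq : ∀ (x : M) (n : ℕ), ∃ d : D, dist x (d : M) < 1/((n:ℝ)+1) := by
    intro x n
    have hpos : (0:ℝ) < 1/((n:ℝ)+1) := by positivity
    obtain ⟨d, hd⟩ := Metric.dense_iff.mp hD x _ hpos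
    refine ⟨⟨d, hd.2⟩, ?_⟩
    have := mem_ball.mp hd.1
    rwa [dist_comm] at this
  choose σ hσ using hseq
  have hinj : Function.Injective σ := by
    intro x y hxy
    by_contra hne
    have hd0 : 0 < dist x y := dist_pos.mpr hne
    obtain ⟨n, hn⟩ := exists_nat_one_div_lt (half_pos hd0)
    have h1 := hσ x n
    have h2 := hσ y n
    rw [hxy] at h1
    have ht := dist_triangle x (σ y n : M) y
    rw [dist_comm (σ y n : M) y] at ht
    linarith
  have hM : #M ≤ Cardinal.continuum := by
    have harrow : #(ℕ → ↥D) = #↥D ^ (ℵ₀ : Cardinal) := by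
      rw [Cardinal.mk_arrow, Cardinal.mk_nat, Cardinal.lift_uzero, Cardinal.lift_aleph0]
    calc #M ≤ #(ℕ → ↥D) := Cardinal.mk_le_of_injective hinj
      _ = #↥D ^ (ℵ₀ : Cardinal) := harrow
      _ ≤ Cardinal.continuum ^ (ℵ₀ : Cardinal) := Cardinal.power_le_power_right hcard
      _ = Cardinal.continuum := by
          rw [← Cardinal.two_power_aleph0, ← Cardinal.power_mul, Cardinal.aleph0_mul_aleph0,
            Cardinal.two_power_aleph0]
  have hemb : Nonempty (M ↪ ℝ) := by
    rw [← Cardinal.lift_mk_le']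
    simpa [Cardinal.lift_uzero, Cardinal.mk_real, Cardinal.lift_continuum] using hM
  obtain ⟨f⟩ := hemb
  exact ⟨f, f.injective⟩


end CPAux

end

theorem continuous_pointwise_separable (M : Type*) [MetricSpace M]
    (hdens : ∃ D : Set M, Dense D ∧ #D ≤ Cardinal.continuum) :
    ∃ D : Set (M → ℝ), D.Countable ∧ (∀ f ∈ D, Continuous f) ∧
      ∀ f : M → ℝ, Continuous f → f ∈ closure D := by
  obtain ⟨φ, hφ⟩ := CPAux.exists_inj_real hdens
  exact CPAux.step2 (CPAux.Phi φ) (fun i => CPAux.continuous_Phi φ i) (CPAux.Phi_inj φ hφ)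
end

section
/- Let M be a metric space whose density character is at most 2^ℵ₀. Then there exists a countable family (f_n)_{n∈ℕ} of 1-Lipschitz functions f_n : M → ℝ that separates the points of M, i.e., for all x, y ∈ M with x ≠ y there is n ∈ ℕ with f_n(x) ≠ f_n(y). -/
open Cardinal
open Metric

set_option linter.unusedSectionVars false

namespace CMLS

variable {M : Type*} [MetricSpace M]

noncomputable def sel (S : Set M) (hS : Dense S) (p : ℕ) (x : M) : S :=
  (IsWellFounded.wf (r := (WellOrderingRel : S → S → Prop))).min
    {a : S | dist x ↑a < (1/2 : ℝ)^p}
    (by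
      obtain ⟨y, hyS, hy⟩ := hS.exists_dist_lt x (pow_pos (by norm_num : (0:ℝ) < 1/2) p)
      exact ⟨⟨y, hyS⟩, hy⟩)

lemma sel_mem (S : Set M) (hS : Dense S) (p : ℕ) (x : M) :
    dist x ↑(sel S hS p x) < (1/2 : ℝ)^p := by
  have h : sel S hS p x ∈ {a : S | dist x ↑a < (1/2 : ℝ)^p} :=
    WellFounded.min_mem _ {a : S | dist x ↑a < (1/2 : ℝ)^p} _
  exact h

lemma sel_min (S : Set M) (hS : Dense S) (p : ℕ) (x : M) {a : S}
    (hax : dist x ↑a < (1/2 : ℝ)^p) : ¬ WellOrderingRel a (sel S hS p x) :=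
  WellFounded.not_lt_min _ {a : S | dist x ↑a < (1/2 : ℝ)^p} (x := a) hax

def good (S : Set M) (hS : Dense S) (p n : ℕ) (x : M) : Prop :=
  dist x ↑(sel S hS p x) + 3 * ((1/2 : ℝ)^n * (1/2 : ℝ)^p) ≤ (1/2 : ℝ)^p

def code2 {S : Set M} (code : S → Set ℕ) (a : S) : Set ℕ :=
  {m | ∃ k, (m = 2*k ∧ k ∈ code a) ∨ (m = 2*k+1 ∧ k ∉ code a)}

lemma code2_nonempty {S : Set M} (code : S → Set ℕ) (a : S) :
    ∃ j, j ∈ code2 code a := by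
  by_cases h : 0 ∈ code a
  · exact ⟨0, 0, Or.inl ⟨rfl, h⟩⟩
  · exact ⟨1, 0, Or.inr ⟨rfl, h⟩⟩

lemma code2_diff {S : Set M} (code : S ↪ Set ℕ) {a b : S} (h : a ≠ b) :
    ∃ j, j ∈ code2 (⇑code) a ∧ j ∉ code2 (⇑code) b := by
  have hab : code a ≠ code b := fun e => h (code.injective e)
  have hk : ∃ k, (k ∈ code a ∧ k ∉ code b) ∨ (k ∉ code a ∧ k ∈ code b) := by
    by_contra hk
    push_neg at hk
    apply hab
    ext k
    have := hk k
    tauto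
  obtain ⟨k, hk | hk⟩ := hk
  · refine ⟨2*k, ⟨k, Or.inl ⟨rfl, hk.1⟩⟩, ?_⟩
    rintro ⟨k', h' | h'⟩
    · obtain ⟨e, hk'⟩ := h'
      have : k' = k := by omega
      exact hk.2 (this ▸ hk')
    · omega
  · refine ⟨2*k+1, ⟨k, Or.inr ⟨rfl, hk.1⟩⟩, ?_⟩
    rintro ⟨k', h' | h'⟩
    · omega
    · obtain ⟨e, hk'⟩ := h'
      have : k' = k := by omega
      exact hk' (this ▸ hk.2)

def T (S : Set M) (hS : Dense S) (code : S → Set ℕ) (p n j : ℕ) : Set M :=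
  {z | ∃ x', good S hS p n x' ∧ j ∈ code2 code (sel S hS p x') ∧
      dist z x' < (1/2 : ℝ)^n * (1/2 : ℝ)^p}

/-- separation of pieces with different selected points -/
lemma piece_sep (S : Set M) (hS : Dense S) (p n : ℕ) {x₁ x₂ : M}
    (h₁ : good S hS p n x₁) (h₂ : good S hS p n x₂)
    (hne : sel S hS p x₁ ≠ sel S hS p x₂) :
    3 * ((1/2 : ℝ)^n * (1/2 : ℝ)^p) ≤ dist x₁ x₂ := by
  have key : ∀ y₁ y₂ : M, good S hS p n y₁ → good S hS p n y₂ →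
      WellOrderingRel (sel S hS p y₁) (sel S hS p y₂) →
      3 * ((1/2 : ℝ)^n * (1/2 : ℝ)^p) ≤ dist y₁ y₂ := by
    intro y₁ y₂ hg₁ hg₂ hr
    have hfar : ¬ dist y₂ ↑(sel S hS p y₁) < (1/2 : ℝ)^p := by
      intro hlt
      exact sel_min S hS p y₂ hlt hr
    push_neg at hfar
    have ht : dist y₂ ↑(sel S hS p y₁) ≤ dist y₂ y₁ + dist y₁ ↑(sel S hS p y₁) :=
      dist_triangle _ _ _
    have hc : dist y₂ y₁ = dist y₁ y₂ := dist_comm _ _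
    have hgy := hg₁
    unfold good at hgy
    linarith
  rcases trichotomous_of WellOrderingRel (sel S hS p x₁) (sel S hS p x₂) with h | h | h
  · exact key x₁ x₂ h₁ h₂ h
  · exact absurd h hne
  · rw [dist_comm]
    exact key x₂ x₁ h₂ h₁ h

end CMLS

open CMLS in
theorem countably_many_lipschitz_separating (M : Type*) [MetricSpace M]
    (hdens : ∃ D : Set M, Dense D ∧ #D ≤ Cardinal.continuum) :
    ∃ f : ℕ → M → ℝ, (∀ n, LipschitzWith 1 (f n)) ∧
      ∀ x y : M, x ≠ y → ∃ n, f n x ≠ f n y := by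
  classical
  obtain ⟨S, hS, hcard⟩ := hdens
  obtain ⟨code⟩ : Nonempty (↥S ↪ Set ℕ) := by
    refine Cardinal.lift_mk_le'.mp ?_
    have hSet : #(Set ℕ) = Cardinal.continuum := by
      rw [Cardinal.mk_set, Cardinal.mk_nat, Cardinal.two_power_aleph0]
    rw [hSet, Cardinal.lift_continuum]
    simpa using hcard
  set F : ℕ → M → ℝ := fun m x =>
    infDist x (T S hS (⇑code) m.unpair.1 m.unpair.2.unpair.1 m.unpair.2.unpair.2) with hF
  refine ⟨F, fun m => Metric.lipschitz_infDist_pt _, ?_⟩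
  intro x y hxy
  have hε : (0:ℝ) < dist x y := dist_pos.mpr hxy
  obtain ⟨p, hp⟩ := exists_pow_lt_of_lt_one (show (0:ℝ) < dist x y / 3 by linarith)
    (by norm_num : (1/2 : ℝ) < 1)
  have hδ : (0:ℝ) < (1/2 : ℝ)^p := pow_pos (by norm_num) p
  have hδ1 : (1/2 : ℝ)^p ≤ 1 := pow_le_one₀ (by norm_num) (by norm_num)
  have hxα := sel_mem S hS p x
  obtain ⟨n₀, hn₀⟩ := exists_pow_lt_of_lt_one
    (show (0:ℝ) < ((1/2:ℝ)^p - dist x ↑(sel S hS p x)) / 3 by linarith)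
    (by norm_num : (1/2 : ℝ) < 1)
  set n := n₀ + 1 with hn
  have hpow : (1/2 : ℝ)^n ≤ (1/2 : ℝ)^n₀ := by
    apply pow_le_pow_of_le_one (by norm_num) (by norm_num) (Nat.le_succ n₀)
  have hpown : (1/2 : ℝ)^n ≤ 1/2 := by
    calc (1/2 : ℝ)^n ≤ (1/2:ℝ)^1 :=
          pow_le_pow_of_le_one (by norm_num) (by norm_num) (by omega)
      _ = 1/2 := pow_one _
  set γ : ℝ := (1/2 : ℝ)^n * (1/2 : ℝ)^p with hγdef
  have hγpos : 0 < γ := mul_pos (pow_pos (by norm_num) n) hδ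
  have hγδ : γ ≤ (1/2:ℝ)^p / 2 := by
    rw [hγdef]
    nlinarith [hδ.le]
  have hgx : good S hS p n x := by
    show dist x ↑(sel S hS p x) + 3 * ((1/2 : ℝ)^n * (1/2 : ℝ)^p) ≤ (1/2 : ℝ)^p
    have h1 : (1/2 : ℝ)^n * (1/2 : ℝ)^p ≤ (1/2:ℝ)^n₀ := by
      nlinarith [pow_pos (show (0:ℝ) < 1/2 by norm_num) n, hδ.le]
    linarith
  -- obtain the bit j
  have hmain : ∃ j, j ∈ code2 (⇑code) (sel S hS p x) ∧
      ∀ x', good S hS p n x' → dist y x' < 3/2 * γ →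
        j ∉ code2 (⇑code) (sel S hS p x') := by
    by_cases hP : ∃ x', good S hS p n x' ∧ dist y x' < 3/2 * γ
    · obtain ⟨x₀, hg₀, hd₀⟩ := hP
      have hβα : sel S hS p x₀ ≠ sel S hS p x := by
        intro heq
        have h1 : dist x ↑(sel S hS p x) ≤ (1/2:ℝ)^p - 3*γ := by
          have := hgx; unfold good at this; rw [← hγdef] at this; linarith
        have h2 : dist x₀ ↑(sel S hS p x) ≤ (1/2:ℝ)^p - 3*γ := by
          have := hg₀; unfold good at this; rw [heq, ← hγdef] at this; linarith
        have ht : dist x x₀ ≤ dist x ↑(sel S hS p x) + dist x₀ ↑(sel S hS p x) :=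
          dist_triangle_right _ _ _
        have ht2 : dist x y ≤ dist x x₀ + dist x₀ y := dist_triangle _ _ _
        have hc : dist x₀ y = dist y x₀ := dist_comm _ _
        linarith
      obtain ⟨j, hj1, hj2⟩ := code2_diff code hβα.symm
      refine ⟨j, hj1, ?_⟩
      intro x' hg' hd'
      have hsel : sel S hS p x' = sel S hS p x₀ := by
        by_contra hne'
        have h3 := piece_sep S hS p n hg' hg₀ hne'
        have ht : dist x' x₀ ≤ dist x' y + dist y x₀ := dist_triangle _ _ _
        have hc : dist x' y = dist y x' := dist_comm _ _
        rw [← hγdef] at h3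
        linarith
      rw [hsel]
      exact hj2
    · obtain ⟨j, hj⟩ := code2_nonempty (⇑code) (sel S hS p x)
      exact ⟨j, hj, fun x' hg' hd' _ => hP ⟨x', hg', hd'⟩⟩
  obtain ⟨j, hj1, hj2⟩ := hmain
  refine ⟨Nat.pair p (Nat.pair n j), ?_⟩
  have hTx : x ∈ T S hS (⇑code) p n j := by
    refine ⟨x, hgx, hj1, ?_⟩
    rw [dist_self, ← hγdef]
    exact hγpos
  have h0 : infDist x (T S hS (⇑code) p n j) = 0 := infDist_zero_of_mem hTx
  have hy2 : γ/2 ≤ infDist y (T S hS (⇑code) p n j) := by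
    by_contra hlt
    push_neg at hlt
    rw [infDist_lt_iff ⟨x, hTx⟩] at hlt
    obtain ⟨z, ⟨x', hg', hj', hzx'⟩, hyz⟩ := hlt
    have hyx' : dist y x' < 3/2 * γ := by
      have ht : dist y x' ≤ dist y z + dist z x' := dist_triangle _ _ _
      rw [← hγdef] at hzx'
      linarith
    exact hj2 x' hg' hyx' hj'
  rw [hF]
  simp only [Nat.unpair_pair]
  intro heq
  rw [h0] at heq
  linarith [hγpos, heq ▸ hy2]
end

section
/- Let X be a nonzero real Banach space and let κ be the maximum of ℵ₀ and the density character of X. Then the set B = {f : X* → ℝ : f is 1-Lipschitz and f(0)=0} of 1-Lipschitz functions on the continuous dual X* (with its dual norm) vanishing at 0 has a subset of cardinality at most κ which is dense in B for the topology of pointwise convergence (the topology inherited from the product topology on X* → ℝ). -/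
open Cardinal

/-- The density character of a topological space: the smallest cardinality of a dense subset. -/
noncomputable def densityChar (M : Type*) [TopologicalSpace M] : Cardinal :=
  sInf {c : Cardinal | ∃ s : Set M, Dense s ∧ #s = c}

section aux

variable {X : Type*} [NormedAddCommGroup X] [NormedSpace ℝ X]

/-- Evaluation at a normalized vector. -/
noncomputable def evalN (d : X) (φ : StrongDual ℝ X) : ℝ := φ ((max 1 ‖d‖)⁻¹ • d)

lemma lip_evalN (d : X) : LipschitzWith 1 (evalN (X := X) d) := by
  have hnorm : ‖(max 1 ‖d‖)⁻¹ • d‖ ≤ 1 := by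
    rw [norm_smul, norm_inv, Real.norm_eq_abs, abs_of_pos (lt_of_lt_of_le one_pos (le_max_left _ _))]
    rw [inv_mul_le_iff₀ (lt_of_lt_of_le one_pos (le_max_left _ _))]
    simpa using le_max_right 1 ‖d‖
  apply LipschitzWith.of_dist_le_mul
  intro φ ψ
  rw [NNReal.coe_one, one_mul]
  have := ((φ - ψ) : StrongDual ℝ X).le_opNorm ((max 1 ‖d‖)⁻¹ • d)
  simp only [ContinuousLinearMap.sub_apply] at this
  calc dist (evalN d φ) (evalN d ψ) = ‖φ ((max 1 ‖d‖)⁻¹ • d) - ψ ((max 1 ‖d‖)⁻¹ • d)‖ := by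
        simp [evalN, dist_eq_norm]
    _ ≤ ‖φ - ψ‖ * ‖(max 1 ‖d‖)⁻¹ • d‖ := this
    _ ≤ ‖φ - ψ‖ * 1 := by
        exact mul_le_mul_of_nonneg_left hnorm (norm_nonneg _)
    _ = dist φ ψ := by rw [mul_one, dist_eq_norm]

lemma evalN_of_norm_le {d : X} (hd : ‖d‖ ≤ 1) (φ : StrongDual ℝ X) :
    evalN d φ = φ d := by
  simp [evalN, max_eq_left hd]

noncomputable def dfun (L : List (ℚ × X)) (φ : StrongDual ℝ X) : ℝ :=
  (L.map fun p => evalN p.2 φ - (p.1 : ℝ)).foldr max 0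

noncomputable def hfun (M : List (ℚ × List (ℚ × X))) (φ : StrongDual ℝ X) : ℝ :=
  (M.map fun p => (p.1 : ℝ) + dfun p.2 φ).foldr min ‖φ‖

noncomputable def gfun (M : List (ℚ × List (ℚ × X))) (φ : StrongDual ℝ X) : ℝ :=
  hfun M φ - hfun M 0

-- fold lemmas
lemma foldr_max_le {l : List ℝ} {b c : ℝ} (hb : b ≤ c) (h : ∀ x ∈ l, x ≤ c) :
    l.foldr max b ≤ c := by
  induction l with
  | nil => simpa
  | cons a l ih =>
      simp only [List.foldr_cons]
      exact max_le (h a (by simp)) (ih fun x hx => h x (by simp [hx]))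

lemma le_foldr_max {l : List ℝ} {b x : ℝ} (hx : x ∈ l) : x ≤ l.foldr max b := by
  induction l with
  | nil => simp at hx
  | cons a l ih =>
      simp only [List.foldr_cons]
      rcases List.mem_cons.1 hx with h | h
      · exact h ▸ le_max_left _ _
      · exact le_trans (ih h) (le_max_right _ _)

lemma base_le_foldr_max {l : List ℝ} {b : ℝ} : b ≤ l.foldr max b := by
  induction l with
  | nil => simp
  | cons a l ih => exact le_trans ih (le_max_right _ _)

lemma le_foldr_min {l : List ℝ} {b c : ℝ} (hb : c ≤ b) (h : ∀ x ∈ l, c ≤ x) :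
    c ≤ l.foldr min b := by
  induction l with
  | nil => simpa
  | cons a l ih =>
      simp only [List.foldr_cons]
      exact le_min (h a (by simp)) (ih fun x hx => h x (by simp [hx]))

lemma foldr_min_le {l : List ℝ} {b x : ℝ} (hx : x ∈ l) : l.foldr min b ≤ x := by
  induction l with
  | nil => simp at hx
  | cons a l ih =>
      simp only [List.foldr_cons]
      rcases List.mem_cons.1 hx with h | h
      · exact h ▸ min_le_left _ _
      · exact le_trans (min_le_right _ _) (ih h)

lemma foldr_min_le_base {l : List ℝ} {b : ℝ} : l.foldr min b ≤ b := by
  induction l with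
  | nil => simp
  | cons a l ih => exact le_trans (min_le_right _ _) ih

lemma lip_dfun (L : List (ℚ × X)) : LipschitzWith 1 (dfun L) := by
  induction L with
  | nil => exact (LipschitzWith.const' (0 : ℝ) (K := 1))
  | cons p L ih =>
      have h1 : LipschitzWith 1 (fun φ : StrongDual ℝ X => evalN p.2 φ - (p.1 : ℝ)) := by
        apply LipschitzWith.of_dist_le_mul
        intro φ ψ
        simpa [Real.dist_eq, one_mul] using
          (LipschitzWith.dist_le_mul (lip_evalN p.2) φ ψ).trans_eq (one_mul _)
      have : dfun (p :: L) = fun φ => max (evalN p.2 φ - (p.1 : ℝ)) (dfun L φ) := by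
        funext φ; simp [dfun]
      rw [this]
      simpa using h1.max ih

lemma lip_hfun (M : List (ℚ × List (ℚ × X))) : LipschitzWith 1 (hfun M) := by
  induction M with
  | nil =>
      have : hfun (X := X) [] = fun φ => ‖φ‖ := by funext φ; simp [hfun]
      rw [this]; exact lipschitzWith_one_norm
  | cons p M ih =>
      have h1 : LipschitzWith 1 (fun φ : StrongDual ℝ X => (p.1 : ℝ) + dfun p.2 φ) := by
        apply LipschitzWith.of_dist_le_mul
        intro φ ψ
        simpa [Real.dist_eq, one_mul] using
          (LipschitzWith.dist_le_mul (lip_dfun p.2) φ ψ).trans_eq (one_mul _)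
      have : hfun (p :: M) = fun φ => min ((p.1 : ℝ) + dfun p.2 φ) (hfun M φ) := by
        funext φ; simp [hfun]
      rw [this]
      simpa using h1.min ih

lemma lip_gfun (M : List (ℚ × List (ℚ × X))) : LipschitzWith 1 (gfun M) := by
  apply LipschitzWith.of_dist_le_mul
  intro φ ψ
  have := LipschitzWith.dist_le_mul (lip_hfun M) φ ψ
  simpa [gfun, Real.dist_eq, sub_sub_sub_cancel_right] using this

lemma gfun_zero (M : List (ℚ × List (ℚ × X))) : gfun M 0 = 0 := sub_self _

end aux
section aux2
variable {X : Type*} [NormedAddCommGroup X] [NormedSpace ℝ X]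

lemma norming (ψ : StrongDual ℝ X) {δ : ℝ} (hδ : 0 < δ) :
    ∃ x : X, ‖x‖ ≤ 1 ∧ ‖ψ‖ - δ ≤ ψ x := by
  by_contra h
  push_neg at h
  have h0 : (0:ℝ) < ‖ψ‖ - δ := by
    have := h 0 (by simp)
    simpa using this
  have hb : ∀ x ∈ Metric.ball (0:X) 1, ‖ψ x‖ ≤ (‖ψ‖ - δ) * ‖x‖ := by
    intro x hx
    rcases eq_or_ne x 0 with rfl | hxne
    · simp
    · have hxn : (0:ℝ) < ‖x‖ := norm_pos_iff.2 hxne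
      have h1 : ψ (‖x‖⁻¹ • x) < ‖ψ‖ - δ := h _ (by
        rw [norm_smul, norm_inv, norm_norm, inv_mul_cancel₀ hxn.ne'])
      have h2 : ψ (‖x‖⁻¹ • (-x)) < ‖ψ‖ - δ := h _ (by
        rw [norm_smul, norm_inv, norm_norm, norm_neg, inv_mul_cancel₀ hxn.ne'])
      rw [map_smul, smul_eq_mul] at h1
      rw [map_smul, smul_eq_mul, map_neg] at h2
      have e1 := mul_lt_mul_of_pos_left h1 hxn
      have e2 := mul_lt_mul_of_pos_left h2 hxn
      rw [← mul_assoc, mul_inv_cancel₀ hxn.ne', one_mul] at e1 e2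
      rw [Real.norm_eq_abs, abs_le]
      constructor <;> nlinarith
  have := ContinuousLinearMap.opNorm_le_of_ball one_pos h0.le hb
  linarith

end aux2
section aux3
variable {X : Type*} [NormedAddCommGroup X] [NormedSpace ℝ X]

lemma dense_pick (Dset : Set X) (hD : Dense Dset) {η : ℝ} (hη : 0 < η) (x : X) (hx : ‖x‖ ≤ 1) :
    ∃ d ∈ Dset, ‖d‖ ≤ 1 ∧ ‖d - x‖ ≤ η := by
  set t : ℝ := min (η / 2) 1 with ht
  have ht0 : 0 < t := lt_min (by linarith) one_pos
  have ht1 : t ≤ 1 := min_le_right _ _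
  have htη : t ≤ η / 2 := min_le_left _ _
  obtain ⟨d, hdball, hdmem⟩ := Metric.dense_iff.1 hD ((1 - t) • x) t ht0
  refine ⟨d, hdmem, ?_, ?_⟩
  · have h1 : ‖d - (1 - t) • x‖ < t := by
      rw [← dist_eq_norm]; exact hdball
    have h2 : ‖(1 - t) • x‖ ≤ 1 - t := by
      rw [norm_smul, Real.norm_eq_abs, abs_of_nonneg (by linarith)]
      nlinarith [norm_nonneg x]
    calc ‖d‖ ≤ ‖d - (1 - t) • x‖ + ‖(1 - t) • x‖ := by
          simpa using norm_add_le (d - (1 - t) • x) ((1 - t) • x)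
      _ ≤ t + (1 - t) := by linarith
      _ = 1 := by ring
  · have h1 : ‖d - (1 - t) • x‖ < t := by
      rw [← dist_eq_norm]; exact hdball
    have h2 : ‖(1 - t) • x - x‖ ≤ t := by
      have : (1 - t) • x - x = (-t) • x := by
        rw [sub_smul, one_smul, neg_smul]; abel
      rw [this, norm_smul, Real.norm_eq_abs, abs_neg, abs_of_nonneg ht0.le]
      nlinarith [norm_nonneg x]
    calc ‖d - x‖ ≤ ‖d - (1 - t) • x‖ + ‖(1 - t) • x - x‖ := by
          simpa using norm_add_le (d - (1 - t) • x) ((1 - t) • x - x)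
      _ ≤ t + t := by linarith
      _ ≤ η := by linarith

end aux3
section aux4
variable {X : Type*} [NormedAddCommGroup X] [NormedSpace ℝ X]

lemma approx (Dset : Set X) (hD : Dense Dset)
    (f : StrongDual ℝ X → ℝ) (hf : LipschitzWith 1 f) (hf0 : f 0 = 0)
    (J : Finset (StrongDual ℝ X)) {ε : ℝ} (hε : 0 < ε) :
    ∃ t : List (ℚ × List (ℚ × X)), (∀ p ∈ t, ∀ s ∈ p.2, s.2 ∈ Dset) ∧
      ∀ z ∈ J, |gfun t z - f z| < ε := by
  classical
  set K : Finset (StrongDual ℝ X) := insert 0 J with hK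
  have h0K : (0 : StrongDual ℝ X) ∈ K := Finset.mem_insert_self _ _
  set δ : ℝ := ε / 10 with hδdef
  have hδ : 0 < δ := by positivity
  set R : ℝ := 1 + ∑ y ∈ K, ∑ z ∈ K, ‖z - y‖ with hR
  have hRpos : 0 < R := by
    have : (0:ℝ) ≤ ∑ y ∈ K, ∑ z ∈ K, ‖z - y‖ :=
      Finset.sum_nonneg fun y _ => Finset.sum_nonneg fun z _ => norm_nonneg _
    linarith
  have hRb : ∀ y ∈ K, ∀ z ∈ K, ‖z - y‖ ≤ R := by
    intro y hy z hz
    have h1 : ‖z - y‖ ≤ ∑ w ∈ K, ‖w - y‖ :=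
      Finset.single_le_sum (f := fun w => ‖w - y‖) (fun i _ => norm_nonneg _) hz
    have h2 : (∑ w ∈ K, ‖w - y‖) ≤ ∑ y ∈ K, ∑ z ∈ K, ‖z - y‖ :=
      Finset.single_le_sum (f := fun u => ∑ w ∈ K, ‖w - u‖)
        (fun i _ => Finset.sum_nonneg fun w _ => norm_nonneg _) hy
    linarith
  set η : ℝ := δ / R with hη
  have hηpos : 0 < η := by positivity
  -- choices
  have hqe : ∀ y : StrongDual ℝ X, ∃ q : ℚ, |f y - q| < δ :=
    fun y => exists_rat_near (f y) hδ
  choose q hq using hqe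
  have hxe : ∀ y z : StrongDual ℝ X, ∃ x : X, ‖x‖ ≤ 1 ∧ ‖z - y‖ - δ ≤ (z - y) x :=
    fun y z => norming (z - y) hδ
  choose xv hx1 hx2 using hxe
  have hde : ∀ y z : StrongDual ℝ X, ∃ d ∈ Dset, ‖d‖ ≤ 1 ∧ ‖d - xv y z‖ ≤ η :=
    fun y z => dense_pick Dset hD hηpos (xv y z) (hx1 y z)
  choose dv hdmem hdn hdx using hde
  have hre : ∀ y z : StrongDual ℝ X, ∃ r : ℚ, |y (dv y z) - r| < δ :=
    fun y z => exists_rat_near _ hδ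
  choose rv hr using hre
  set Lf : StrongDual ℝ X → List (ℚ × X) :=
    fun y => K.toList.map (fun z => (rv y z, dv y z)) with hLf
  set t : List (ℚ × List (ℚ × X)) := K.toList.map (fun y => (q y, Lf y)) with htdef
  refine ⟨t, ?_, ?_⟩
  · intro p hp s hs
    rw [htdef, List.mem_map] at hp
    obtain ⟨y, _, rfl⟩ := hp
    simp only [hLf, List.mem_map] at hs
    obtain ⟨z, _, rfl⟩ := hs
    exact hdmem y z
  -- upper bound on dfun
  have E2 : ∀ (y : StrongDual ℝ X) (φ : StrongDual ℝ X),
      dfun (Lf y) φ ≤ ‖φ - y‖ + δ := by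
    intro y φ
    apply foldr_max_le (by positivity)
    intro v hv
    rw [hLf, List.map_map, List.mem_map] at hv
    obtain ⟨z, _, rfl⟩ := hv
    simp only [Function.comp]
    rw [evalN_of_norm_le (hdn y z)]
    have h1 : φ (dv y z) - y (dv y z) ≤ ‖φ - y‖ := by
      have := (φ - y).le_opNorm (dv y z)
      rw [ContinuousLinearMap.sub_apply] at this
      have h2 : ‖φ - y‖ * ‖dv y z‖ ≤ ‖φ - y‖ * 1 :=
        mul_le_mul_of_nonneg_left (hdn y z) (norm_nonneg _)
      calc φ (dv y z) - y (dv y z) ≤ ‖φ (dv y z) - y (dv y z)‖ := (le_abs_self _).trans_eq (Real.norm_eq_abs _).symm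
        _ ≤ ‖φ - y‖ * ‖dv y z‖ := this
        _ ≤ ‖φ - y‖ := by linarith
    have h3 := abs_lt.1 (hr y z)
    linarith
  -- lower bound on dfun at points of K
  have E3 : ∀ y ∈ K, ∀ z ∈ K, ‖z - y‖ - 3 * δ ≤ dfun (Lf y) z := by
    intro y hy z hz
    have hmem : (z : StrongDual ℝ X) (dv y z) - (rv y z : ℝ) ∈
        ((Lf y).map fun p => evalN p.2 z - (p.1 : ℝ)) := by
      rw [hLf, List.map_map, List.mem_map]
      refine ⟨z, Finset.mem_toList.2 hz, ?_⟩
      simp only [Function.comp]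
      rw [evalN_of_norm_le (hdn y z)]
    have key : ‖z - y‖ - 3 * δ ≤ z (dv y z) - (rv y z : ℝ) := by
      have h1 : ‖z - y‖ - δ ≤ (z - y) (xv y z) := hx2 y z
      have h2 : |(z - y) (dv y z) - (z - y) (xv y z)| ≤ R * η := by
        have e : (z - y) (dv y z) - (z - y) (xv y z) = (z - y) (dv y z - xv y z) := by
          rw [map_sub]
        rw [e]
        calc |(z - y) (dv y z - xv y z)| ≤ ‖z - y‖ * ‖dv y z - xv y z‖ := by
              simpa [Real.norm_eq_abs] using (z - y).le_opNorm (dv y z - xv y z)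
          _ ≤ R * η := mul_le_mul (hRb y hy z hz) (hdx y z) (norm_nonneg _) hRpos.le
      have hRη : R * η = δ := by
        rw [hη]; field_simp
      have h3 : ‖z - y‖ - 2 * δ ≤ (z - y) (dv y z) := by
        have := abs_le.1 h2
        rw [hRη] at this
        linarith [this.1]
      have h4 : (z - y) (dv y z) = z (dv y z) - y (dv y z) := by
        rw [ContinuousLinearMap.sub_apply]
      have h5 := abs_lt.1 (hr y z)
      linarith
    exact le_trans key (le_foldr_max hmem)
  -- bounds on hfun at points of K
  have E4 : ∀ z ∈ K, hfun t z ≤ f z + 2 * δ := by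
    intro z hz
    have hmem : (q z : ℝ) + dfun (Lf z) z ∈ (t.map fun p => (p.1 : ℝ) + dfun p.2 z) := by
      rw [htdef, List.map_map, List.mem_map]
      exact ⟨z, Finset.mem_toList.2 hz, rfl⟩
    have h1 : dfun (Lf z) z ≤ δ := by
      have := E2 z z
      rw [sub_self, norm_zero, zero_add] at this
      exact this
    have h2 := abs_lt.1 (hq z)
    calc hfun t z ≤ (q z : ℝ) + dfun (Lf z) z := foldr_min_le hmem
      _ ≤ f z + 2 * δ := by linarith
  have E5 : ∀ z ∈ K, f z - 4 * δ ≤ hfun t z := by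
    intro z hz
    apply le_foldr_min
    · -- base : f z - 4δ ≤ ‖z‖
      have h1 : |f z - f 0| ≤ ‖z - 0‖ := by
        have := hf.dist_le_mul z 0
        simpa [Real.dist_eq, dist_eq_norm] using this
      rw [hf0, sub_zero, sub_zero] at h1
      have := (abs_le.1 h1).2
      linarith
    · intro v hv
      rw [htdef, List.map_map, List.mem_map] at hv
      obtain ⟨y, hy, rfl⟩ := hv
      have hyK : y ∈ K := Finset.mem_toList.1 hy
      simp only [Function.comp]
      have h1 := E3 y hyK z hz
      have h2 := abs_lt.1 (hq y)
      have h3 : |f z - f y| ≤ ‖z - y‖ := by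
        have := hf.dist_le_mul z y
        simpa [Real.dist_eq, dist_eq_norm] using this
      have := (abs_le.1 h3).2
      linarith
  -- conclude
  intro z hz
  have hzK : z ∈ K := Finset.mem_insert_of_mem hz
  have b1 := E4 z hzK
  have b2 := E5 z hzK
  have b3 := E4 0 h0K
  have b4 := E5 0 h0K
  rw [hf0] at b3 b4
  rw [gfun, abs_lt]
  constructor <;> [nlinarith; nlinarith]

end aux4
section final
variable {X : Type*} [NormedAddCommGroup X] [NormedSpace ℝ X]

lemma lift_inner (Dset : Set X) : ∀ (L : List (ℚ × X)), (∀ s ∈ L, s.2 ∈ Dset) →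
    ∃ L' : List (ℚ × Dset), L'.map (fun s => (s.1, (s.2 : X))) = L := by
  intro L
  induction L with
  | nil => exact fun _ => ⟨[], rfl⟩
  | cons a L ih =>
      intro h
      obtain ⟨L', hL'⟩ := ih fun s hs => h s (by simp [hs])
      exact ⟨(a.1, ⟨a.2, h a (by simp)⟩) :: L', by simp [hL']⟩

lemma lift_outer (Dset : Set X) : ∀ (t : List (ℚ × List (ℚ × X))),
    (∀ p ∈ t, ∀ s ∈ p.2, s.2 ∈ Dset) →
    ∃ u : List (ℚ × List (ℚ × Dset)),
      u.map (fun p => (p.1, p.2.map fun s => (s.1, (s.2 : X)))) = t := by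
  intro t
  induction t with
  | nil => exact fun _ => ⟨[], rfl⟩
  | cons a t ih =>
      intro h
      obtain ⟨u, hu⟩ := ih fun p hp => h p (by simp [hp])
      obtain ⟨L', hL'⟩ := lift_inner Dset a.2 (h a (by simp))
      exact ⟨(a.1, L') :: u, by simp [hu, hL']⟩

end final


theorem dual_ball_lip_pointwise_density (X : Type*) [NormedAddCommGroup X]
    [NormedSpace ℝ X] [CompleteSpace X] [Nontrivial X] :
    ∃ S ⊆ {f : StrongDual ℝ X → ℝ | LipschitzWith 1 f ∧ f 0 = 0},
      #S ≤ max Cardinal.aleph0 (densityChar X) ∧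
      ∀ f ∈ {f : StrongDual ℝ X → ℝ | LipschitzWith 1 f ∧ f 0 = 0},
        f ∈ closure S := by
  classical
  obtain ⟨Dset, hDdense, hDcard⟩ : ∃ s : Set X, Dense s ∧ #s = densityChar X := by
    have hne : {c : Cardinal | ∃ s : Set X, Dense s ∧ #s = c}.Nonempty :=
      ⟨#(Set.univ : Set X), Set.univ, dense_univ, rfl⟩
    exact csInf_mem hne
  set S : Set (StrongDual ℝ X → ℝ) :=
    {g | ∃ t : List (ℚ × List (ℚ × X)), (∀ p ∈ t, ∀ s ∈ p.2, s.2 ∈ Dset) ∧ g = gfun t}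
    with hS
  have hSsub : S ⊆ {f : StrongDual ℝ X → ℝ | LipschitzWith 1 f ∧ f 0 = 0} := by
    rintro g ⟨t, -, rfl⟩
    exact ⟨lip_gfun t, gfun_zero t⟩
  refine ⟨S, hSsub, ?_, ?_⟩
  · -- cardinality
    set κ := max Cardinal.aleph0 (densityChar X) with hκ
    have h0 : ℵ₀ ≤ κ := le_max_left _ _
    have hD : #Dset ≤ κ := hDcard ▸ le_max_right _ _
    set F : List (ℚ × List (ℚ × Dset)) → (StrongDual ℝ X → ℝ) :=
      fun u => gfun (u.map (fun p => (p.1, p.2.map fun s => (s.1, (s.2 : X))))) with hF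
    have hrange : S ⊆ Set.range F := by
      rintro g ⟨t, ht, rfl⟩
      obtain ⟨u, hu⟩ := lift_outer Dset t ht
      exact ⟨u, by rw [hF]; simp only [hu]⟩
    have c1 : #(ℚ × Dset) ≤ κ := by
      rw [Cardinal.mk_prod]
      have h1 : Cardinal.lift #ℚ = ℵ₀ := by simp [Cardinal.mk_eq_aleph0]
      rw [h1, Cardinal.lift_id']
      calc ℵ₀ * #Dset ≤ κ * κ := mul_le_mul' h0 hD
        _ = κ := Cardinal.mul_eq_self h0
    have c2 : #(List (ℚ × Dset)) ≤ κ := (Cardinal.mk_list_le_max _).trans (max_le h0 c1)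
    have c3 : #(ℚ × List (ℚ × Dset)) ≤ κ := by
      rw [Cardinal.mk_prod]
      have h1 : Cardinal.lift #ℚ = ℵ₀ := by simp [Cardinal.mk_eq_aleph0]
      rw [h1, Cardinal.lift_id']
      calc ℵ₀ * #(List (ℚ × Dset)) ≤ κ * κ := mul_le_mul' h0 c2
        _ = κ := Cardinal.mul_eq_self h0
    have c4 : #(List (ℚ × List (ℚ × Dset))) ≤ κ :=
      (Cardinal.mk_list_le_max _).trans (max_le h0 c3)
    calc #S ≤ #(Set.range F) := Cardinal.mk_le_mk_of_subset hrange
      _ ≤ #(List (ℚ × List (ℚ × Dset))) := Cardinal.mk_range_le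
      _ ≤ κ := c4
  · -- density
    rintro f ⟨hf, hf0⟩
    rw [mem_closure_iff_nhds]
    intro U hU
    rw [nhds_pi, Filter.mem_pi] at hU
    obtain ⟨I, hIfin, V, hV, hVsub⟩ := hU
    choose εf hεf hball using fun i => Metric.mem_nhds_iff.1 (hV i)
    set J : Finset (StrongDual ℝ X) := hIfin.toFinset with hJ
    rcases J.eq_empty_or_nonempty with hJe | hJne
    · refine ⟨gfun [], ?_, [], by simp, rfl⟩
      apply hVsub
      have : I = ∅ := by
        rw [hJ] at hJe
        exact Set.Finite.toFinset_eq_empty.1 hJe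
      rw [this]
      simp
    · set ε : ℝ := J.inf' hJne εf with hε
      have hεpos : 0 < ε := by
        rw [hε, Finset.lt_inf'_iff]
        intro i _
        exact hεf i
      obtain ⟨t, hmem, hclose⟩ := approx Dset hDdense f hf hf0 J hεpos
      refine ⟨gfun t, ?_, t, hmem, rfl⟩
      apply hVsub
      intro i hi
      have hiJ : i ∈ J := hIfin.mem_toFinset.2 hi
      apply hball i
      have h1 : |gfun t i - f i| < ε := hclose i hiJ
      have h2 : ε ≤ εf i := Finset.inf'_le _ hiJ
      rw [Metric.mem_ball, Real.dist_eq]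
      linarith [abs_lt.1 h1]
end

section
/- Let X be a real Banach space and let κ be an infinite cardinal. Suppose the closed unit ball of the dual of X has a weak*-dense subset of cardinality at most κ, i.e., there is a set D of continuous linear functionals on X of norm at most 1, with |D| ≤ κ, such that every norm-at-most-1 functional is a weak* limit point of D (D is dense in the unit ball of WeakDual ℝ X). Then the set B = {f : X → ℝ : f is 1-Lipschitz and f(0)=0} has a subset of cardinality at most κ which is dense in B for the topology of pointwise convergence (inherited from the product topology on X → ℝ). -/
open Cardinal

section AuxLip

lemma aux_sup'_le {ι : Type*} (s : Finset ι) (hs : s.Nonempty) (u v : ι → ℝ) (r : ℝ)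
    (h : ∀ i ∈ s, u i ≤ v i + r) : s.sup' hs u ≤ s.sup' hs v + r :=
  Finset.sup'_le _ _ fun i hi => (h i hi).trans ((add_le_add_iff_right r).2 (Finset.le_sup' v hi))

lemma aux_inf'_le {ι : Type*} (s : Finset ι) (hs : s.Nonempty) (u v : ι → ℝ) (r : ℝ)
    (h : ∀ i ∈ s, u i ≤ v i + r) : s.inf' hs u ≤ s.inf' hs v + r := by
  obtain ⟨i, hi, hvi⟩ := Finset.exists_mem_eq_inf' hs v
  calc s.inf' hs u ≤ u i := Finset.inf'_le _ hi
  _ ≤ v i + r := h i hi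
  _ = s.inf' hs v + r := by rw [hvi]

lemma aux_abs_sup'_sub {ι : Type*} (s : Finset ι) (hs : s.Nonempty) (u v : ι → ℝ) (r : ℝ)
    (h : ∀ i ∈ s, |u i - v i| ≤ r) : |s.sup' hs u - s.sup' hs v| ≤ r := by
  have h1 := aux_sup'_le s hs u v r fun i hi => by linarith [(abs_sub_le_iff.1 (h i hi)).1]
  have h2 := aux_sup'_le s hs v u r fun i hi => by linarith [(abs_sub_le_iff.1 (h i hi)).2]
  rw [abs_sub_le_iff]; constructor <;> linarith

lemma aux_abs_inf'_sub {ι : Type*} (s : Finset ι) (hs : s.Nonempty) (u v : ι → ℝ) (r : ℝ)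
    (h : ∀ i ∈ s, |u i - v i| ≤ r) : |s.inf' hs u - s.inf' hs v| ≤ r := by
  have h1 := aux_inf'_le s hs u v r fun i hi => by linarith [(abs_sub_le_iff.1 (h i hi)).1]
  have h2 := aux_inf'_le s hs v u r fun i hi => by linarith [(abs_sub_le_iff.1 (h i hi)).2]
  rw [abs_sub_le_iff]; constructor <;> linarith

lemma aux_lip_sup' {ι X : Type*} [PseudoMetricSpace X] (s : Finset ι) (hs : s.Nonempty)
    (u : ι → X → ℝ) (h : ∀ i ∈ s, LipschitzWith 1 (u i)) :
    LipschitzWith 1 (fun x => s.sup' hs (fun i => u i x)) := by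
  apply LipschitzWith.of_dist_le_mul
  intro x y
  rw [Real.dist_eq, NNReal.coe_one, one_mul]
  exact aux_abs_sup'_sub s hs _ _ _ fun i hi => by
    simpa [Real.dist_eq] using (h i hi).dist_le_mul x y

lemma aux_lip_inf' {ι X : Type*} [PseudoMetricSpace X] (s : Finset ι) (hs : s.Nonempty)
    (u : ι → X → ℝ) (h : ∀ i ∈ s, LipschitzWith 1 (u i)) :
    LipschitzWith 1 (fun x => s.inf' hs (fun i => u i x)) := by
  apply LipschitzWith.of_dist_le_mul
  intro x y
  rw [Real.dist_eq, NNReal.coe_one, one_mul]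
  exact aux_abs_inf'_sub s hs _ _ _ fun i hi => by
    simpa [Real.dist_eq] using (h i hi).dist_le_mul x y

lemma aux_lip_sub_const {X : Type*} [PseudoMetricSpace X] {L : X → ℝ} (hL : LipschitzWith 1 L)
    (c : ℝ) : LipschitzWith 1 (fun x => L x - c) := by
  apply LipschitzWith.of_dist_le_mul
  intro x y
  have := hL.dist_le_mul x y
  simpa [Real.dist_eq, sub_sub_sub_cancel_right] using this

lemma aux_exists_dual {X : Type*} [NormedAddCommGroup X] [NormedSpace ℝ X] (x y : X) (a b : ℝ)
    (h : |a - b| ≤ ‖x - y‖) : ∃ φ : StrongDual ℝ X, ‖φ‖ ≤ 1 ∧ φ x - φ y = a - b := by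
  by_cases hxy : x = y
  · subst hxy
    have h0 : |a - b| ≤ 0 := by simpa using h
    have : a - b = 0 := abs_eq_zero.1 (le_antisymm h0 (abs_nonneg _))
    exact ⟨0, by simp, by simpa using this.symm⟩
  · have hx : x - y ≠ 0 := sub_ne_zero.2 hxy
    have hn : (0:ℝ) < ‖x - y‖ := norm_pos_iff.2 hx
    obtain ⟨g, hg1, hgx⟩ := exists_dual_vector ℝ (x - y) (norm_ne_zero_iff.2 hx)
    refine ⟨((a - b) / ‖x - y‖) • g, ?_, ?_⟩
    · rw [norm_smul, hg1, mul_one, Real.norm_eq_abs, abs_div, abs_of_pos hn]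
      exact div_le_one_of_le₀ h hn.le
    · simp only [ContinuousLinearMap.smul_apply, smul_eq_mul]
      rw [← mul_sub, ← map_sub, hgx]
      field_simp
      rfl

lemma aux_lip_dual {X : Type*} [NormedAddCommGroup X] [NormedSpace ℝ X]
    (φ : StrongDual ℝ X) (hφ : ‖φ‖ ≤ 1) (c : ℝ) :
    LipschitzWith 1 (fun z => φ z + c) := by
  apply LipschitzWith.of_dist_le_mul
  intro z w
  rw [Real.dist_eq, NNReal.coe_one, one_mul, dist_eq_norm]
  have h1 : (φ z + c) - (φ w + c) = φ (z - w) := by rw [map_sub]; ring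
  rw [h1, ← Real.norm_eq_abs]
  calc ‖φ (z - w)‖ ≤ ‖φ‖ * ‖z - w‖ := φ.le_opNorm _
  _ ≤ 1 * ‖z - w‖ := mul_le_mul_of_nonneg_right hφ (norm_nonneg _)
  _ = ‖z - w‖ := one_mul _

noncomputable def latFun {X : Type*} (n : ℕ) (h : Fin (n+1) → Fin (n+1) → X → ℝ) (x : X) : ℝ :=
  Finset.univ.sup' Finset.univ_nonempty fun i =>
    Finset.univ.inf' Finset.univ_nonempty fun j => h i j x

lemma latFun_lip {X : Type*} [PseudoMetricSpace X] (n : ℕ) (h : Fin (n+1) → Fin (n+1) → X → ℝ)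
    (hl : ∀ i j, LipschitzWith 1 (h i j)) : LipschitzWith 1 (latFun n h) :=
  aux_lip_sup' _ _ (fun i x => Finset.univ.inf' Finset.univ_nonempty fun j => h i j x)
    (fun i _ => aux_lip_inf' _ _ _ fun j _ => hl i j)

lemma latFun_abs_sub {X : Type*} (n : ℕ) (h h' : Fin (n+1) → Fin (n+1) → X → ℝ) (x : X) (r : ℝ)
    (hle : ∀ i j, |h i j x - h' i j x| ≤ r) : |latFun n h x - latFun n h' x| ≤ r :=
  aux_abs_sup'_sub _ _ _ _ _ fun i _ => aux_abs_inf'_sub _ _ _ _ _ fun j _ => hle i j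

end AuxLip

theorem lip_ball_pointwise_density_of_weakStar_dense_ball (X : Type*)
    [NormedAddCommGroup X] [NormedSpace ℝ X] [CompleteSpace X]
    (κ : Cardinal) (hκ : Cardinal.aleph0 ≤ κ)
    (D : Set (StrongDual ℝ X))
    (hD1 : ∀ φ ∈ D, ‖φ‖ ≤ 1) (hDcard : #D ≤ κ)
    (hdense : ∀ ψ : StrongDual ℝ X, ‖ψ‖ ≤ 1 →
      StrongDual.toWeakDual ψ ∈ closure (StrongDual.toWeakDual '' D)) :
    ∃ S ⊆ {f : X → ℝ | LipschitzWith 1 f ∧ f 0 = 0}, #S ≤ κ ∧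
      ∀ f ∈ {f : X → ℝ | LipschitzWith 1 f ∧ f 0 = 0}, f ∈ closure S := by
  classical
  -- the parametrized family
  let Φ : (Σ n : ℕ, (Fin (n+1) → Fin (n+1) → D) × (Fin (n+1) → Fin (n+1) → ℚ)) → (X → ℝ) :=
    fun p => fun x =>
      latFun p.1 (fun i j z => (p.2.1 i j : StrongDual ℝ X) z + (p.2.2 i j : ℝ)) x -
      latFun p.1 (fun i j z => (p.2.1 i j : StrongDual ℝ X) z + (p.2.2 i j : ℝ)) 0
  refine ⟨Set.range Φ, ?_, ?_, ?_⟩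
  · -- range Φ ⊆ B
    rintro _ ⟨⟨n, ψ, q⟩, rfl⟩
    constructor
    · exact aux_lip_sub_const (latFun_lip n _ fun i j =>
        aux_lip_dual _ (hD1 _ (ψ i j).2) _) _
    · simp [Φ]
  · -- cardinality
    have hβ : ∀ n : ℕ, #((Fin (n+1) → Fin (n+1) → D) × (Fin (n+1) → Fin (n+1) → ℚ)) ≤ κ := by
      intro n
      have hA : #(Fin (n+1) → Fin (n+1) → D) ≤ κ := by
        have e1 : #(Fin (n+1) → Fin (n+1) → D)
            = (#D ^ ((n+1 : ℕ) : Cardinal)) ^ ((n+1 : ℕ) : Cardinal) := by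
          simp only [Cardinal.mk_arrow, Cardinal.lift_uzero, Cardinal.mk_fin,
            Cardinal.lift_natCast]
        rw [e1, ← Cardinal.power_mul]
        calc #D ^ (((n+1 : ℕ) : Cardinal) * ((n+1 : ℕ) : Cardinal))
            ≤ κ ^ (((n+1 : ℕ) : Cardinal) * ((n+1 : ℕ) : Cardinal)) :=
              Cardinal.power_le_power_right hDcard
        _ = κ ^ (((n+1) * (n+1) : ℕ) : Cardinal) := by norm_cast
        _ ≤ κ := by
              rw [Cardinal.power_natCast]
              exact Cardinal.power_nat_le hκ
      have hB : #(Fin (n+1) → Fin (n+1) → ℚ) ≤ ℵ₀ := Cardinal.mk_le_aleph0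
      calc #((Fin (n+1) → Fin (n+1) → D) × (Fin (n+1) → Fin (n+1) → ℚ))
          = Cardinal.lift #(Fin (n+1) → Fin (n+1) → D) *
            Cardinal.lift #(Fin (n+1) → Fin (n+1) → ℚ) := Cardinal.mk_prod _ _
      _ ≤ κ * κ := by
            apply mul_le_mul'
            · rw [Cardinal.lift_uzero]; exact hA
            · calc Cardinal.lift #(Fin (n+1) → Fin (n+1) → ℚ) ≤ Cardinal.lift ℵ₀ :=
                    Cardinal.lift_le.2 hB
              _ = ℵ₀ := Cardinal.lift_aleph0
              _ ≤ κ := hκ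
      _ = κ := Cardinal.mul_eq_self hκ
    calc #(Set.range Φ) ≤ #(Σ n : ℕ, (Fin (n+1) → Fin (n+1) → D) × (Fin (n+1) → Fin (n+1) → ℚ)) :=
          Cardinal.mk_range_le
    _ = #(Σ m : ULift ℕ, (Fin (m.down+1) → Fin (m.down+1) → D) ×
          (Fin (m.down+1) → Fin (m.down+1) → ℚ)) :=
          (Cardinal.mk_congr (Equiv.sigmaCongrLeft
            (β := fun n : ℕ => (Fin (n+1) → Fin (n+1) → D) × (Fin (n+1) → Fin (n+1) → ℚ))
            Equiv.ulift)).symm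
    _ = Cardinal.sum (fun m : ULift ℕ => #((Fin (m.down+1) → Fin (m.down+1) → D) ×
          (Fin (m.down+1) → Fin (m.down+1) → ℚ))) := Cardinal.mk_sigma _
    _ ≤ Cardinal.sum (fun _ : ULift ℕ => κ) := Cardinal.sum_le_sum _ _ fun m => hβ m.down
    _ = #(ULift ℕ) * κ := Cardinal.sum_const' _ _
    _ = ℵ₀ * κ := by simp
    _ = κ := Cardinal.mul_eq_right hκ hκ Cardinal.aleph0_ne_zero
  · -- density
    rintro f ⟨hf, hf0⟩
    -- weak-star approximation on finite sets
    have approx : ∀ (φ : StrongDual ℝ X), ‖φ‖ ≤ 1 → ∀ (s : Finset X) (δ : ℝ), 0 < δ →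
        ∃ ψ ∈ D, ∀ z ∈ s, |ψ z - φ z| < δ := by
      intro φ hφ s δ hδ
      have hcl := hdense φ hφ
      set U : Set (WeakDual ℝ X) := ⋂ z ∈ s, {w : WeakDual ℝ X | |w z - φ z| < δ} with hU
      have hUopen : IsOpen U := by
        apply isOpen_biInter_finset
        intro z _
        have hc : Continuous fun w : WeakDual ℝ X => |w z - φ z| :=
          ((WeakDual.eval_continuous z).sub continuous_const).abs
        exact isOpen_lt hc continuous_const
      have hUmem : StrongDual.toWeakDual φ ∈ U := by
        simp only [hU, Set.mem_iInter, Set.mem_setOf_eq]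
        intro z _
        simpa using hδ
      obtain ⟨w, hwU, hwim⟩ := mem_closure_iff_nhds.1 hcl U (hUopen.mem_nhds hUmem)
      obtain ⟨ψ, hψD, rfl⟩ := hwim
      refine ⟨ψ, hψD, fun z hz => ?_⟩
      have := Set.mem_iInter₂.1 hwU z hz
      simpa using this
    -- key finite approximation
    have key : ∀ (t : Finset X) (ε : ℝ), 0 < ε →
        ∃ g ∈ Set.range Φ, ∀ z ∈ t, |g z - f z| < ε := by
      intro t ε hε
      set δ := ε / 5 with hδdef
      have hδ : 0 < δ := by positivity
      set n := t.card with hn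
      set x : Fin (n+1) → X := fun k =>
        if h : (k : ℕ) < n then ((t.equivFin.symm ⟨(k : ℕ), h⟩ : t) : X) else 0 with hxdef
      have hxlast : x (Fin.last n) = 0 := by
        simp [hxdef, Fin.val_last]
      have hxmem : ∀ z ∈ t, ∃ k : Fin (n+1), x k = z := by
        intro z hz
        refine ⟨(t.equivFin ⟨z, hz⟩).castSucc, ?_⟩
        have hlt : ((t.equivFin ⟨z, hz⟩).castSucc : ℕ) < n := (t.equivFin ⟨z, hz⟩).isLt
        rw [hxdef]
        simp only [dif_pos hlt]
        have : (⟨((t.equivFin ⟨z, hz⟩).castSucc : ℕ), hlt⟩ : Fin n) = t.equivFin ⟨z, hz⟩ := by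
          ext; simp
        rw [this, Equiv.symm_apply_apply]
      -- norming functionals
      have hfl : ∀ i j : Fin (n+1), |f (x i) - f (x j)| ≤ ‖x i - x j‖ := by
        intro i j
        have := hf.dist_le_mul (x i) (x j)
        rw [Real.dist_eq, dist_eq_norm, NNReal.coe_one, one_mul] at this
        exact this
      choose φ hφ1 hφ2 using fun i j => aux_exists_dual (x i) (x j) (f (x i)) (f (x j)) (hfl i j)
      set pts : Finset X := Finset.image x Finset.univ with hpts
      choose ψ hψD hψ using fun i j => approx (φ i j) (hφ1 i j) pts δ hδ
      choose q hq using fun i j => exists_rat_near (f (x i) - φ i j (x i)) hδ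
      refine ⟨Φ ⟨n, fun i j => ⟨ψ i j, hψD i j⟩, q⟩, Set.mem_range_self _, ?_⟩
      set L : X → ℝ := latFun n (fun i j z => ψ i j z + (q i j : ℝ)) with hL
      set M : X → ℝ := latFun n (fun i j z => φ i j z + (f (x i) - φ i j (x i))) with hM
      have hcomp : ∀ z ∈ pts, |L z - M z| ≤ 2 * δ := by
        intro z hz
        apply latFun_abs_sub
        intro i j
        have h1 := hψ i j z hz
        have h2 := hq i j
        rw [abs_sub_comm] at h2
        calc |(ψ i j z + (q i j : ℝ)) - (φ i j z + (f (x i) - φ i j (x i)))|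
            = |(ψ i j z - φ i j z) + ((q i j : ℝ) - (f (x i) - φ i j (x i)))| := by ring_nf
        _ ≤ |ψ i j z - φ i j z| + |(q i j : ℝ) - (f (x i) - φ i j (x i))| := abs_add_le _ _
        _ ≤ 2 * δ := by linarith
      have hval : ∀ k : Fin (n+1), M (x k) = f (x k) := by
        intro k
        apply le_antisymm
        · apply Finset.sup'_le
          intro i _
          calc Finset.univ.inf' Finset.univ_nonempty
                (fun j => φ i j (x k) + (f (x i) - φ i j (x i)))
              ≤ φ i k (x k) + (f (x i) - φ i k (x i)) := Finset.inf'_le _ (Finset.mem_univ k)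
          _ = f (x k) := by have := hφ2 i k; linarith
        · have h1 : f (x k) ≤ Finset.univ.inf' Finset.univ_nonempty
              (fun j => φ k j (x k) + (f (x k) - φ k j (x k))) := by
            apply Finset.le_inf'
            intro j _
            linarith
          exact h1.trans (Finset.le_sup'
            (fun i => Finset.univ.inf' Finset.univ_nonempty
              (fun j => φ i j (x k) + (f (x i) - φ i j (x i)))) (Finset.mem_univ k))
      have hmemx : ∀ k : Fin (n+1), x k ∈ pts := fun k =>
        Finset.mem_image_of_mem x (Finset.mem_univ k)
      have hM0 : M 0 = 0 := by
        rw [← hxlast, hval, hxlast, hf0]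
      intro z hz
      obtain ⟨k, rfl⟩ := hxmem z hz
      have e1 : Φ ⟨n, fun i j => ⟨ψ i j, hψD i j⟩, q⟩ (x k) = L (x k) - L 0 := rfl
      rw [e1]
      have h1 := hcomp (x k) (hmemx k)
      have h2 : |L 0 - M 0| ≤ 2 * δ := by
        rw [← hxlast]; exact hcomp (x (Fin.last n)) (hmemx _)
      have h3 := hval k
      rw [hM0] at h2
      calc |L (x k) - L 0 - f (x k)| = |(L (x k) - M (x k)) - (L 0 - 0)| := by rw [h3]; ring_nf
      _ ≤ |L (x k) - M (x k)| + |L 0 - 0| := abs_sub _ _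
      _ ≤ 2 * δ + 2 * δ := by simp only [sub_zero] at h2 ⊢; linarith
      _ < ε := by rw [hδdef]; linarith
    -- glue with the product topology
    rw [mem_closure_iff]
    intro o ho hfo
    obtain ⟨t, u, hu, hsub⟩ := isOpen_pi_iff.1 ho f hfo
    have hball : ∀ z ∈ t, ∃ ε > 0, Metric.ball (f z) ε ⊆ u z := fun z hz =>
      Metric.isOpen_iff.1 (hu z hz).1 (f z) (hu z hz).2
    choose! εf hεf hεball using hball
    have hne : (insert (1:ℝ) (t.image εf)).Nonempty := Finset.insert_nonempty _ _
    set ε := (insert (1:ℝ) (t.image εf)).min' hne with hεdef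
    have hεpos : 0 < ε := by
      rw [hεdef]
      apply (Finset.lt_min'_iff _ _).2
      intro y hy
      rcases Finset.mem_insert.1 hy with h | h
      · simp [h]
      · obtain ⟨z, hz, rfl⟩ := Finset.mem_image.1 h
        exact hεf z hz
    obtain ⟨g, hgmem, hg⟩ := key t ε hεpos
    refine ⟨g, hsub ?_, hgmem⟩
    rw [Set.mem_pi]
    intro z hz
    apply hεball z hz
    rw [Metric.mem_ball, Real.dist_eq]
    calc |g z - f z| < ε := hg z hz
    _ ≤ εf z := Finset.min'_le _ _ (Finset.mem_insert_of_mem (Finset.mem_image_of_mem εf hz))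
end

section
/- Let X be a real Banach space and let ι be an infinite index type. Then the following are equivalent: (a) the closed unit ball of the dual of X has a weak*-dense subset of cardinality at most #ι, i.e., there is a set D of continuous linear functionals of norm at most 1 on X with |D| ≤ #ι which is dense in the closed unit ball of WeakDual ℝ X; (b) there exists a linear isometric embedding of X into ℓ∞(ι). -/
open Cardinal

section Aux

variable {X : Type u} [NormedAddCommGroup X] [NormedSpace ℝ X]

set_option maxHeartbeats 4000000 in
/-- Key approximation lemma: if `(φ i)` is a norming family of functionals of norm at most one,
then any `ψ` in the dual unit ball can be approximated, uniformly on a finite set, by finite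
rational combinations of the `φ i` whose norm is at most one. -/
lemma weakStar_approx {ι : Type v} [Nonempty ι] (φ : ι → StrongDual ℝ X)
    (hφ : ∀ i, ‖φ i‖ ≤ 1) (hnorm : ∀ x : X, ‖x‖ = ⨆ i, ‖φ i x‖)
    (ψ : StrongDual ℝ X) (hψ : ‖ψ‖ ≤ 1) (s : Finset X) {ε : ℝ} (hε : 0 < ε) :
    ∃ l : List (ι × ℚ),
      ‖(l.map fun p => (p.2 : ℝ) • φ p.1).sum‖ ≤ 1 ∧
      ∀ x ∈ s, |(l.map fun p => (p.2 : ℝ) • φ p.1).sum x - ψ x| < ε := by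
  classical
  set P : StrongDual ℝ X →ₗ[ℝ] (↥s → ℝ) :=
    { toFun := fun χ x => χ (x : X)
      map_add' := fun χ₁ χ₂ => by funext x; simp
      map_smul' := fun a χ => by funext x; simp } with hPdef
  set A : Set (StrongDual ℝ X) := Set.range φ ∪ Set.range (fun i => -φ i) with hAdef
  have claim1 : P ψ ∈ closure (P '' convexHull ℝ A) := by
    by_contra hc
    obtain ⟨f, u, hfu, huψ⟩ := geometric_hahn_banach_closed_point
      (((convex_convexHull ℝ A).linear_image P).closure) isClosed_closure hc
    set y : X := ∑ x : ↥s, f ((Pi.single x 1 : ↥s → ℝ)) • (x : X) with hy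
    have key : ∀ χ : StrongDual ℝ X, f (P χ) = χ y := by
      intro χ
      have h1 : P χ = ∑ x : ↥s, χ (x : X) • (Pi.single x 1 : ↥s → ℝ) := by
        funext j
        rw [Finset.sum_apply]
        simp only [Pi.smul_apply, Pi.single_apply, smul_eq_mul, mul_ite, mul_one, mul_zero]
        simp [hPdef]
      rw [h1, map_sum, hy, map_sum]
      simp only [map_smul, smul_eq_mul]
      exact Finset.sum_congr rfl fun x _ => mul_comm _ _
    have habs : ∀ i, ‖φ i y‖ ≤ u := by
      intro i
      have h1 : f (P (φ i)) < u := hfu _ (subset_closure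
        (Set.mem_image_of_mem _ (subset_convexHull ℝ A (Set.mem_union_left _ ⟨i, rfl⟩))))
      have h2 : f (P (-φ i)) < u := hfu _ (subset_closure
        (Set.mem_image_of_mem _ (subset_convexHull ℝ A (Set.mem_union_right _ ⟨i, rfl⟩))))
      rw [key] at h1 h2
      have h3 : (-φ i) y = -(φ i y) := rfl
      rw [h3] at h2
      rw [Real.norm_eq_abs, abs_le]
      constructor <;> linarith
    have hyu : ‖y‖ ≤ u := by rw [hnorm y]; exact ciSup_le habs
    rw [key] at huψ
    have h4 : ψ y ≤ ‖y‖ := by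
      have h5 := ψ.le_opNorm y
      rw [Real.norm_eq_abs] at h5
      nlinarith [le_abs_self (ψ y), norm_nonneg y]
    linarith
  obtain ⟨b, ⟨χ, hχ, rfl⟩, hdist⟩ := Metric.mem_closure_iff.mp claim1 (ε / 2) (half_pos hε)
  have hclose : ∀ x : ↥s, |χ (x : X) - ψ (x : X)| < ε / 2 := by
    intro x
    have h := (dist_pi_lt_iff (half_pos hε)).mp hdist x
    rw [Real.dist_eq] at h
    calc |χ (x : X) - ψ (x : X)| = |ψ (x : X) - χ (x : X)| := abs_sub_comm _ _
    _ < ε / 2 := h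
  rw [convexHull_eq] at hχ
  obtain ⟨κ, t, w, z, hw0, hw1, hzA, hcm⟩ := hχ
  rw [Finset.centerMass_eq_of_sum_1 _ _ hw1] at hcm
  have hsel : ∀ j ∈ t, ∃ (i : ι) (c : ℝ), |c| ≤ w j ∧ c • φ i = w j • z j := by
    intro j hj
    rcases hzA j hj with ⟨i, hi⟩ | ⟨i, hi⟩
    · exact ⟨i, w j, by rw [abs_of_nonneg (hw0 j hj)], by rw [hi]⟩
    · refine ⟨i, -(w j), by rw [abs_neg, abs_of_nonneg (hw0 j hj)], ?_⟩
      rw [← hi]; exact (neg_smul (w j) (φ i)).trans (smul_neg (w j) (φ i)).symm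
  choose! idx c hc1 hc2 using hsel
  have hχsum : χ = ∑ j ∈ t, c j • φ (idx j) := by
    rw [← hcm]; exact (Finset.sum_congr rfl fun j hj => hc2 j hj).symm
  have hcsum : ∑ j ∈ t, |c j| ≤ 1 := hw1 ▸ Finset.sum_le_sum hc1
  set n : ℕ := t.card with hn
  set M : ℝ := 1 + ∑ x ∈ s, ‖x‖ with hMdef
  have hM1 : 1 ≤ M := le_add_of_nonneg_right (Finset.sum_nonneg fun x _ => norm_nonneg x)
  have hM0 : 0 < M := lt_of_lt_of_le one_pos hM1
  have hMx : ∀ x ∈ s, ‖x‖ ≤ M := by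
    intro x hx
    have := Finset.single_le_sum (f := fun y : X => ‖y‖) (fun y _ => norm_nonneg y) hx
    rw [hMdef]; linarith
  set δ : ℝ := ε / (4 * (n + 1) * M) with hδdef
  have hδ0 : 0 < δ := div_pos hε (by positivity)
  choose r hr using fun j => exists_rat_near (c j) hδ0
  set S : ℚ := ∑ j ∈ t, |r j| with hSdef
  set m : ℚ := max 1 S with hmdef
  have hm1 : (1 : ℚ) ≤ m := le_max_left _ _
  have hm0 : (0 : ℚ) < m := lt_of_lt_of_le one_pos hm1
  have hm0' : (0 : ℝ) < (m : ℝ) := by exact_mod_cast hm0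
  have hm1' : (1 : ℝ) ≤ (m : ℝ) := by exact_mod_cast hm1
  set q : κ → ℚ := fun j => r j / m with hqdef
  have hq1 : ∑ j ∈ t, |q j| ≤ 1 := by
    have h1 : ∑ j ∈ t, |q j| = S / m := by
      rw [hSdef, Finset.sum_div]
      exact Finset.sum_congr rfl fun j _ => by rw [hqdef, abs_div, abs_of_pos hm0]
    rw [h1, div_le_one hm0]
    exact le_max_right _ _
  have hrc : ∀ j, |(r j : ℝ) - c j| < δ := fun j => by
    rw [abs_sub_comm]; exact hr j
  have hSreal : (S : ℝ) ≤ 1 + n * δ := by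
    have h1 : (S : ℝ) = ∑ j ∈ t, |(r j : ℝ)| := by rw [hSdef]; push_cast; rfl
    rw [h1]
    calc ∑ j ∈ t, |(r j : ℝ)| ≤ ∑ j ∈ t, (|c j| + δ) := by
          refine Finset.sum_le_sum fun j hj => ?_
          have h2 := abs_sub_abs_le_abs_sub (r j : ℝ) (c j)
          linarith [hrc j]
    _ = (∑ j ∈ t, |c j|) + n * δ := by
          rw [Finset.sum_add_distrib, Finset.sum_const, hn, nsmul_eq_mul]
    _ ≤ 1 + n * δ := by linarith
  have hmreal : (m : ℝ) ≤ 1 + n * δ := by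
    have h1 : (m : ℝ) = max 1 (S : ℝ) := by rw [hmdef]; push_cast; rfl
    rw [h1]
    refine max_le ?_ hSreal
    have : (0 : ℝ) ≤ (n : ℝ) * δ := by positivity
    linarith
  have hqc : ∑ j ∈ t, |(q j : ℝ) - c j| ≤ 2 * n * δ := by
    have step : ∀ j ∈ t, |(q j : ℝ) - c j| ≤ |(r j : ℝ)| * (1 - 1 / (m : ℝ)) + δ := by
      intro j hj
      have h1 : (q j : ℝ) = (r j : ℝ) / (m : ℝ) := by rw [hqdef]; push_cast; ring
      have h2 : |(q j : ℝ) - (r j : ℝ)| = |(r j : ℝ)| * (1 - 1 / (m : ℝ)) := by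
        have h3 : (r j : ℝ) / (m : ℝ) - (r j : ℝ) = (r j : ℝ) * (1 / (m : ℝ) - 1) := by
          field_simp
        have h4 : 1 / (m : ℝ) - 1 ≤ 0 := by
          have : 1 / (m : ℝ) ≤ 1 := by rw [div_le_one hm0']; exact hm1'
          linarith
        rw [h1, h3, abs_mul, abs_of_nonpos h4]
        ring
      calc |(q j : ℝ) - c j| ≤ |(q j : ℝ) - (r j : ℝ)| + |(r j : ℝ) - c j| := abs_sub_le _ _ _
      _ ≤ |(r j : ℝ)| * (1 - 1 / (m : ℝ)) + δ := by rw [h2]; linarith [hrc j]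
    have hSm : (S : ℝ) ≤ (m : ℝ) := by exact_mod_cast le_max_right 1 S
    have h1m : 0 ≤ 1 - 1 / (m : ℝ) := by
      have : 1 / (m : ℝ) ≤ 1 := by rw [div_le_one hm0']; exact hm1'
      linarith
    calc ∑ j ∈ t, |(q j : ℝ) - c j|
        ≤ ∑ j ∈ t, (|(r j : ℝ)| * (1 - 1 / (m : ℝ)) + δ) := Finset.sum_le_sum step
    _ = (S : ℝ) * (1 - 1 / (m : ℝ)) + n * δ := by
          rw [Finset.sum_add_distrib, Finset.sum_const, hn, nsmul_eq_mul, ← Finset.sum_mul]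
          congr 2
          rw [hSdef]; push_cast; rfl
    _ ≤ ((m : ℝ) - 1) + n * δ := by
          have h5 : (S : ℝ) * (1 - 1 / (m : ℝ)) ≤ (m : ℝ) * (1 - 1 / (m : ℝ)) :=
            mul_le_mul_of_nonneg_right hSm h1m
          have h6 : (m : ℝ) * (1 - 1 / (m : ℝ)) = (m : ℝ) - 1 := by field_simp
          linarith
    _ ≤ 2 * n * δ := by linarith
  refine ⟨t.toList.map fun j => (idx j, q j), ?_, ?_⟩ <;>
    rw [show ((t.toList.map fun j => (idx j, q j)).map fun p => (p.2 : ℝ) • φ p.1)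
        = t.toList.map fun j => (q j : ℝ) • φ (idx j) by rw [List.map_map]; rfl,
      Finset.sum_map_toList]
  · calc ‖∑ j ∈ t, (q j : ℝ) • φ (idx j)‖ ≤ ∑ j ∈ t, ‖(q j : ℝ) • φ (idx j)‖ :=
          norm_sum_le _ _
    _ ≤ ∑ j ∈ t, |(q j : ℝ)| := by
          refine Finset.sum_le_sum fun j hj => ?_
          rw [norm_smul, Real.norm_eq_abs]
          nlinarith [hφ (idx j), abs_nonneg ((q j : ℝ)), norm_nonneg (φ (idx j))]
    _ ≤ 1 := by exact_mod_cast hq1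
  · intro x hx
    have hdiff : ‖(∑ j ∈ t, (q j : ℝ) • φ (idx j)) - χ‖ ≤ 2 * n * δ := by
      rw [hχsum, ← Finset.sum_sub_distrib]
      calc ‖∑ j ∈ t, ((q j : ℝ) • φ (idx j) - c j • φ (idx j))‖
          ≤ ∑ j ∈ t, ‖(q j : ℝ) • φ (idx j) - c j • φ (idx j)‖ := norm_sum_le _ _
      _ ≤ ∑ j ∈ t, |(q j : ℝ) - c j| := by
            refine Finset.sum_le_sum fun j hj => ?_
            rw [show (q j : ℝ) • φ (idx j) - c j • φ (idx j) = ((q j : ℝ) - c j) • φ (idx j) from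
              (sub_smul _ _ _).symm, norm_smul, Real.norm_eq_abs]
            nlinarith [hφ (idx j), abs_nonneg ((q j : ℝ) - c j), norm_nonneg (φ (idx j))]
      _ ≤ 2 * n * δ := hqc
    have e1 : |(∑ j ∈ t, (q j : ℝ) • φ (idx j)) x - χ x| ≤ 2 * n * δ * M := by
      have h := ((∑ j ∈ t, (q j : ℝ) • φ (idx j)) - χ).le_opNorm x
      have h2 : ((∑ j ∈ t, (q j : ℝ) • φ (idx j)) - χ) x
          = (∑ j ∈ t, (q j : ℝ) • φ (idx j)) x - χ x := rfl
      rw [h2, Real.norm_eq_abs] at h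
      calc |(∑ j ∈ t, (q j : ℝ) • φ (idx j)) x - χ x|
          ≤ ‖(∑ j ∈ t, (q j : ℝ) • φ (idx j)) - χ‖ * ‖x‖ := h
      _ ≤ (2 * n * δ) * M := by
            refine mul_le_mul hdiff (hMx x hx) (norm_nonneg x) ?_
            positivity
    have e2 := hclose ⟨x, hx⟩
    have e3 : 2 * (n : ℝ) * δ * M < ε / 2 := by
      have hnn : (0 : ℝ) ≤ (n : ℝ) := Nat.cast_nonneg n
      have h7 : 2 * (n : ℝ) * δ * M = ε * n / (2 * ((n : ℝ) + 1)) := by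
        rw [hδdef]; field_simp; ring
      have h8 : ε * (n : ℝ) / (2 * ((n : ℝ) + 1)) < ε / 2 := by
        rw [div_lt_div_iff₀ (by positivity) (by norm_num : (0:ℝ) < 2)]
        nlinarith
      rw [h7]; exact h8
    calc |(∑ j ∈ t, (q j : ℝ) • φ (idx j)) x - ψ x|
        ≤ |(∑ j ∈ t, (q j : ℝ) • φ (idx j)) x - χ x| + |χ x - ψ x| := abs_sub_le _ _ _
    _ < 2 * n * δ * M + ε / 2 := add_lt_add_of_le_of_lt e1 (hclose ⟨x, hx⟩)
    _ < ε := by linarith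

end Aux

set_option maxHeartbeats 4000000 in
theorem weakStar_dense_ball_iff_isometric_embedding_linfty (X : Type u)
    [NormedAddCommGroup X] [NormedSpace ℝ X] [CompleteSpace X]
    (ι : Type u) [Infinite ι] :
    (∃ D : Set (StrongDual ℝ X), (∀ φ ∈ D, ‖φ‖ ≤ 1) ∧ #D ≤ #ι ∧
      ∀ ψ : StrongDual ℝ X, ‖ψ‖ ≤ 1 →
        StrongDual.toWeakDual ψ ∈ closure (StrongDual.toWeakDual '' D)) ↔
    Nonempty (X →ₗᵢ[ℝ] lp (fun _ : ι => ℝ) ⊤) := by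
  classical
  constructor
  · rintro ⟨D, hD1, hcard, hdense⟩
    have hDne : D.Nonempty := by
      by_contra h
      rw [Set.not_nonempty_iff_eq_empty] at h
      have h0 := hdense 0 (by simp)
      rw [h] at h0
      simp at h0
    have : Nonempty ↥D := hDne.to_subtype
    obtain ⟨f⟩ := Cardinal.le_def _ _ |>.mp hcard
    set g : ι → StrongDual ℝ X := fun i => (Function.invFun f i : ↥D) with hg
    have hginv : ∀ d : ↥D, g (f d) = d := fun d =>
      congrArg Subtype.val (Function.leftInverse_invFun f.injective d)
    have hg1 : ∀ i, ‖g i‖ ≤ 1 := fun i => hD1 _ (Function.invFun f i).2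
    have hgle : ∀ (i) (x : X), ‖g i x‖ ≤ ‖x‖ := by
      intro i x
      calc ‖g i x‖ ≤ ‖g i‖ * ‖x‖ := (g i).le_opNorm x
      _ ≤ 1 * ‖x‖ := mul_le_mul_of_nonneg_right (hg1 i) (norm_nonneg x)
      _ = ‖x‖ := one_mul _
    have hmem : ∀ x : X, Memℓp (fun i => g i x) ⊤ := fun x => memℓp_infty ⟨‖x‖, by
      rintro b ⟨i, rfl⟩; exact hgle i x⟩
    have hbdd : ∀ x : X, BddAbove (Set.range fun i => ‖g i x‖) := fun x =>
      memℓp_infty_iff.mp (hmem x)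
    have hsup : ∀ x : X, (⨆ i, ‖g i x‖) = ‖x‖ := by
      intro x
      refine le_antisymm (ciSup_le fun i => hgle i x) ?_
      rcases eq_or_ne x 0 with rfl | hx
      · simp
      · refine le_of_forall_pos_le_add fun ε hε => ?_
        obtain ⟨φ, hφn, hφx⟩ := exists_dual_vector ℝ x (norm_ne_zero_iff.mpr hx)
        have hφx' : φ x = ‖x‖ := by exact_mod_cast hφx
        have hcl := hdense φ (le_of_eq hφn)
        have hUopen : IsOpen {w : WeakDual ℝ X | w x ∈ Metric.ball (φ x) ε} :=
          Metric.isOpen_ball.preimage (WeakDual.eval_continuous x)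
        obtain ⟨wpt, hw1, hw2⟩ := mem_closure_iff.mp hcl _ hUopen
          (by simp [Metric.mem_ball, hε])
        obtain ⟨ψ, hψD, rfl⟩ := hw2
        have h1 : |ψ x - φ x| < ε := by
          simpa [Metric.mem_ball, Real.dist_eq] using hw1
        have h2 : g (f ⟨ψ, hψD⟩) = ψ := hginv ⟨ψ, hψD⟩
        have h3 : ‖x‖ - ε ≤ ‖g (f ⟨ψ, hψD⟩) x‖ := by
          rw [h2, Real.norm_eq_abs]
          have h4 := le_abs_self (ψ x)
          have h5 := abs_lt.mp h1
          linarith [h5.1, h4, hφx'.le, hφx'.ge]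
        have h6 : ‖g (f ⟨ψ, hψD⟩) x‖ ≤ ⨆ i, ‖g i x‖ := le_ciSup (hbdd x) _
        linarith
    refine ⟨⟨{ toFun := fun x => (⟨fun i => g i x, hmem x⟩ : lp (fun _ : ι => ℝ) ⊤),
               map_add' := fun x y => by ext i; simp; rfl,
               map_smul' := fun a x => by ext i; simp },
             fun x => (lp.norm_eq_ciSup _).trans (hsup x)⟩⟩
  · rintro ⟨T⟩
    set φ : ι → StrongDual ℝ X := fun i =>
      LinearMap.mkContinuous
        { toFun := fun x => T x i
          map_add' := fun x y => by simp
          map_smul' := fun a x => by simp }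
        1 (fun x => by
          rw [one_mul]
          exact (lp.norm_apply_le_norm (E := fun _ : ι => ℝ) ENNReal.top_ne_zero
            (T x) i).trans_eq (T.norm_map x)) with hφdef
    have hφ1 : ∀ i, ‖φ i‖ ≤ 1 := fun i => LinearMap.mkContinuous_norm_le _ zero_le_one _
    have hφnorm : ∀ x : X, ‖x‖ = ⨆ i, ‖φ i x‖ := by
      intro x
      rw [← T.norm_map x]
      exact lp.norm_eq_ciSup (T x)
    set combo : List (ι × ℚ) → StrongDual ℝ X :=
      fun l => (l.map fun p => (p.2 : ℝ) • φ p.1).sum with hcombo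
    refine ⟨combo '' {l | ‖combo l‖ ≤ 1}, ?_, ?_, ?_⟩
    · rintro χ ⟨l, hl, rfl⟩; exact hl
    · calc #↥(combo '' {l | ‖combo l‖ ≤ 1}) ≤ #↥{l | ‖combo l‖ ≤ 1} := Cardinal.mk_image_le
      _ ≤ #(List (ι × ℚ)) := Cardinal.mk_set_le _
      _ = #(ι × ℚ) := Cardinal.mk_list_eq_mk _
      _ ≤ #ι := by
          rw [Cardinal.mk_prod, Cardinal.lift_uzero, Cardinal.mkRat, Cardinal.lift_aleph0]
          calc #ι * ℵ₀ ≤ max #ι ℵ₀ := Cardinal.mul_le_max_of_aleph0_le_left (aleph0_le_mk ι)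
          _ = #ι := max_eq_left (aleph0_le_mk ι)
    · intro ψ hψ
      rw [mem_closure_iff]
      intro o ho hmemo
      obtain ⟨V, hV, rfl⟩ := isOpen_induced_iff.mp ho
      obtain ⟨I, u, h1, h2⟩ := isOpen_pi_iff.mp hV _ hmemo
      have key : ∀ a ∈ I, ∃ δ : ℝ, 0 < δ ∧ Metric.ball (ψ a) δ ⊆ u a := by
        intro a ha
        obtain ⟨δ, hδ0, hδ⟩ := Metric.isOpen_iff.mp (h1 a ha).1 _ (h1 a ha).2
        exact ⟨δ, hδ0, hδ⟩
      choose! δ hδ0 hδball using key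
      set ε : ℝ := (insert (1 : ℝ) (I.image δ)).min' (Finset.insert_nonempty _ _) with hεdef
      have hε0 : 0 < ε := by
        have hmem := (insert (1 : ℝ) (I.image δ)).min'_mem (Finset.insert_nonempty _ _)
        rw [← hεdef] at hmem
        rcases Finset.mem_insert.mp hmem with h | h
        · rw [h]; exact one_pos
        · obtain ⟨a, ha, hae⟩ := Finset.mem_image.mp h
          rw [← hae]; exact hδ0 a ha
      have hεle : ∀ a ∈ I, ε ≤ δ a := fun a ha =>
        Finset.min'_le _ _ (Finset.mem_insert_of_mem (Finset.mem_image_of_mem δ ha))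
      obtain ⟨l, hl1, hl2⟩ := weakStar_approx φ hφ1 hφnorm ψ hψ I hε0
      refine ⟨StrongDual.toWeakDual (combo l), ?_, ⟨combo l, ⟨l, hl1, rfl⟩, rfl⟩⟩
      apply h2
      intro a ha
      refine hδball a ha ?_
      rw [Metric.mem_ball, Real.dist_eq]
      calc |combo l a - ψ a| < ε := hl2 a ha
      _ ≤ δ a := hεle a ha
end

section
/- Let M be a metric space with a distinguished base point 0, let C ≥ 1, and let ι be an infinite index type. Then the following are equivalent: (a) there is a C-Lipschitz embedding of M into ℓ∞(ι), i.e., a map f : M → ℓ∞(ι) and constants L₁, L₂ ≥ 0 with L₁·L₂ ≤ C such that f is L₁-Lipschitz and d(x,y) ≤ L₂·‖f(x) − f(y)‖ for all x,y ∈ M; (b) there exists a real linear subspace S of Lip₀(M) which separates points uniformly with constant C and which has 'Lipschitz-norm density' at most #ι, meaning there is a subset S₀ ⊆ S with |S₀| ≤ #ι such that for every f ∈ S and every ε > 0 there is g ∈ S₀ with f − g being ε-Lipschitz. -/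
open Cardinal

set_option maxHeartbeats 1000000 in
set_option synthInstance.maxHeartbeats 400000 in


private lemma dist_sum_le' {M ι : Type*} [PseudoMetricSpace M] (s : Finset ι) (F : ι → M → ℝ)
    (K : ι → ℝ) (h : ∀ i ∈ s, ∀ x y : M, dist (F i x) (F i y) ≤ K i * dist x y) (x y : M) :
    dist ((∑ i ∈ s, F i) x) ((∑ i ∈ s, F i) y) ≤ (∑ i ∈ s, K i) * dist x y := by
  rw [Finset.sum_apply, Finset.sum_apply, Real.dist_eq, ← Finset.sum_sub_distrib,
    Finset.sum_mul]
  refine (Finset.abs_sum_le_sum_abs _ _).trans (Finset.sum_le_sum fun i hi => ?_)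
  rw [← Real.dist_eq]
  exact h i hi x y

set_option maxHeartbeats 1000000 in
set_option synthInstance.maxHeartbeats 400000 in
private theorem fwd_dir
    (M : Type u) [MetricSpace M] (o : M) (C : ℝ) (hC : 1 ≤ C)
    (ι : Type u) [Infinite ι]
    (H : ∃ f : M → lp (fun _ : ι => ℝ) ⊤, ∃ L₁ L₂ : ℝ, 0 ≤ L₁ ∧ 0 ≤ L₂ ∧ L₁ * L₂ ≤ C ∧
      LipschitzWith L₁.toNNReal f ∧ ∀ x y : M, dist x y ≤ L₂ * ‖f x - f y‖) :
    (∃ S : Submodule ℝ (M → ℝ),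
      (∀ f ∈ S, (∃ K, LipschitzWith K f) ∧ f o = 0) ∧
      (∀ x y : M, ∀ ε : ℝ, 0 < ε →
        ∃ f ∈ S, LipschitzWith (C + ε).toNNReal f ∧ |f x - f y| = dist x y) ∧
      ∃ S₀ : Set (M → ℝ), S₀ ⊆ (S : Set (M → ℝ)) ∧ #S₀ ≤ #ι ∧
        ∀ f ∈ S, ∀ ε : ℝ, 0 < ε → ∃ g ∈ S₀, LipschitzWith ε.toNNReal (f - g)) := by
  obtain ⟨f, L₁, L₂, hL₁, hL₂, hLC, hf, hlow⟩ := H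
  have hC0 : (0 : ℝ) < C := lt_of_lt_of_le one_pos hC
  set g : ι → M → ℝ := fun i x => L₂ * ((f x : ι → ℝ) i - (f o : ι → ℝ) i) with hg
  -- coordinate Lipschitz bound
  have hcoord : ∀ (x y : M) (i : ι),
      |(f x : ι → ℝ) i - (f y : ι → ℝ) i| ≤ ‖f x - f y‖ := by
    intro x y i
    have h1 : ‖(f x - f y) i‖ ≤ ‖f x - f y‖ := lp.norm_apply_le_norm ENNReal.top_ne_zero _ i
    simpa [lp.coeFn_sub, Real.norm_eq_abs] using h1
  have hgdist : ∀ i, ∀ x y : M, dist (g i x) (g i y) ≤ L₂ * L₁ * dist x y := by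
    intro i x y
    have h2 : dist (g i x) (g i y) = L₂ * |(f x : ι → ℝ) i - (f y : ι → ℝ) i| := by
      rw [Real.dist_eq, hg]
      have : L₂ * ((f x : ι → ℝ) i - (f o : ι → ℝ) i) - L₂ * ((f y : ι → ℝ) i - (f o : ι → ℝ) i)
          = L₂ * ((f x : ι → ℝ) i - (f y : ι → ℝ) i) := by ring
      rw [this, abs_mul, abs_of_nonneg hL₂]
    have h3 : ‖f x - f y‖ ≤ L₁ * dist x y := by
      have := hf.dist_le_mul x y
      rwa [Real.coe_toNNReal _ hL₁, dist_eq_norm] at this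
    calc dist (g i x) (g i y) = L₂ * |(f x : ι → ℝ) i - (f y : ι → ℝ) i| := h2
      _ ≤ L₂ * (L₁ * dist x y) := by
          have := (hcoord x y i).trans h3
          nlinarith [abs_nonneg ((f x : ι → ℝ) i - (f y : ι → ℝ) i)]
      _ = L₂ * L₁ * dist x y := by ring
  have hglip : ∀ i, LipschitzWith (L₂ * L₁).toNNReal (g i) := fun i =>
    LipschitzWith.of_dist_le_mul fun x y => by
      rw [Real.coe_toNNReal _ (mul_nonneg hL₂ hL₁)]; exact hgdist i x y
  have hgo : ∀ i, g i o = 0 := fun i => by simp [hg]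
  refine ⟨Submodule.span ℝ (Set.range g), ?_, ?_, ?_⟩
  · intro h hh
    induction hh using Submodule.span_induction with
    | mem a ha =>
      obtain ⟨i, rfl⟩ := ha
      exact ⟨⟨_, hglip i⟩, hgo i⟩
    | zero => exact ⟨⟨0, LipschitzWith.const 0⟩, rfl⟩
    | add a b ha hb pa pb =>
      exact ⟨⟨pa.1.choose + pb.1.choose, pa.1.choose_spec.add pb.1.choose_spec⟩,
        by simp [Pi.add_apply, pa.2, pb.2]⟩
    | smul c a ha pa =>
      exact ⟨⟨‖c‖₊ * pa.1.choose, (lipschitzWith_smul c).comp pa.1.choose_spec⟩,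
        by simp [Pi.smul_apply, pa.2]⟩
  · intro x y ε hε
    rcases eq_or_lt_of_le (dist_nonneg (x := x) (y := y)) with hd | hd
    · refine ⟨0, Submodule.zero_mem _, LipschitzWith.const' 0, by simp [← hd]⟩
    · have hNd : dist x y ≤ L₂ * ‖f x - f y‖ := hlow x y
      have hN : 0 < ‖f x - f y‖ := by
        rcases le_or_gt ‖f x - f y‖ 0 with h | h
        · nlinarith
        · exact h
      have hL₂0 : 0 < L₂ := by
        rcases eq_or_lt_of_le hL₂ with h | h
        · rw [← h, zero_mul] at hNd; linarith
        · exact h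
      have hfrac : 0 < C / (C + ε) := by positivity
      have hfrac1 : C / (C + ε) < 1 := (div_lt_one (by linarith)).mpr (by linarith)
      have hlt : ‖f x - f y‖ * (C / (C + ε)) < ‖f x - f y‖ := by nlinarith
      rw [lp.norm_eq_ciSup] at hlt
      obtain ⟨i, hi⟩ := exists_lt_of_lt_ciSup hlt
      rw [← lp.norm_eq_ciSup] at hi
      have hi' : ‖f x - f y‖ * (C / (C + ε)) < |(f x : ι → ℝ) i - (f y : ι → ℝ) i| := by
        simpa [lp.coeFn_sub, Real.norm_eq_abs] using hi
      set a := g i with hai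
      have hkey : a x - a y = L₂ * ((f x : ι → ℝ) i - (f y : ι → ℝ) i) := by
        rw [hai, hg]; ring
      have habs : dist x y * (C / (C + ε)) < |a x - a y| := by
        rw [hkey, abs_mul, abs_of_nonneg hL₂]
        calc dist x y * (C / (C + ε)) ≤ (L₂ * ‖f x - f y‖) * (C / (C + ε)) := by nlinarith
          _ = L₂ * (‖f x - f y‖ * (C / (C + ε))) := by ring
          _ < L₂ * |(f x : ι → ℝ) i - (f y : ι → ℝ) i| := by nlinarith
      have hane : a x - a y ≠ 0 := by
        intro h0
        rw [h0, abs_zero] at habs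
        nlinarith
      set t := dist x y / (a x - a y) with ht
      refine ⟨t • a, Submodule.smul_mem _ _ (Submodule.subset_span ⟨i, rfl⟩), ?_, ?_⟩
      · refine LipschitzWith.of_dist_le_mul fun u v => ?_
        rw [Real.coe_toNNReal _ (by linarith : (0:ℝ) ≤ C + ε)]
        have h5 : dist ((t • a) u) ((t • a) v) = |t| * dist (a u) (a v) := by
          simp only [Pi.smul_apply, smul_eq_mul, Real.dist_eq, ← abs_mul]
          ring_nf
        have hCε : (0:ℝ) < C + ε := by linarith
        have h6 : |t| ≤ (C + ε) / C := by
          rw [ht, abs_div, abs_of_nonneg dist_nonneg,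
            div_le_div_iff₀ (abs_pos.mpr hane) hC0]
          calc dist x y * C = dist x y * (C / (C + ε)) * (C + ε) := by field_simp
            _ ≤ |a x - a y| * (C + ε) := by nlinarith
            _ = (C + ε) * |a x - a y| := by ring
        have h7 : dist (a u) (a v) ≤ L₂ * L₁ * dist u v := hgdist i u v
        have h8 : L₂ * L₁ ≤ C := by linarith [hLC, (by ring : L₁ * L₂ = L₂ * L₁)]
        calc dist ((t • a) u) ((t • a) v) = |t| * dist (a u) (a v) := h5
          _ ≤ ((C + ε) / C) * (C * dist u v) :=
            mul_le_mul h6 (h7.trans (mul_le_mul_of_nonneg_right h8 dist_nonneg))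
              dist_nonneg (by positivity)
          _ = (C + ε) * dist u v := by field_simp
      · have : (t • a) x - (t • a) y = t * (a x - a y) := by
          simp only [Pi.smul_apply, smul_eq_mul]; ring
        rw [this, ht, div_mul_cancel₀ _ hane, abs_of_nonneg dist_nonneg]
  · set φ : (ι →₀ ℚ) → (M → ℝ) := fun c => ∑ i ∈ c.support, ((c i : ℝ)) • g i with hφ
    refine ⟨Set.range φ, ?_, ?_, ?_⟩
    · rintro _ ⟨c, rfl⟩
      exact Submodule.sum_mem _ fun i _ =>
        Submodule.smul_mem _ _ (Submodule.subset_span ⟨i, rfl⟩)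
    · refine (Cardinal.mk_range_le).trans ?_
      rw [Cardinal.mk_finsupp_lift_of_infinite]
      rw [Cardinal.lift_uzero, Cardinal.mkRat, Cardinal.lift_aleph0]
      exact max_le le_rfl (Cardinal.aleph0_le_mk ι)
    · intro h hh ε hε
      classical
      rw [Finsupp.mem_span_range_iff_exists_finsupp] at hh
      obtain ⟨c, hc⟩ := hh
      set n := c.support.card with hn
      set B := L₂ * L₁ + 1 with hB
      have hB0 : 0 < B := by nlinarith [mul_nonneg hL₂ hL₁]
      set ε' := ε / ((n + 1) * B) with hε'
      have hε'0 : 0 < ε' := by positivity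
      have hq : ∀ i : ι, ∃ r : ℚ, |c i - (r : ℝ)| < ε' := fun i => exists_rat_near _ hε'0
      choose q hq' using hq
      set Q : ι →₀ ℚ := Finsupp.onFinset c.support (fun i => if i ∈ c.support then q i else 0)
        (fun i hi => by by_contra h0; simp [h0] at hi) with hQ
      refine ⟨φ Q, ⟨Q, rfl⟩, ?_⟩
      have hQsupp : Q.support ⊆ c.support := Finsupp.support_onFinset_subset
      have hφQ : φ Q = ∑ i ∈ c.support, ((Q i : ℝ)) • g i := by
        rw [hφ]
        exact Finset.sum_subset hQsupp fun i _ hi => by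
          rw [Finsupp.notMem_support_iff.mp hi]; simp
      have hdiff : h - φ Q = ∑ i ∈ c.support, ((c i - (Q i : ℝ)) • g i) := by
        rw [hφQ, ← hc]
        rw [Finsupp.sum]
        rw [← Finset.sum_sub_distrib]
        congr 1
        ext i
        rw [sub_smul]
      refine LipschitzWith.of_dist_le_mul fun x y => ?_
      rw [Real.coe_toNNReal _ hε.le, hdiff]
      have hterm : ∀ i ∈ c.support, ∀ u v : M,
          dist (((c i - (Q i : ℝ)) • g i) u) (((c i - (Q i : ℝ)) • g i) v) ≤
            (ε' * B) * dist u v := by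
        intro i hi u v
        have hQi : (Q i : ℝ) = (q i : ℝ) := by
          simp only [hQ, Finsupp.onFinset_apply, if_pos hi]
        have h1 : dist (((c i - (Q i : ℝ)) • g i) u) (((c i - (Q i : ℝ)) • g i) v)
            = |c i - (Q i : ℝ)| * dist (g i u) (g i v) := by
          simp only [Pi.smul_apply, smul_eq_mul, Real.dist_eq, ← abs_mul]
          ring_nf
        rw [h1, hQi]
        have h2 := hgdist i u v
        have h3 := (hq' i).le
        have h4 : L₂ * L₁ ≤ B := by rw [hB]; linarith
        calc |c i - ((q i : ℚ) : ℝ)| * dist (g i u) (g i v)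
            ≤ ε' * (B * dist u v) :=
              mul_le_mul h3 (h2.trans (mul_le_mul_of_nonneg_right h4 dist_nonneg))
                dist_nonneg hε'0.le
          _ = (ε' * B) * dist u v := by ring
      have := dist_sum_le' c.support (fun i => (c i - (Q i : ℝ)) • g i)
        (fun _ => ε' * B) hterm x y
      refine this.trans ?_
      have hsum : (∑ _i ∈ c.support, ε' * B) = n * (ε' * B) := by
        rw [Finset.sum_const, nsmul_eq_mul]
      rw [hsum]
      have hfin : (n : ℝ) * (ε' * B) ≤ ε := by
        have hnB : (0:ℝ) < ((n : ℝ) + 1) * B := by positivity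
        rw [hε', div_mul_eq_mul_div, ← mul_div_assoc, div_le_iff₀ hnB]
        nlinarith [mul_nonneg hε.le hB0.le, Nat.cast_nonneg (α := ℝ) n]
      nlinarith [dist_nonneg (x := x) (y := y), hfin]


set_option maxHeartbeats 1000000 in
set_option synthInstance.maxHeartbeats 400000 in
private theorem rev_dir
    (M : Type u) [MetricSpace M] (o : M) (C : ℝ) (hC : 1 ≤ C)
    (ι : Type u) [Infinite ι]
    (H : ∃ S : Submodule ℝ (M → ℝ),
      (∀ f ∈ S, (∃ K, LipschitzWith K f) ∧ f o = 0) ∧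
      (∀ x y : M, ∀ ε : ℝ, 0 < ε →
        ∃ f ∈ S, LipschitzWith (C + ε).toNNReal f ∧ |f x - f y| = dist x y) ∧
      ∃ S₀ : Set (M → ℝ), S₀ ⊆ (S : Set (M → ℝ)) ∧ #S₀ ≤ #ι ∧
        ∀ f ∈ S, ∀ ε : ℝ, 0 < ε → ∃ g ∈ S₀, LipschitzWith ε.toNNReal (f - g)) :
    (∃ f : M → lp (fun _ : ι => ℝ) ⊤, ∃ L₁ L₂ : ℝ, 0 ≤ L₁ ∧ 0 ≤ L₂ ∧ L₁ * L₂ ≤ C ∧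
      LipschitzWith L₁.toNNReal f ∧ ∀ x y : M, dist x y ≤ L₂ * ‖f x - f y‖) := by
  classical
  obtain ⟨S, hS, hsep, S₀, hS₀S, hcard, hdens⟩ := H
  have hC0 : (0:ℝ) < C := lt_of_lt_of_le one_pos hC
  obtain ⟨e⟩ : Nonempty (S₀ ↪ ι) := (Cardinal.le_def _ _).mp hcard
  set Kc : (M → ℝ) → ℝ := fun g => sInf {K : ℝ | 0 ≤ K ∧ LipschitzWith K.toNNReal g} with hKc
  have hbdd : ∀ g : M → ℝ, BddBelow {K : ℝ | 0 ≤ K ∧ LipschitzWith K.toNNReal g} :=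
    fun g => ⟨0, fun b hb => hb.1⟩
  have hne : ∀ g : M → ℝ, (∃ K : NNReal, LipschitzWith K g) →
      {K : ℝ | 0 ≤ K ∧ LipschitzWith K.toNNReal g}.Nonempty := by
    rintro g ⟨K0, h0⟩
    exact ⟨K0, K0.2, by simpa [Real.toNNReal_coe] using h0⟩
  have hKc0 : ∀ g : M → ℝ, (∃ K : NNReal, LipschitzWith K g) → 0 ≤ Kc g :=
    fun g hg => le_csInf (hne g hg) fun b hb => hb.1
  have hKcdist : ∀ g : M → ℝ, (∃ K : NNReal, LipschitzWith K g) →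
      ∀ x y : M, dist (g x) (g y) ≤ Kc g * dist x y := by
    rintro g hg x y
    rcases eq_or_lt_of_le (dist_nonneg (x := x) (y := y)) with hd | hd
    · obtain ⟨K0, h0⟩ := hg
      have h1 := h0.dist_le_mul x y
      rw [← hd, mul_zero] at h1 ⊢
      simpa using h1
    · rw [← div_le_iff₀ hd]
      refine le_csInf (hne g hg) fun b hb => ?_
      rw [div_le_iff₀ hd]
      have := hb.2.dist_le_mul x y
      rwa [Real.coe_toNNReal _ hb.1] at this
  have hKcle : ∀ (g : M → ℝ) (K : ℝ), 0 ≤ K → LipschitzWith K.toNNReal g → Kc g ≤ K :=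
    fun g K hK hl => csInf_le (hbdd g) ⟨hK, hl⟩
  have hlipex : ∀ g : S₀, ∃ K : NNReal, LipschitzWith K g.1 :=
    fun g => (hS g.1 (hS₀S g.2)).1
  have hgo : ∀ g : S₀, g.1 o = 0 := fun g => (hS g.1 (hS₀S g.2)).2
  set F : M → ι → ℝ := fun x => Function.extend e (fun g : S₀ => (Kc g.1)⁻¹ * g.1 x) 0
    with hF
  have hFrange : ∀ (x : M) (g : S₀), F x (e g) = (Kc g.1)⁻¹ * g.1 x := by
    intro x g
    rw [hF]
    exact e.injective.extend_apply _ _ g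
  have hFnot : ∀ (x : M) (i : ι), (¬ ∃ g : S₀, e g = i) → F x i = 0 := by
    intro x i h
    rw [hF]
    exact Function.extend_apply' _ _ _ h
  have hcb : ∀ (x y : M) (i : ι), |F x i - F y i| ≤ dist x y := by
    intro x y i
    by_cases hex : ∃ g : S₀, e g = i
    · obtain ⟨g, rfl⟩ := hex
      rw [hFrange, hFrange]
      have h0 := hKc0 _ (hlipex g)
      rcases eq_or_lt_of_le h0 with h | h
      · rw [← h]
        simpa using dist_nonneg
      · have hd := hKcdist _ (hlipex g) x y
        rw [Real.dist_eq] at hd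
        have heq : (Kc g.1)⁻¹ * g.1 x - (Kc g.1)⁻¹ * g.1 y
            = (Kc g.1)⁻¹ * (g.1 x - g.1 y) := by ring
        rw [heq, abs_mul, abs_of_nonneg (inv_nonneg.mpr h0)]
        calc (Kc g.1)⁻¹ * |g.1 x - g.1 y| ≤ (Kc g.1)⁻¹ * (Kc g.1 * dist x y) :=
              mul_le_mul_of_nonneg_left hd (inv_nonneg.mpr h0)
          _ = dist x y := by field_simp
    · rw [hFnot x i hex, hFnot y i hex]
      simpa using dist_nonneg
  have hFo : ∀ i : ι, F o i = 0 := by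
    intro i
    by_cases hex : ∃ g : S₀, e g = i
    · obtain ⟨g, rfl⟩ := hex
      rw [hFrange, hgo g, mul_zero]
    · exact hFnot o i hex
  have hmem : ∀ x : M, Memℓp (F x) ⊤ := by
    intro x
    apply memℓp_infty
    refine ⟨dist x o, ?_⟩
    rintro _ ⟨i, rfl⟩
    have := hcb x o i
    rw [hFo i, sub_zero] at this
    simpa [Real.norm_eq_abs] using this
  set f : M → lp (fun _ : ι => ℝ) ⊤ := fun x => ⟨F x, hmem x⟩ with hf
  have hfc : ∀ (x : M) (i : ι), (f x : ι → ℝ) i = F x i := fun x i => rfl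
  have hnorm : ∀ x y : M, ‖f x - f y‖ ≤ dist x y := by
    intro x y
    refine lp.norm_le_of_forall_le dist_nonneg fun i => ?_
    have : ((f x - f y : lp (fun _ : ι => ℝ) ⊤) : ι → ℝ) i = F x i - F y i := by
      rw [lp.coeFn_sub]
      rfl
    rw [this]
    simpa [Real.norm_eq_abs] using hcb x y i
  refine ⟨f, 1, C, zero_le_one, hC0.le, by rw [one_mul], ?_, ?_⟩
  · refine LipschitzWith.of_dist_le_mul fun x y => ?_
    rw [Real.coe_toNNReal _ zero_le_one, one_mul, dist_eq_norm]
    exact hnorm x y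
  · intro x y
    by_contra hcon
    push_neg at hcon
    set d := dist x y with hdd
    set N := ‖f x - f y‖ with hN
    have hN0 : 0 ≤ N := norm_nonneg _
    have hd0 : 0 < d := by nlinarith
    set δ := d - C * N with hδ
    have hδ0 : 0 < δ := by rw [hδ]; linarith
    set ε := min (1/2) (C * δ / (2 * d * (C + 2))) with hε
    have hεpos : 0 < ε := by
      apply lt_min (by norm_num)
      positivity
    have hεhalf : ε ≤ 1/2 := min_le_left _ _
    have hεb : ε * (2 * d * (C + 2)) ≤ C * δ := by
      have h1 : ε ≤ C * δ / (2 * d * (C + 2)) := min_le_right _ _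
      rw [← le_div_iff₀ (by positivity)]
      exact h1
    obtain ⟨h, hhS, hhlip, hhxy⟩ := hsep x y ε hεpos
    obtain ⟨g, hgS₀, hgdlip⟩ := hdens h hhS ε hεpos
    set gm : S₀ := ⟨g, hgS₀⟩ with hgm
    have hsub : LipschitzWith ((C + ε).toNNReal + ε.toNNReal) g := by
      have h2 := hhlip.sub hgdlip
      have h3 : (fun z => h z - (h - g) z) = g := by
        funext z; simp
      rwa [h3] at h2
    have hg2 : LipschitzWith (C + 2*ε).toNNReal g := by
      have h4 : C + 2*ε = (C + ε) + ε := by ring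
      rw [h4, Real.toNNReal_add (by linarith) hεpos.le]
      exact hsub
    have hKgle : Kc g ≤ C + 2*ε := hKcle g _ (by linarith) hg2
    have habs : (1 - ε) * d ≤ |g x - g y| := by
      have h5 : |(h x - g x) - (h y - g y)| ≤ ε * d := by
        have h6 := hgdlip.dist_le_mul x y
        rw [Real.coe_toNNReal _ hεpos.le, Real.dist_eq] at h6
        have h6' : (h - g) x - (h - g) y = (h x - g x) - (h y - g y) := by simp
        rw [h6'] at h6
        exact h6
      have h7 : |h x - h y| - |(h x - g x) - (h y - g y)| ≤ |g x - g y| := by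
        have h8 := abs_sub_abs_le_abs_sub (h x - h y) ((h x - g x) - (h y - g y))
        have h9 : (h x - h y) - ((h x - g x) - (h y - g y)) = g x - g y := by ring
        rwa [h9] at h8
      rw [hhxy] at h7
      nlinarith
    have hKg0 : 0 < Kc g := by
      have h10 := hKcdist g (hlipex gm) x y
      rw [Real.dist_eq] at h10
      nlinarith
    have hNcoord : (C + 2*ε)⁻¹ * ((1 - ε) * d) ≤ N := by
      have h11 : |F x (e gm) - F y (e gm)| ≤ N := by
        have h12 := lp.norm_apply_le_norm ENNReal.top_ne_zero (f x - f y) (e gm)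
        have h13 : ((f x - f y : lp (fun _ : ι => ℝ) ⊤) : ι → ℝ) (e gm)
            = F x (e gm) - F y (e gm) := by
          rw [lp.coeFn_sub]; rfl
        rw [h13] at h12
        simpa [Real.norm_eq_abs] using h12
      rw [hFrange, hFrange] at h11
      have h14 : (Kc g)⁻¹ * g x - (Kc g)⁻¹ * g y = (Kc g)⁻¹ * (g x - g y) := by ring
      rw [h14, abs_mul, abs_of_nonneg (inv_nonneg.mpr hKg0.le)] at h11
      refine le_trans ?_ h11
      have h15 : (C + 2*ε)⁻¹ ≤ (Kc g)⁻¹ := by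
        apply inv_anti₀ hKg0 hKgle
      have h16 : 0 ≤ (1 - ε) * d := by nlinarith
      calc (C + 2*ε)⁻¹ * ((1 - ε) * d) ≤ (Kc g)⁻¹ * ((1 - ε) * d) :=
            mul_le_mul_of_nonneg_right h15 h16
        _ ≤ (Kc g)⁻¹ * |g x - g y| :=
            mul_le_mul_of_nonneg_left habs (inv_nonneg.mpr hKg0.le)
    -- final contradiction
    have hCε : (0:ℝ) < C + 2*ε := by linarith
    have h17 : (1 - ε) * d ≤ (C + 2*ε) * N := by
      have := mul_le_mul_of_nonneg_left hNcoord hCε.le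
      calc (1 - ε) * d = (C + 2*ε) * ((C + 2*ε)⁻¹ * ((1 - ε) * d)) := by field_simp
        _ ≤ (C + 2*ε) * N := this
    have h18 : C * ((1 - ε) * d) ≤ (C + 2*ε) * (C * N) := by nlinarith
    have h19 : C * N = d - δ := by rw [hδ]; ring
    rw [h19] at h18
    -- C(1-ε)d ≤ (C+2ε)(d-δ)  →  Cδ ≤ εd(C+2) + ... contradiction with hεb
    nlinarith [mul_nonneg hεpos.le hδ0.le, mul_pos hC0 hδ0, mul_nonneg hεpos.le hd0.le]

theorem lipschitz_embedding_linfty_iff_uniformly_separating_subspace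
    (M : Type u) [MetricSpace M] (o : M) (C : ℝ) (hC : 1 ≤ C)
    (ι : Type u) [Infinite ι] :
    (∃ f : M → lp (fun _ : ι => ℝ) ⊤, ∃ L₁ L₂ : ℝ, 0 ≤ L₁ ∧ 0 ≤ L₂ ∧ L₁ * L₂ ≤ C ∧
      LipschitzWith L₁.toNNReal f ∧ ∀ x y : M, dist x y ≤ L₂ * ‖f x - f y‖) ↔
    (∃ S : Submodule ℝ (M → ℝ),
      (∀ f ∈ S, (∃ K, LipschitzWith K f) ∧ f o = 0) ∧
      (∀ x y : M, ∀ ε : ℝ, 0 < ε →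
        ∃ f ∈ S, LipschitzWith (C + ε).toNNReal f ∧ |f x - f y| = dist x y) ∧
      ∃ S₀ : Set (M → ℝ), S₀ ⊆ (S : Set (M → ℝ)) ∧ #S₀ ≤ #ι ∧
        ∀ f ∈ S, ∀ ε : ℝ, 0 < ε → ∃ g ∈ S₀, LipschitzWith ε.toNNReal (f - g)) := by
  constructor
  · exact fwd_dir M o C hC ι
  · exact rev_dir M o C hC ι
end

section
/- Let M be a metric space with a distinguished base point 0 and let ι be an infinite index type. Then the following are equivalent: (a) M embeds isometrically into ℓ∞(ι), i.e., there is a map T : M → ℓ∞(ι) with ‖T(x) − T(y)‖ = d(x,y) for all x,y ∈ M; (b) the set B = {f : M → ℝ : f is 1-Lipschitz and f(0)=0} has a subset of cardinality at most #ι which is dense in B for the topology of pointwise convergence (inherited from the product topology on M → ℝ). -/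
open Cardinal
namespace LinftyAux
set_option synthInstance.maxHeartbeats 1000000
set_option maxHeartbeats 1000000

universe u
variable {M : Type u} [MetricSpace M] {ι : Type u}

lemma lip_sub_const {f : M → ℝ} (hf : LipschitzWith 1 f) (c : ℝ) :
    LipschitzWith 1 fun x => f x - c := by
  refine LipschitzWith.of_dist_le_mul fun x y => ?_
  rw [dist_sub_right]
  simpa using hf.dist_le_mul x y

lemma lip_coord (T : M → lp (fun _ : ι => ℝ) ⊤)
    (hT : ∀ x y : M, ‖T x - T y‖ = dist x y) (i : ι) :
    LipschitzWith 1 fun x => T x i := by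
  refine LipschitzWith.of_dist_le_mul fun x y => ?_
  have h1 : ‖(T x - T y) i‖ ≤ ‖T x - T y‖ :=
    lp.norm_apply_le_norm ENNReal.top_ne_zero (T x - T y) i
  rw [lp.coeFn_sub] at h1
  simp only [Pi.sub_apply, Real.norm_eq_abs] at h1
  simp only [Real.dist_eq, NNReal.coe_one, one_mul, ← hT x y]
  exact h1

noncomputable def entryFn (T : M → lp (fun _ : ι => ℝ) ⊤) (e : ℚ × List (ι × ℚ)) (x : M) : ℝ :=
  (e.1 : ℝ) + (e.2.map fun p => |T x p.1 - (p.2 : ℝ)|).foldr max 0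

lemma lip_entryFn (T : M → lp (fun _ : ι => ℝ) ⊤)
    (hT : ∀ x y : M, ‖T x - T y‖ = dist x y) (e : ℚ × List (ι × ℚ)) :
    LipschitzWith 1 (entryFn T e) := by
  obtain ⟨q, l⟩ := e
  have hmax : ∀ l : List (ι × ℚ),
      LipschitzWith 1 fun x : M => (l.map fun p => |T x p.1 - (p.2 : ℝ)|).foldr max 0 := by
    intro l
    induction l with
    | nil =>
      simp only [List.map_nil, List.foldr_nil]
      exact LipschitzWith.const' (0 : ℝ)
    | cons p l ih =>
      have hp : LipschitzWith 1 fun x : M => |T x p.1 - (p.2 : ℝ)| := by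
        refine LipschitzWith.of_dist_le_mul fun x y => ?_
        have h2 := (lip_coord T hT p.1).dist_le_mul x y
        rw [Real.dist_eq] at h2 ⊢
        have key : |(|T x p.1 - (p.2:ℝ)|) - (|T y p.1 - (p.2:ℝ)|)| ≤
            |(T x p.1 - (p.2:ℝ)) - (T y p.1 - (p.2:ℝ))| := abs_abs_sub_abs_le_abs_sub _ _
        calc |(|T x p.1 - (p.2:ℝ)|) - (|T y p.1 - (p.2:ℝ)|)|
            ≤ |(T x p.1 - (p.2:ℝ)) - (T y p.1 - (p.2:ℝ))| := key
          _ = |T x p.1 - T y p.1| := by ring_nf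
          _ ≤ ↑(1:NNReal) * dist x y := h2
      have : (fun x : M => ((p :: l).map fun p => |T x p.1 - (p.2 : ℝ)|).foldr max 0)
          = fun x : M => max (|T x p.1 - (p.2 : ℝ)|)
              ((l.map fun p => |T x p.1 - (p.2 : ℝ)|).foldr max 0) := by
        funext x; simp
      rw [this]
      exact (hp.max ih).weaken (by norm_num)
  refine LipschitzWith.of_dist_le_mul fun x y => ?_
  have h3 := (hmax l).dist_le_mul x y
  simp only [entryFn]
  rwa [dist_add_left]

noncomputable def bigFn (T : M → lp (fun _ : ι => ℝ) ⊤) (o : M)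
    (L : List (ℚ × List (ι × ℚ))) (x : M) : ℝ :=
  (L.map fun e => entryFn T e x).foldr min (dist x o)

lemma lip_bigFn (T : M → lp (fun _ : ι => ℝ) ⊤)
    (hT : ∀ x y : M, ‖T x - T y‖ = dist x y) (o : M) (L : List (ℚ × List (ι × ℚ))) :
    LipschitzWith 1 (bigFn T o L) := by
  induction L with
  | nil => exact LipschitzWith.dist_left (α := M) o
  | cons e L ih =>
    have h4 : bigFn T o (e :: L) = fun x => min (entryFn T e x) (bigFn T o L x) := by
      funext x; simp [bigFn]
    rw [h4]
    exact ((lip_entryFn T hT e).min ih).weaken (by norm_num)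

noncomputable def gFn (T : M → lp (fun _ : ι => ℝ) ⊤) (o : M)
    (L : List (ℚ × List (ι × ℚ))) (x : M) : ℝ := bigFn T o L x - bigFn T o L o

lemma gFn_mem (T : M → lp (fun _ : ι => ℝ) ⊤)
    (hT : ∀ x y : M, ‖T x - T y‖ = dist x y) (o : M) (L : List (ℚ × List (ι × ℚ))) :
    LipschitzWith 1 (gFn T o L) ∧ gFn T o L o = 0 :=
  ⟨lip_sub_const (lip_bigFn T hT o L) _, sub_self _⟩
-- foldr lemmas
lemma foldr_min_le_base (l : List ℝ) (b : ℝ) : l.foldr min b ≤ b := by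
  induction l with
  | nil => simp
  | cons a l ih => exact le_trans (min_le_right _ _) ih

lemma foldr_min_le_mem {l : List ℝ} {a : ℝ} (h : a ∈ l) (b : ℝ) : l.foldr min b ≤ a := by
  induction l with
  | nil => simp at h
  | cons c l ih =>
    rcases List.mem_cons.1 h with rfl | h
    · exact min_le_left _ _
    · exact le_trans (min_le_right _ _) (ih h)

lemma le_foldr_min {l : List ℝ} {b c : ℝ} (hb : c ≤ b) (h : ∀ a ∈ l, c ≤ a) :
    c ≤ l.foldr min b := by
  induction l with
  | nil => simpa
  | cons a l ih =>
    exact le_min (h a (by simp)) (ih fun a ha => h a (List.mem_cons_of_mem _ ha))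

lemma base_le_foldr_max (l : List ℝ) (b : ℝ) : b ≤ l.foldr max b := by
  induction l with
  | nil => simp
  | cons a l ih => exact le_trans ih (le_max_right _ _)

lemma mem_le_foldr_max {l : List ℝ} {a : ℝ} (h : a ∈ l) (b : ℝ) : a ≤ l.foldr max b := by
  induction l with
  | nil => simp at h
  | cons c l ih =>
    rcases List.mem_cons.1 h with rfl | h
    · exact le_max_left _ _
    · exact le_trans (ih h) (le_max_right _ _)

lemma foldr_max_le {l : List ℝ} {b c : ℝ} (hb : b ≤ c) (h : ∀ a ∈ l, a ≤ c) :
    l.foldr max b ≤ c := by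
  induction l with
  | nil => simpa
  | cons a l ih =>
    exact max_le (h a (by simp)) (ih fun a ha => h a (List.mem_cons_of_mem _ ha))


lemma approx (T : M → lp (fun _ : ι => ℝ) ⊤) [Infinite ι]
    (hT : ∀ x y : M, ‖T x - T y‖ = dist x y) (o : M) {f : M → ℝ}
    (hf : LipschitzWith 1 f) (hfo : f o = 0) (F : Finset M) {δ : ℝ} (hδ : 0 < δ) :
    ∃ L : List (ℚ × List (ι × ℚ)), ∀ x ∈ F, |gFn T o L x - f x| < δ := by
  classical
  set ε := δ / 8 with hεdef
  have hε : 0 < ε := by positivity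
  have hflip : ∀ x y : M, f x - f y ≤ dist x y := by
    intro x y
    have := hf.dist_le_mul x y
    rw [Real.dist_eq, NNReal.coe_one, one_mul] at this
    exact (sub_le_iff_le_add.2 (by linarith [le_abs_self (f x - f y)]))
  have hi : ∀ x y : M, ∃ i : ι, dist x y - ε < |T x i - T y i| := by
    intro x y
    have h1 : dist x y - ε < ⨆ i, ‖(T x - T y) i‖ := by
      rw [← lp.norm_eq_ciSup, hT]; linarith
    obtain ⟨i, hi⟩ := exists_lt_of_lt_ciSup h1
    refine ⟨i, ?_⟩
    rw [lp.coeFn_sub] at hi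
    simpa [Real.norm_eq_abs] using hi
  choose i hi using hi
  have hr : ∀ x y : M, ∃ s : ℚ, |T y (i x y) - (s : ℝ)| < ε :=
    fun x y => exists_rat_near _ hε
  choose r hr using hr
  have hq : ∀ y : M, ∃ s : ℚ, |f y - (s : ℝ)| < ε := fun y => exists_rat_near _ hε
  choose q hq using hq
  set F' : Finset M := insert o F with hF'
  set inner : M → List (ι × ℚ) := fun y => F'.toList.map fun x => (i x y, r x y) with hinner
  set L : List (ℚ × List (ι × ℚ)) := F'.toList.map fun y => (q y, inner y) with hL
  -- upper bound
  have hup : ∀ x ∈ F', bigFn T o L x ≤ f x + 2 * ε := by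
    intro x hx
    have hxl : x ∈ F'.toList := Finset.mem_toList.2 hx
    have hmem : entryFn T (q x, inner x) x ∈ L.map fun e => entryFn T e x := by
      simp only [hL, List.map_map]
      exact List.mem_map.2 ⟨x, hxl, rfl⟩
    have h1 : bigFn T o L x ≤ entryFn T (q x, inner x) x := foldr_min_le_mem hmem _
    have h2 : entryFn T (q x, inner x) x ≤ (q x : ℝ) + ε := by
      rw [entryFn]
      have : ((inner x).map fun p => |T x p.1 - (p.2 : ℝ)|).foldr max 0 ≤ ε := by
        refine foldr_max_le hε.le ?_
        intro a ha
        obtain ⟨p, hp, rfl⟩ := List.mem_map.1 ha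
        obtain ⟨x', _, rfl⟩ := List.mem_map.1 hp
        exact (hr x' x).le
      linarith
    have h3 : (q x : ℝ) ≤ f x + ε := by
      have := hq x
      rw [abs_sub_lt_iff] at this
      linarith [this.2]
    linarith
  -- lower bound
  have hlo : ∀ x ∈ F', f x - 3 * ε ≤ bigFn T o L x := by
    intro x hx
    have hxl : x ∈ F'.toList := Finset.mem_toList.2 hx
    refine le_foldr_min ?_ ?_
    · have : f x - f o ≤ dist x o := hflip x o
      rw [hfo] at this
      linarith
    · intro a ha
      obtain ⟨e, he, rfl⟩ := List.mem_map.1 ha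
      obtain ⟨y, hyl, rfl⟩ := List.mem_map.1 he
      rw [entryFn]
      have hterm : |T x (i x y) - (r x y : ℝ)| ∈
          (inner y).map fun p => |T x p.1 - (p.2 : ℝ)| := by
        exact List.mem_map.2 ⟨(i x y, r x y), List.mem_map.2 ⟨x, hxl, rfl⟩, rfl⟩
      have h1 : |T x (i x y) - (r x y : ℝ)| ≤
          ((inner y).map fun p => |T x p.1 - (p.2 : ℝ)|).foldr max 0 :=
        mem_le_foldr_max hterm _
      have h2 : dist x y - 2 * ε ≤ |T x (i x y) - (r x y : ℝ)| := by
        have ha := hi x y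
        have hb := hr x y
        have htri : |T x (i x y) - T y (i x y)| ≤
            |T x (i x y) - (r x y : ℝ)| + |T y (i x y) - (r x y : ℝ)| := by
          have := abs_sub_abs_le_abs_sub (T x (i x y) - (r x y : ℝ)) (T y (i x y) - (r x y : ℝ))
          have h := abs_sub (T x (i x y) - (r x y : ℝ)) (T y (i x y) - (r x y : ℝ))
          calc |T x (i x y) - T y (i x y)|
              = |(T x (i x y) - (r x y : ℝ)) - (T y (i x y) - (r x y : ℝ))| := by ring_nf
            _ ≤ _ := abs_sub _ _
        linarith
      have h3 : f y - ε ≤ (q y : ℝ) := by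
        have := hq y
        rw [abs_sub_lt_iff] at this
        linarith [this.1]
      have h4 : f x - f y ≤ dist x y := hflip x y
      linarith
  refine ⟨L, fun x hx => ?_⟩
  have hxF' : x ∈ F' := Finset.mem_insert_of_mem hx
  have hoF' : o ∈ F' := Finset.mem_insert_self o F
  have e1 := hup x hxF'
  have e2 := hlo x hxF'
  have e3 := hup o hoF'
  have e4 := hlo o hoF'
  rw [hfo] at e3 e4
  rw [gFn, abs_sub_lt_iff]
  constructor <;> [linarith; linarith]


lemma card_list_le (ι : Type u) [Infinite ι] : #(List (ℚ × List (ι × ℚ))) ≤ #ι := by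
  have hq : #ℚ = ℵ₀ := Cardinal.mk_eq_aleph0 ℚ
  have h1 : #(ι × ℚ) = #ι := by
    rw [Cardinal.mk_prod, hq, Cardinal.lift_aleph0, Cardinal.lift_uzero]
    exact Cardinal.mul_aleph0_eq (Cardinal.aleph0_le_mk ι)
  have h2 : #(List (ι × ℚ)) = #ι := by rw [Cardinal.mk_list_eq_mk, h1]
  have h3 : #(ℚ × List (ι × ℚ)) = #ι := by
    rw [Cardinal.mk_prod, hq, Cardinal.lift_aleph0, Cardinal.lift_uzero, h2]
    exact Cardinal.aleph0_mul_eq (Cardinal.aleph0_le_mk ι)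
  rw [Cardinal.mk_list_eq_mk, h3]

end LinftyAux

open LinftyAux in
theorem isometric_embedding_linfty_iff_lip_ball_pointwise_density
    (M : Type u) [MetricSpace M] (o : M) (ι : Type u) [Infinite ι] :
    (∃ T : M → lp (fun _ : ι => ℝ) ⊤, ∀ x y : M, ‖T x - T y‖ = dist x y) ↔
    (∃ S ⊆ {f : M → ℝ | LipschitzWith 1 f ∧ f o = 0}, #S ≤ #ι ∧
      ∀ f ∈ {f : M → ℝ | LipschitzWith 1 f ∧ f o = 0}, f ∈ closure S) := by
  classical
  constructor
  · rintro ⟨T, hT⟩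
    refine ⟨Set.range (gFn T o), ?_, ?_, ?_⟩
    · rintro _ ⟨L, rfl⟩
      exact gFn_mem T hT o L
    · exact le_trans Cardinal.mk_range_le (card_list_le ι)
    · rintro f ⟨hf, hfo⟩
      rw [mem_closure_iff_nhds]
      intro t ht
      rw [nhds_pi] at ht
      obtain ⟨I, hIfin, t', ht', hsub⟩ := Filter.mem_pi.1 ht
      have hball : ∀ x : M, ∃ ε > 0, Metric.ball (f x) ε ⊆ t' x := fun x =>
        Metric.mem_nhds_iff.1 (ht' x)
      choose ε hεpos hballs using hball
      set Fs : Finset M := hIfin.toFinset with hFs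
      obtain ⟨δ, hδ, hδle⟩ : ∃ δ > 0, ∀ x ∈ Fs, δ ≤ ε x := by
        rcases Fs.eq_empty_or_nonempty with h | h
        · exact ⟨1, one_pos, by simp [h]⟩
        · refine ⟨Fs.inf' h ε, ?_, fun x hx => Finset.inf'_le _ hx⟩
          obtain ⟨x, hx, hxe⟩ := Finset.exists_mem_eq_inf' h ε
          rw [hxe]; exact hεpos x
      obtain ⟨L, hL⟩ := approx T hT o hf hfo Fs hδ
      refine ⟨gFn T o L, hsub ?_, Set.mem_range_self L⟩
      rw [Set.mem_pi]
      intro x hxI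
      have hxF : x ∈ Fs := hIfin.mem_toFinset.2 hxI
      apply hballs x
      rw [Metric.mem_ball, Real.dist_eq]
      exact lt_of_lt_of_le (hL x hxF) (hδle x hxF)
  · rintro ⟨S, hSB, hcard, hdense⟩
    obtain ⟨e⟩ := (Cardinal.le_def _ _).1 hcard
    set g : M → ι → ℝ := fun x => Function.extend e (fun s => (s : M → ℝ) x) fun _ => 0
      with hgdef
    have hgdiff : ∀ x y : M, ∀ i : ι, |g x i - g y i| ≤ dist x y := by
      intro x y i
      by_cases h : ∃ s : ↥S, e s = i
      · obtain ⟨s, rfl⟩ := h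
        simp only [hgdef, Function.Injective.extend_apply e.injective]
        have hlip := (hSB s.2).1.dist_le_mul x y
        rw [Real.dist_eq, NNReal.coe_one, one_mul] at hlip
        exact hlip
      · simp only [hgdef, Function.extend_apply' _ _ _ h]
        simpa using dist_nonneg
    have hgo : ∀ i, g o i = 0 := by
      intro i
      by_cases h : ∃ s : ↥S, e s = i
      · obtain ⟨s, rfl⟩ := h
        simp only [hgdef, Function.Injective.extend_apply e.injective]
        exact (hSB s.2).2
      · simp only [hgdef, Function.extend_apply' _ _ _ h]
    have hmem : ∀ x : M, Memℓp (g x) ⊤ := by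
      intro x
      apply memℓp_infty
      refine ⟨dist x o, ?_⟩
      rintro _ ⟨i, rfl⟩
      have := hgdiff x o i
      rw [hgo i, sub_zero] at this
      simpa [Real.norm_eq_abs] using this
    set T : M → lp (fun _ : ι => ℝ) ⊤ := fun x => ⟨g x, hmem x⟩ with hTdef
    have hcoe : ∀ (x : M) (i : ι), (T x : ∀ _ : ι, ℝ) i = g x i := fun x i => rfl
    refine ⟨T, fun x y => le_antisymm ?_ ?_⟩
    · refine lp.norm_le_of_forall_le dist_nonneg fun i => ?_
      have : ((T x - T y : lp (fun _ : ι => ℝ) ⊤) : ∀ _ : ι, ℝ) i = g x i - g y i := by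
        rw [lp.coeFn_sub]; rfl
      rw [this]
      simpa [Real.norm_eq_abs] using hgdiff x y i
    · refine le_of_forall_pos_le_add fun ε hε => ?_
      set h : M → ℝ := fun z => dist z y - dist o y with hhdef
      have hhB : LipschitzWith 1 h ∧ h o = 0 :=
        ⟨lip_sub_const (LipschitzWith.dist_left y) _, sub_self _⟩
      have hcl := hdense h hhB
      set U : Set (M → ℝ) :=
        (fun u : M → ℝ => u x) ⁻¹' Metric.ball (h x) (ε / 2) ∩
          (fun u : M → ℝ => u y) ⁻¹' Metric.ball (h y) (ε / 2) with hUdef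
      have hUo : IsOpen U :=
        (Metric.isOpen_ball.preimage (continuous_apply x)).inter
          (Metric.isOpen_ball.preimage (continuous_apply y))
      have hhU : h ∈ U := by
        constructor <;> simp [Metric.mem_ball, hε, half_pos hε]
      obtain ⟨u, huU, huS⟩ := mem_closure_iff_nhds.1 hcl U (hUo.mem_nhds hhU)
      obtain ⟨hux, huy⟩ := huU
      rw [Set.mem_preimage, Metric.mem_ball, Real.dist_eq] at hux huy
      have h1 : |u x - u y| ≤ ‖T x - T y‖ := by
        have hb := lp.norm_apply_le_norm ENNReal.top_ne_zero (T x - T y) (e ⟨u, huS⟩)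
        have hc : ((T x - T y : lp (fun _ : ι => ℝ) ⊤) : ∀ _ : ι, ℝ) (e ⟨u, huS⟩)
            = u x - u y := by
          rw [lp.coeFn_sub]
          show g x (e ⟨u, huS⟩) - g y (e ⟨u, huS⟩) = u x - u y
          simp only [hgdef, Function.Injective.extend_apply e.injective]
        rw [hc, Real.norm_eq_abs] at hb
        exact hb
      have h2 : h x - h y = dist x y := by
        simp only [hhdef]
        rw [dist_self]
        ring
      have h3 : dist x y ≤ |u x - u y| + ε := by
        have t1 : h x - h y ≤ |u x - h x| + |u x - u y| + |u y - h y| := by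
          have := abs_sub_abs_le_abs_sub (u x - h x) (u y - h y)
          calc h x - h y ≤ |h x - u x| + (u x - u y) + (u y - h y) := by
                have := le_abs_self (h x - u x)
                have := le_abs_self (u y - h y)
                linarith [le_abs_self (h x - u x), le_abs_self (u y - h y)]
            _ ≤ |u x - h x| + |u x - u y| + |u y - h y| := by
                rw [abs_sub_comm (h x) (u x)]
                linarith [le_abs_self (u x - u y), le_abs_self (u y - h y),
                  abs_nonneg (u y - h y)]
        rw [h2] at t1
        linarith
      linarith
end

section
/- Let ι be an index type of cardinality at most 2^ℵ₀ and let (X_i)_{i∈ι} be a family of real Banach spaces such that for each i the dual of X_i is weak*-separable, i.e., WeakDual ℝ X_i is a separable topological space. Let Y be a real Banach space admitting an injective bounded linear map into the ℓ₁-sum lp X 1. Then WeakDual ℝ Y is separable. -/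
open Cardinal TopologicalSpace

noncomputable section

universe u v w


variable {Z : Type*} [NormedAddCommGroup Z] [NormedSpace ℝ Z]

lemma exists_separating_seq (h : SeparableSpace (WeakDual ℝ Z)) :
    ∃ d : ℕ → Z →L[ℝ] ℝ, (∀ k, ‖d k‖ ≤ 1) ∧ ∀ v : Z, v ≠ 0 → ∃ k, d k v ≠ 0 := by
  obtain ⟨D, Dcount, Ddense⟩ := TopologicalSpace.exists_countable_dense (WeakDual ℝ Z)
  have hne : (insert (0 : WeakDual ℝ Z) D).Nonempty := ⟨0, Set.mem_insert _ _⟩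
  obtain ⟨e, he⟩ := Set.Countable.exists_eq_range (Dcount.insert 0) hne
  set d : ℕ → Z →L[ℝ] ℝ := fun k =>
    (1 + ‖WeakDual.toStrongDual (e k)‖)⁻¹ • (WeakDual.toStrongDual (e k)) with hd
  have hpos : ∀ k, 0 < 1 + ‖WeakDual.toStrongDual (e k)‖ := fun k => by positivity
  refine ⟨d, fun k => ?_, fun v hv => ?_⟩
  · show ‖(1 + ‖WeakDual.toStrongDual (e k)‖)⁻¹ • WeakDual.toStrongDual (e k)‖ ≤ 1
    rw [norm_smul, Real.norm_eq_abs, abs_inv, abs_of_pos (hpos k)]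
    rw [inv_mul_le_iff₀ (hpos k), mul_one]
    linarith [norm_nonneg (WeakDual.toStrongDual (e k))]
  · by_contra hcon
    push_neg at hcon
    have hev : ∀ k, (e k) v = 0 := by
      intro k
      have := hcon k
      rw [hd] at this
      simp only [ContinuousLinearMap.smul_apply, smul_eq_mul, mul_eq_zero] at this
      rcases this with h1 | h2
      · exact absurd h1 (by positivity)
      · exact h2
    have hclosed : IsClosed {φ : WeakDual ℝ Z | φ v = 0} :=
      isClosed_eq (WeakDual.eval_continuous v) continuous_const
    have hsub : D ⊆ {φ : WeakDual ℝ Z | φ v = 0} := by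
      intro φ hφ
      have : φ ∈ Set.range e := he ▸ Set.mem_insert_of_mem _ hφ
      obtain ⟨k, rfl⟩ := this
      exact hev k
    have : closure D ⊆ {φ : WeakDual ℝ Z | φ v = 0} := hclosed.closure_subset_iff.mpr hsub
    rw [Ddense.closure_eq] at this
    obtain ⟨g, hg1, hg2⟩ := exists_dual_vector ℝ v (norm_ne_zero_iff.mpr hv)
    have : (StrongDual.toWeakDual g) v = 0 := this (Set.mem_univ _)
    rw [show (StrongDual.toWeakDual g) v = g v from rfl, hg2] at this
    exact hv (norm_eq_zero.mp this)


instance wdLocallyConvex : LocallyConvexSpace ℝ (WeakDual ℝ Z) :=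
  WeakBilin.locallyConvexSpace (B := topDualPairing ℝ Z)


lemma weakDual_clm_exists_eval (f : WeakDual ℝ Z →L[ℝ] ℝ) :
    ∃ y : Z, ∀ φ : WeakDual ℝ Z, f φ = φ y := by
  set B := topDualPairing ℝ Z with hB
  have hw := B.weakBilin_withSeminorms
  let g : WeakBilin B →L[ℝ] ℝ := f
  let q : Seminorm ℝ (WeakBilin B) := (normSeminorm ℝ ℝ).comp (g : WeakBilin B →ₗ[ℝ] ℝ)
  have hq : Continuous q := g.continuous.norm
  obtain ⟨s, C, hC, hle⟩ := Seminorm.bound_of_continuous hw q hq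
  have hker : ⨅ (y : ↥s), LinearMap.ker (B.flip (y : Z)) ≤
      LinearMap.ker (g : WeakBilin B →ₗ[ℝ] ℝ) := by
    intro φ hφ
    simp only [Submodule.mem_iInf, LinearMap.mem_ker] at hφ
    have h0 : (s.sup (B.toSeminormFamily)) φ = 0 := by
      refine le_antisymm (Seminorm.finset_sup_apply_le le_rfl fun y hy => ?_)
        (apply_nonneg _ _)
      have hy0 : B φ y = 0 := by
        have := hφ ⟨y, hy⟩
        simpa using this
      simp [LinearMap.toSeminormFamily, hy0]
    have h1 : q φ ≤ (C • s.sup B.toSeminormFamily) φ := hle φ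
    rw [Seminorm.smul_apply, h0, smul_zero] at h1
    have hq0 : ‖g φ‖ ≤ 0 := h1
    exact norm_le_zero_iff.mp hq0
  have hmem := mem_span_of_iInf_ker_le_ker hker
  obtain ⟨c, hc⟩ := (Submodule.mem_span_range_iff_exists_fun ℝ).1 hmem
  refine ⟨∑ i : ↥s, c i • (i : Z), fun φ => ?_⟩
  have h2 := congrArg (fun (K : WeakBilin B →ₗ[ℝ] ℝ) => K φ) hc
  have h3 : f φ = ∑ i : ↥s, c i * (B φ) ↑i :=
    (LinearMap.congr_fun hc φ).symm.trans
      ((LinearMap.sum_apply _ _ _).trans (Finset.sum_congr rfl fun i _ => rfl))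
  rw [h3, map_sum]
  simp only [map_smul, smul_eq_mul]
  rfl

lemma separable_of_separating (S : Set (Z →L[ℝ] ℝ)) (hS : S.Countable)
    (hsepS : ∀ v : Z, v ≠ 0 → ∃ f ∈ S, f v ≠ 0) :
    SeparableSpace (WeakDual ℝ Z) := by
  let S' : Set (WeakDual ℝ Z) := S
  have hS' : S'.Countable := hS
  rw [← isSeparable_univ_iff]
  have hspan : IsSeparable (Submodule.span ℝ S' : Set (WeakDual ℝ Z)) :=
    hS'.isSeparable.span
  have hclos : closure (Submodule.span ℝ S' : Set (WeakDual ℝ Z)) = Set.univ := by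
    by_contra hne
    obtain ⟨φ, hφ⟩ : ∃ φ : WeakDual ℝ Z,
        φ ∉ closure (Submodule.span ℝ S' : Set (WeakDual ℝ Z)) := by
      by_contra h
      push_neg at h
      exact hne (Set.eq_univ_of_forall h)
    set M := (Submodule.span ℝ S').topologicalClosure with hM
    have hMc : (M : Set (WeakDual ℝ Z)) = closure (Submodule.span ℝ S' : Set (WeakDual ℝ Z)) :=
      rfl
    have hconv : Convex ℝ (M : Set (WeakDual ℝ Z)) := M.convex
    have hclosed : IsClosed (M : Set (WeakDual ℝ Z)) := by
      rw [hMc]; exact isClosed_closure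
    have hφM : φ ∉ (M : Set (WeakDual ℝ Z)) := by rw [hMc]; exact hφ
    obtain ⟨f, u, hfa, hfφ⟩ := geometric_hahn_banach_closed_point hconv hclosed hφM
    -- f vanishes on M
    have hf0 : ∀ a ∈ M, f a = 0 := by
      intro a ha
      by_contra hfa0
      have h1 : ∀ c : ℝ, c * f a < u := by
        intro c
        have : f (c • a) < u := hfa _ (M.smul_mem c ha)
        simpa using this
      rcases lt_or_gt_of_ne hfa0 with hneg | hpos
      · have := h1 ((u + 1) / f a)
        rw [div_mul_cancel₀ _ hfa0] at this
        linarith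
      · have := h1 ((u + 1) / f a)
        rw [div_mul_cancel₀ _ hfa0] at this
        linarith
    have hu0 : 0 < u := by
      have h0M : (0 : WeakDual ℝ Z) ∈ M := M.zero_mem
      have := hfa 0 h0M
      simpa using this
    obtain ⟨y, hy⟩ := weakDual_clm_exists_eval f
    have hyne : y ≠ 0 := by
      intro h
      rw [h] at hy
      have : f φ = 0 := by rw [hy φ]; exact map_zero φ
      linarith [hfφ]
    obtain ⟨g, hgS, hgy⟩ := hsepS y hyne
    have hgM : (g : WeakDual ℝ Z) ∈ M :=
      (Submodule.span ℝ S').le_topologicalClosure (Submodule.subset_span hgS)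
    have : f g = 0 := hf0 _ hgM
    rw [hy g] at this
    exact hgy this
  rw [← hclos]
  exact hspan.closure


variable {ι : Type*} {X : ι → Type*} [∀ i, NormedAddCommGroup (X i)]
  [∀ i, NormedSpace ℝ (X i)]

lemma lp_one_summable_norm (x : lp X 1) : Summable fun i => ‖x i‖ := by
  have := (lp.memℓp x).summable (p := 1) (by norm_num)
  simpa using this

lemma lp_one_norm_eq (x : lp X 1) : ‖x‖ = ∑' i, ‖x i‖ := by
  have := lp.norm_eq_tsum_rpow (p := 1) (by norm_num) x
  simpa using this

lemma ell1_summable (g : ∀ i, X i →L[ℝ] ℝ) {C : ℝ} (hg : ∀ i, ‖g i‖ ≤ C) (x : lp X 1) :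
    Summable fun i => ‖g i (x i)‖ := by
  refine Summable.of_nonneg_of_le (fun i => norm_nonneg _) (fun i => ?_)
    ((lp_one_summable_norm x).mul_left C)
  calc ‖g i (x i)‖ ≤ ‖g i‖ * ‖x i‖ := (g i).le_opNorm _
    _ ≤ C * ‖x i‖ := by
        have := norm_nonneg (x i)
        nlinarith [hg i]

lemma ell1_bound (g : ∀ i, X i →L[ℝ] ℝ) {C : ℝ} (hC : 0 ≤ C) (hg : ∀ i, ‖g i‖ ≤ C)
    (x : lp X 1) : ‖∑' i, g i (x i)‖ ≤ C * ‖x‖ := by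
  calc ‖∑' i, g i (x i)‖ ≤ ∑' i, ‖g i (x i)‖ := norm_tsum_le_tsum_norm (ell1_summable g hg x)
    _ ≤ ∑' i, C * ‖x i‖ := by
        refine Summable.tsum_le_tsum (fun i => ?_) (ell1_summable g hg x)
          ((lp_one_summable_norm x).mul_left C)
        calc ‖g i (x i)‖ ≤ ‖g i‖ * ‖x i‖ := (g i).le_opNorm _
          _ ≤ C * ‖x i‖ := by nlinarith [hg i, norm_nonneg (x i)]
    _ = C * ∑' i, ‖x i‖ := tsum_mul_left
    _ = C * ‖x‖ := by rw [lp_one_norm_eq x]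

/-- The bounded functional on an `ℓ¹`-sum induced by a uniformly bounded family of
functionals. -/
def ell1Fun (g : ∀ i, X i →L[ℝ] ℝ) (C : ℝ) (hC : 0 ≤ C) (hg : ∀ i, ‖g i‖ ≤ C) :
    lp X 1 →L[ℝ] ℝ :=
  LinearMap.mkContinuous
    { toFun := fun x => ∑' i, g i (x i)
      map_add' := by
        intro x y
        have hx := (ell1_summable g hg x).of_norm
        have hy := (ell1_summable g hg y).of_norm
        exact (tsum_congr fun i => by
          have : ((x + y : lp X 1) : ∀ i, X i) i = x i + y i := by simp [lp.coeFn_add]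
          rw [this, map_add]).trans (Summable.tsum_add hx hy)
      map_smul' := by
        intro c x
        rw [RingHom.id_apply]
        exact (tsum_congr fun i => by
          have : ((c • x : lp X 1) : ∀ i, X i) i = c • x i := by simp [lp.coeFn_smul]
          rw [this, map_smul, smul_eq_mul]).trans (by rw [tsum_mul_left]; rfl) }
    C (fun x => ell1_bound g hC hg x)

@[simp] lemma ell1Fun_apply (g : ∀ i, X i →L[ℝ] ℝ) (C : ℝ) (hC : 0 ≤ C)
    (hg : ∀ i, ‖g i‖ ≤ C) (x : lp X 1) :
    ell1Fun g C hC hg x = ∑' i, g i (x i) := rfl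
lemma abs_tsum_le' {α : Type*} {f : α → ℝ} (h : Summable fun i => |f i|) :
    |∑' i, f i| ≤ ∑' i, |f i| := by
  have h' : Summable fun i => ‖f i‖ := by simpa only [Real.norm_eq_abs] using h
  simpa only [Real.norm_eq_abs] using norm_tsum_le_tsum_norm h'

set_option synthInstance.maxHeartbeats 1000000 in
set_option maxHeartbeats 2000000 in
lemma exists_separating_ell1 (hι : #ι ≤ Cardinal.continuum)
    (hsep : ∀ i, SeparableSpace (WeakDual ℝ (X i))) :
    ∃ S : Set ((lp X 1) →L[ℝ] ℝ), S.Countable ∧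
      ∀ x : lp X 1, x ≠ 0 → ∃ f ∈ S, f x ≠ 0 := by
  classical
  choose d hd1 hd2 using fun i => exists_separating_seq (hsep i)
  have hcard : Cardinal.lift.{0} #ι ≤ Cardinal.lift #ℝ := by
    rw [Cardinal.mk_real, Cardinal.lift_continuum]
    simpa using hι
  obtain ⟨e⟩ : Nonempty (ι ↪ ℝ) := Cardinal.lift_mk_le'.mp hcard
  set t : ι → ℝ := fun i => Real.arctan (e i) with ht
  have htinj : Function.Injective t := fun a b hab => e.injective (Real.arctan_injective hab)
  have htmem : ∀ i, t i ∈ Set.Icc (-2:ℝ) 2 := fun i => by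
    have h1 := Real.arctan_lt_pi_div_two (e i)
    have h2 := Real.neg_pi_div_two_lt_arctan (e i)
    have hpi := Real.pi_lt_d2
    exact ⟨by simp only [ht]; linarith, by simp only [ht]; linarith⟩
  obtain ⟨D, Dcount, Ddense⟩ := exists_countable_dense C(Set.Icc (-2:ℝ) 2, ℝ)
  have hbound : ∀ (f : C(Set.Icc (-2:ℝ) 2, ℝ)) (k : ℕ) (i : ι),
      ‖f ⟨t i, htmem i⟩ • d i k‖ ≤ ‖f‖ := by
    intro f k i
    refine (norm_smul_le (f ⟨t i, htmem i⟩) (d i k)).trans ?_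
    calc ‖f ⟨t i, htmem i⟩‖ * ‖d i k‖ ≤ ‖f‖ * 1 := by
          have h1 := f.norm_coe_le_norm ⟨t i, htmem i⟩
          have h2 := hd1 i k
          have h3 := norm_nonneg (f ⟨t i, htmem i⟩)
          nlinarith [norm_nonneg (d i k)]
      _ = ‖f‖ := mul_one _
  set Φ : C(Set.Icc (-2:ℝ) 2, ℝ) → ℕ → (lp X 1 →L[ℝ] ℝ) := fun f k =>
    ell1Fun (fun i => f ⟨t i, htmem i⟩ • d i k) ‖f‖ (norm_nonneg f) (hbound f k) with hΦ
  refine ⟨Set.image2 Φ D Set.univ, Dcount.image2 Set.countable_univ _, ?_⟩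
  intro x hx
  have hxi : ∃ i₀, x i₀ ≠ 0 := by
    by_contra h; push_neg at h
    exact hx (by ext i; simp [h i])
  obtain ⟨i₀, hx0⟩ := hxi
  obtain ⟨k, hk⟩ := hd2 i₀ (x i₀) hx0
  by_contra hcon
  push_neg at hcon
  set a : ι → ℝ := fun i => d i k (x i) with ha'
  have hale : ∀ i, |a i| ≤ ‖x i‖ := by
    intro i
    calc |a i| = ‖d i k (x i)‖ := rfl
      _ ≤ ‖d i k‖ * ‖x i‖ := (d i k).le_opNorm _
      _ ≤ 1 * ‖x i‖ := by
          have := hd1 i k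
          nlinarith [norm_nonneg (x i), norm_nonneg (d i k)]
      _ = ‖x i‖ := one_mul _
  have hasum : Summable fun i => |a i| :=
    Summable.of_nonneg_of_le (fun i => abs_nonneg _) hale (lp_one_summable_norm x)
  set L : C(Set.Icc (-2:ℝ) 2, ℝ) → ℝ := fun f => ∑' i, f ⟨t i, htmem i⟩ * a i with hL
  have hsumf : ∀ f : C(Set.Icc (-2:ℝ) 2, ℝ),
      Summable fun i => ‖f ⟨t i, htmem i⟩ * a i‖ := by
    intro f
    refine Summable.of_nonneg_of_le (fun i => norm_nonneg _) (fun i => ?_)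
      (hasum.mul_left ‖f‖)
    rw [norm_mul, Real.norm_eq_abs (a i)]
    have h1 := f.norm_coe_le_norm ⟨t i, htmem i⟩
    have h2 := abs_nonneg (a i)
    nlinarith [norm_nonneg (f ⟨t i, htmem i⟩)]
  have hΦx : ∀ f, Φ f k x = L f := by
    intro f
    rw [hΦ]
    rw [ell1Fun_apply]
    exact tsum_congr fun i => by
      rw [ContinuousLinearMap.smul_apply, smul_eq_mul]
  have hLD : ∀ f ∈ D, L f = 0 := by
    intro f hf
    rw [← hΦx f]
    exact hcon (Φ f k) (Set.mem_image2_of_mem hf (Set.mem_univ k))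
  have hcontL : Continuous L := by
    refine (LipschitzWith.of_dist_le_mul
      (K := Real.toNNReal (∑' i, |a i|)) (f := L) ?_).continuous
    intro f g
    rw [Real.dist_eq]
    have h1 : L f - L g = ∑' i, (f ⟨t i, htmem i⟩ - g ⟨t i, htmem i⟩) * a i := by
      rw [hL]
      dsimp only
      rw [← Summable.tsum_sub (hsumf f).of_norm (hsumf g).of_norm]
      exact tsum_congr fun i => by ring
    rw [h1]
    have hptle : ∀ i, |(f ⟨t i, htmem i⟩ - g ⟨t i, htmem i⟩) * a i| ≤ dist f g * |a i| := by
      intro i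
      rw [abs_mul]
      have h2 : |f ⟨t i, htmem i⟩ - g ⟨t i, htmem i⟩| ≤ dist f g := by
        rw [← Real.dist_eq]
        exact ContinuousMap.dist_apply_le_dist _
      have h3 := abs_nonneg (a i)
      nlinarith [abs_nonneg (f ⟨t i, htmem i⟩ - g ⟨t i, htmem i⟩)]
    have hsum1 : Summable fun i => |(f ⟨t i, htmem i⟩ - g ⟨t i, htmem i⟩) * a i| :=
      Summable.of_nonneg_of_le (fun i => abs_nonneg _) hptle (hasum.mul_left (dist f g))
    calc |∑' i, (f ⟨t i, htmem i⟩ - g ⟨t i, htmem i⟩) * a i|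
        ≤ ∑' i, |(f ⟨t i, htmem i⟩ - g ⟨t i, htmem i⟩) * a i| :=
          abs_tsum_le' hsum1
      _ ≤ ∑' i, dist f g * |a i| :=
          Summable.tsum_le_tsum hptle hsum1 (hasum.mul_left (dist f g))
      _ = dist f g * ∑' i, |a i| := by rw [tsum_mul_left]
      _ = ↑(Real.toNNReal (∑' i, |a i|)) * dist f g := by
          rw [Real.coe_toNNReal _ (tsum_nonneg fun i => abs_nonneg _)]
          ring
  have hLall : ∀ f, L f = 0 := by
    intro f
    have hcl : IsClosed {h : C(Set.Icc (-2:ℝ) 2, ℝ) | L h = 0} :=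
      isClosed_eq hcontL continuous_const
    have hsub := hcl.closure_subset_iff.mpr (fun h hh => hLD h hh)
    rw [Ddense.closure_eq] at hsub
    exact hsub (Set.mem_univ f)
  have key : ∀ ε > (0:ℝ), |a i₀| ≤ ε := by
    intro ε hε
    obtain ⟨F, hF⟩ := ((tendsto_order.1
      (tendsto_tsum_compl_atTop_zero fun i : ι => |a i|)).2 ε hε).exists
    set Fd : Finset ℝ := insert 1 ((F.erase i₀).image fun i => |t i - t i₀|) with hFd
    have hFdne : Fd.Nonempty := ⟨1, Finset.mem_insert_self _ _⟩
    set δ : ℝ := Fd.min' hFdne with hδ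
    have hδpos : 0 < δ := by
      have hmem : δ ∈ Fd := Fd.min'_mem hFdne
      rw [hFd] at hmem
      rcases Finset.mem_insert.mp hmem with h | h
      · rw [h]; norm_num
      · obtain ⟨i, hi, hival⟩ := Finset.mem_image.mp h
        have hne : t i ≠ t i₀ := fun hti => (Finset.mem_erase.mp hi).1 (htinj hti)
        rw [← hival]
        exact abs_pos.mpr (sub_ne_zero.mpr hne)
    have hδle : ∀ i ∈ F.erase i₀, δ ≤ |t i - t i₀| := fun i hi =>
      Finset.min'_le _ _ (Finset.mem_insert_of_mem (Finset.mem_image_of_mem _ hi))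
    set g : C(Set.Icc (-2:ℝ) 2, ℝ) :=
      ⟨fun z => max 0 (1 - |z.1 - t i₀| / δ), by
        refine continuous_const.max ?_
        exact continuous_const.sub
          (((continuous_subtype_val.sub continuous_const).abs).div_const δ)⟩ with hg
    have hg1 : g ⟨t i₀, htmem i₀⟩ = 1 := by
      rw [hg]
      simp
    have hg0 : ∀ z : Set.Icc (-2:ℝ) 2, δ ≤ |z.1 - t i₀| → g z = 0 := by
      intro z hz
      have hle : (1 : ℝ) - |z.1 - t i₀| / δ ≤ 0 := by
        rw [sub_nonpos, le_div_iff₀ hδpos, one_mul]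
        exact hz
      rw [hg]
      exact max_eq_left hle
    have hgb : ∀ z, |g z| ≤ 1 := by
      intro z
      rw [abs_le]
      constructor
      · have h0 : (0:ℝ) ≤ g z := le_max_left _ _
        linarith
      · apply max_le (by norm_num)
        have hd0 : (0:ℝ) ≤ |z.1 - t i₀| / δ := by positivity
        linarith
    have hLg := hLall g
    rw [hL] at hLg
    dsimp only at hLg
    have hsumg := (hsumf g).of_norm
    have heq := Summable.tsum_eq_add_tsum_ite hsumg i₀
    rw [hLg, hg1, one_mul] at heq
    have ha0 : a i₀ = - ∑' n, ite (n = i₀) 0 (g ⟨t n, htmem n⟩ * a n) := by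
      linarith [heq]
    set h : ι → ℝ := fun n => ite (n = i₀) 0 (g ⟨t n, htmem n⟩ * a n) with hh
    have hhb : ∀ n, |h n| ≤ |a n| := by
      intro n
      rw [hh]
      dsimp only
      split
      · simp [abs_nonneg]
      · rw [abs_mul]
        have := hgb ⟨t n, htmem n⟩
        nlinarith [abs_nonneg (a n), abs_nonneg (g ⟨t n, htmem n⟩)]
    have hhsum : Summable fun n => |h n| :=
      Summable.of_nonneg_of_le (fun _ => abs_nonneg _) hhb hasum
    have h1 : |a i₀| ≤ ∑' n, |h n| := by
      rw [ha0, abs_neg]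
      exact abs_tsum_le' hhsum
    have hsupp : Function.support (fun n => |h n|) ⊆ {n | n ∉ F} := by
      intro n hn
      simp only [Function.mem_support] at hn
      intro hnF
      apply hn
      rw [hh]
      dsimp only
      by_cases hni : n = i₀
      · simp [hni]
      · have hmem : n ∈ F.erase i₀ := Finset.mem_erase.mpr ⟨hni, hnF⟩
        rw [if_neg hni, hg0 _ (hδle n hmem), zero_mul, abs_zero]
    have h2 : ∑' n, |h n| = ∑' (n : {n | n ∉ F}), |h (n : ι)| :=
      (tsum_subtype_eq_of_support_subset hsupp).symm
    have h3 : ∑' (n : {n | n ∉ F}), |h (n : ι)| ≤ ∑' (n : {n | n ∉ F}), |a (n : ι)| :=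
      Summable.tsum_le_tsum (fun n => hhb n) (hhsum.subtype _) (hasum.subtype _)
    have h4 : ∑' (n : {n | n ∉ F}), |a (n : ι)| ≤ ε := le_of_lt hF
    linarith
  have hzero : a i₀ = 0 := by
    by_contra hne
    have habs : 0 < |a i₀| := abs_pos.mpr hne
    have := key (|a i₀| / 2) (by linarith)
    linarith
  exact hk hzero

theorem weakDual_separable_of_injects_into_ell1_sum
    (ι : Type u) (hι : #ι ≤ Cardinal.continuum)
    (X : ι → Type v) [∀ i, NormedAddCommGroup (X i)] [∀ i, NormedSpace ℝ (X i)]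
    [∀ i, CompleteSpace (X i)]
    (hsep : ∀ i, TopologicalSpace.SeparableSpace (WeakDual ℝ (X i)))
    (Y : Type w) [NormedAddCommGroup Y] [NormedSpace ℝ Y] [CompleteSpace Y]
    (T : Y →L[ℝ] lp X 1) (hT : Function.Injective T) :
    TopologicalSpace.SeparableSpace (WeakDual ℝ Y) := by
  obtain ⟨S, hSc, hSsep⟩ := exists_separating_ell1 hι hsep
  refine separable_of_separating ((fun φ : lp X 1 →L[ℝ] ℝ => φ.comp T) '' S) (hSc.image _) ?_
  intro y hy
  have hTy : T y ≠ 0 := fun h => hy (hT (show T y = T 0 by rw [h, map_zero]))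
  obtain ⟨f, hfS, hfx⟩ := hSsep (T y) hTy
  exact ⟨f.comp T, Set.mem_image_of_mem _ hfS, hfx⟩

end
end
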